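/- arXiv:2303.06992 — 6 statements merged into one kernel-verified Lean document; each statement's English description precedes it below -/
import Mathlib

section
/- (log K limitation of InfoNCE and Structured InfoNCE.) For every integer K ≥ 1: (i) for every measurable critic T : X × Z → ℝ, I_InfoNCE(T,K) ≤ I_S-InfoNCE(K) ≤ log K; (ii) I_S-InfoNCE(K) ≤ I(x;z); (iii) if T is constant then I_InfoNCE(T,K) = 0. In particular the supremum of I_InfoNCE(T,K) over any family of critics containing a constant critic lies in [0, log K]. -/
open MeasureTheory Real

noncomputable section

namespace Stmt7

variable {X Z : Type*} [MeasurableSpace X] [MeasurableSpace Z]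

/-- Marginal density `p_X(x) = ∫ p(x,z) dμ_Z(z)`. -/
def pX (μZ : Measure Z) (p : X × Z → ℝ) (x : X) : ℝ := ∫ z, p (x, z) ∂μZ

/-- Marginal density `p_Z(z) = ∫ p(x,z) dμ_X(x)`. -/
def pZ (μX : Measure X) (p : X × Z → ℝ) (z : Z) : ℝ := ∫ x, p (x, z) ∂μX

/-- Mutual information `I(x;z)`. -/
def MI (μX : Measure X) (μZ : Measure Z) (p : X × Z → ℝ) : ℝ :=
  ∫ w, p w * log (p w / (pX μZ p w.1 * pZ μX p w.2)) ∂(μX.prod μZ)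

/-- Inner `Z^K`-integral of the InfoNCE lower bound. -/
def nceInner (μX : Measure X) (μZ : Measure Z) (p T : X × Z → ℝ) (K : ℕ) [NeZero K]
    (x : X) : ℝ :=
  ∫ z : Fin K → Z,
    p (x, z 0) * (∏ k ∈ Finset.univ.erase (0 : Fin K), pZ μX p (z k)) *
      log (exp (T (x, z 0)) / ((1 / (K : ℝ)) * ∑ k, exp (T (x, z k))))
    ∂(Measure.pi fun _ : Fin K => μZ)

/-- InfoNCE lower bound on mutual information. -/
def IInfoNCE (μX : Measure X) (μZ : Measure Z) (p T : X × Z → ℝ) (K : ℕ) [NeZero K] : ℝ :=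
  ∫ x, nceInner μX μZ p T K x ∂μX

/-- Inner `Z^K`-integral of the Structured InfoNCE lower bound. -/
def snceInner (μX : Measure X) (μZ : Measure Z) (p : X × Z → ℝ) (K : ℕ) [NeZero K]
    (x : X) : ℝ :=
  ∫ z : Fin K → Z,
    p (x, z 0) * (∏ k ∈ Finset.univ.erase (0 : Fin K), pZ μX p (z k)) *
      log ((p (x, z 0) / pZ μX p (z 0)) /
        ((1 / (K : ℝ)) * ∑ k, p (x, z k) / pZ μX p (z k)))
    ∂(Measure.pi fun _ : Fin K => μZ)

/-- Structured InfoNCE lower bound on mutual information. -/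
def ISInfoNCE (μX : Measure X) (μZ : Measure Z) (p : X × Z → ℝ) (K : ℕ) [NeZero K] : ℝ :=
  ∫ x, snceInner μX μZ p K x ∂μX




lemma ae_pi_forall {K : ℕ} {μ : Measure Z} [SigmaFinite μ] {Q : Z → Prop}
    (h : ∀ᵐ z ∂μ, Q z) :
    ∀ᵐ z ∂(Measure.pi fun _ : Fin K => μ), ∀ k, Q (z k) := by
  obtain ⟨N, hNsub, hNmeas, hN0⟩ := exists_measurable_superset_of_null (ae_iff.mp h)
  have hk : ∀ k : Fin K, (Measure.pi fun _ : Fin K => μ) ((fun z => z k) ⁻¹' N) = 0 := by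
    intro k
    have : ((fun z : Fin K → Z => z k) ⁻¹' N)
        = Set.pi Set.univ (Function.update (fun _ => Set.univ) k N) := Set.eval_preimage
    rw [this, Measure.pi_pi]
    exact Finset.prod_eq_zero (Finset.mem_univ k) (by simp [hN0])
  rw [ae_iff]
  refine measure_mono_null ?_ (measure_iUnion_null fun k => hk k)
  intro z hz
  simp only [Set.mem_setOf_eq, not_forall] at hz
  obtain ⟨k, hk'⟩ := hz
  exact Set.mem_iUnion.2 ⟨k, hNsub hk'⟩

lemma measurePreserving_comp_perm {K : ℕ} (μ : Measure Z) [SigmaFinite μ]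
    (τ : Equiv.Perm (Fin K)) :
    MeasurePreserving (fun z : Fin K → Z => z ∘ τ)
      (Measure.pi fun _ : Fin K => μ) (Measure.pi fun _ : Fin K => μ) := by
  have h := measurePreserving_piCongrLeft (fun _ : Fin K => μ) τ.symm
  have he : ⇑(MeasurableEquiv.piCongrLeft (fun _ : Fin K => Z) τ.symm)
      = fun z : Fin K → Z => z ∘ τ := by
    funext z
    funext j
    have h2 := Equiv.piCongrLeft_apply_apply (fun _ : Fin K => Z) τ.symm z (τ j)
    simp only [MeasurableEquiv.coe_piCongrLeft]
    simpa using h2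
  rwa [he] at h

lemma integral_comp_perm {K : ℕ} (μ : Measure Z) [SigmaFinite μ] (τ : Equiv.Perm (Fin K))
    (F : (Fin K → Z) → ℝ) :
    ∫ z, F (z ∘ τ) ∂(Measure.pi fun _ : Fin K => μ)
      = ∫ z, F z ∂(Measure.pi fun _ : Fin K => μ) := by
  have he : ⇑(MeasurableEquiv.piCongrLeft (fun _ : Fin K => Z) τ.symm)
      = fun z : Fin K → Z => z ∘ τ := by
    funext z; funext j
    have h2 := Equiv.piCongrLeft_apply_apply (fun _ : Fin K => Z) τ.symm z (τ j)
    simp only [MeasurableEquiv.coe_piCongrLeft]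
    simpa using h2
  have h := (measurePreserving_comp_perm μ τ).integral_comp
    (he ▸ (MeasurableEquiv.piCongrLeft (fun _ : Fin K => Z) τ.symm).measurableEmbedding) F
  simpa using h

lemma integrable_comp_perm {K : ℕ} (μ : Measure Z) [SigmaFinite μ] (τ : Equiv.Perm (Fin K))
    {F : (Fin K → Z) → ℝ} (hF : Integrable F (Measure.pi fun _ : Fin K => μ)) :
    Integrable (fun z : Fin K → Z => F (z ∘ τ)) (Measure.pi fun _ : Fin K => μ) := by
  have he : ⇑(MeasurableEquiv.piCongrLeft (fun _ : Fin K => Z) τ.symm)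
      = fun z : Fin K → Z => z ∘ τ := by
    funext z; funext j
    have h2 := Equiv.piCongrLeft_apply_apply (fun _ : Fin K => Z) τ.symm z (τ j)
    simp only [MeasurableEquiv.coe_piCongrLeft]
    simpa using h2
  have h := ((measurePreserving_comp_perm μ τ).integrable_comp_emb
    (he ▸ (MeasurableEquiv.piCongrLeft (fun _ : Fin K => Z) τ.symm).measurableEmbedding)
    (g := F)).mpr hF
  exact h

lemma integrable_pi_prod {K : ℕ} (μ : Measure Z) [SigmaFinite μ] (f : Fin K → Z → ℝ)
    (hf : ∀ k, Integrable (f k) μ) :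
    Integrable (fun z : Fin K → Z => ∏ k, f k (z k)) (Measure.pi fun _ : Fin K => μ) := by
  letI : MeasureSpace Z := ⟨μ⟩
  exact Integrable.fintype_prod hf

lemma integral_pi_prod {K : ℕ} (μ : Measure Z) [SigmaFinite μ] (f : Fin K → Z → ℝ) :
    ∫ z : Fin K → Z, ∏ k, f k (z k) ∂(Measure.pi fun _ : Fin K => μ)
      = ∏ k, ∫ z, f k z ∂μ := by
  letI : MeasureSpace Z := ⟨μ⟩
  haveI : SigmaFinite (volume : Measure Z) := ‹SigmaFinite μ›
  exact integral_fintype_prod_eq_prod f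



lemma sub_one_le_mul_log {a : ℝ} (ha : 0 < a) : a - 1 ≤ a * log a := by
  have h := Real.one_sub_inv_le_log_of_pos ha
  have h2 := mul_le_mul_of_nonneg_left h ha.le
  have h3 : a * a⁻¹ = 1 := mul_inv_cancel₀ ha.ne'
  nlinarith

lemma gibbs {K : ℕ} [NeZero K] (r t : Fin K → ℝ) (hr : ∀ j, 0 < r j) (ht : ∀ j, 0 < t j) :
    0 ≤ ∑ j, r j * log ((r j / ∑ k, r k) / (t j / ∑ k, t k)) := by
  have hne : (Finset.univ : Finset (Fin K)).Nonempty := Finset.univ_nonempty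
  have hR : 0 < ∑ k, r k := Finset.sum_pos (fun k _ => hr k) hne
  have hT : 0 < ∑ k, t k := Finset.sum_pos (fun k _ => ht k) hne
  have key : ∀ j, r j - (∑ k, r k) * t j / (∑ k, t k)
      ≤ r j * log ((r j / ∑ k, r k) / (t j / ∑ k, t k)) := by
    intro j
    have hq : 0 < (r j / ∑ k, r k) / (t j / ∑ k, t k) := by
      have := hr j; have := ht j; positivity
    have h := Real.one_sub_inv_le_log_of_pos hq
    have h2 := mul_le_mul_of_nonneg_left h (hr j).le
    have hinv : ((r j / ∑ k, r k) / (t j / ∑ k, t k))⁻¹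
        = t j * (∑ k, r k) / ((∑ k, t k) * r j) := by
      have := (hr j).ne'; have := (ht j).ne'
      field_simp
    rw [hinv] at h2
    calc r j - (∑ k, r k) * t j / (∑ k, t k)
        = r j * (1 - t j * (∑ k, r k) / ((∑ k, t k) * r j)) := by
          have := (hr j).ne'
          field_simp
      _ ≤ _ := h2
  have hsum : ∑ j, ((∑ k, r k) * t j / (∑ k, t k)) = ∑ k, r k := by
    rw [← Finset.sum_div, ← Finset.mul_sum]
    field_simp
  calc (0:ℝ) = ∑ j, (r j - (∑ k, r k) * t j / (∑ k, t k)) := by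
        rw [Finset.sum_sub_distrib, hsum, sub_self]
    _ ≤ _ := Finset.sum_le_sum (fun j _ => key j)


lemma integral_pos_of_ae_pos {α : Type*} [MeasurableSpace α] {ν : Measure α} (hν : ν ≠ 0)
    {f : α → ℝ} (hf : Integrable f ν) (hpos : ∀ᵐ a ∂ν, 0 < f a) : 0 < ∫ a, f a ∂ν := by
  rw [integral_pos_iff_support_of_nonneg_ae (hpos.mono fun a h => h.le) hf]
  by_contra h
  push_neg at h
  have h0 : ν (Function.support f) = 0 := le_antisymm h zero_le
  have hzero : ∀ᵐ a ∂ν, f a = 0 := by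
    rw [ae_iff]
    simpa [Function.support] using h0
  have : ∀ᵐ _a ∂ν, False := by
    filter_upwards [hpos, hzero] with a h1 h2
    exact absurd h2 h1.ne'
  rw [ae_iff] at this
  simp only [not_false_eq_true, Set.setOf_true] at this
  exact hν (Measure.measure_univ_eq_zero.mp this)

lemma snceInner_le_logK (μX : Measure X) (μZ : Measure Z) [SigmaFinite μX] [SigmaFinite μZ]
    (p : X × Z → ℝ) (K : ℕ) [NeZero K] (x : X)
    (hφ_int : Integrable (fun z => p (x, z)) μZ)
    (hφ_pos : ∀ᵐ z ∂μZ, 0 < p (x, z))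
    (hg_int : Integrable (pZ μX p) μZ)
    (hg_one : ∫ z, pZ μX p z ∂μZ = 1)
    (hg_pos : ∀ᵐ z ∂μZ, 0 < pZ μX p z)
    (hS : Integrable (fun z : Fin K → Z =>
        p (x, z 0) * (∏ k ∈ Finset.univ.erase (0 : Fin K), pZ μX p (z k)) *
          log ((p (x, z 0) / pZ μX p (z 0)) /
            ((1 / (K : ℝ)) * ∑ k, p (x, z k) / pZ μX p (z k))))
      (Measure.pi fun _ : Fin K => μZ)) :
    snceInner μX μZ p K x ≤ log K * pX μZ p x := by
  classical
  set f : Fin K → Z → ℝ := fun k => if k = 0 then (fun z => p (x, z)) else pZ μX p with hf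
  have hfint : ∀ k, Integrable (f k) μZ := by
    intro k; by_cases h : k = 0 <;> simp [hf, h, hφ_int, hg_int]
  have hW_int := integrable_pi_prod μZ f hfint
  have hWeq : ∀ z : Fin K → Z, (∏ k, f k (z k))
      = p (x, z 0) * ∏ k ∈ Finset.univ.erase (0 : Fin K), pZ μX p (z k) := by
    intro z
    rw [← Finset.mul_prod_erase Finset.univ _ (Finset.mem_univ (0 : Fin K))]
    simp only [hf, if_pos rfl]
    exact congrArg _ (Finset.prod_congr rfl fun k hk => by
      rw [if_neg (Finset.ne_of_mem_erase hk)])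
  have hae := ae_pi_forall (μ := μZ) (K := K) (hφ_pos.and hg_pos)
  have hmono : (fun z : Fin K → Z =>
      p (x, z 0) * (∏ k ∈ Finset.univ.erase (0 : Fin K), pZ μX p (z k)) *
        log ((p (x, z 0) / pZ μX p (z 0)) /
          ((1 / (K : ℝ)) * ∑ k, p (x, z k) / pZ μX p (z k))))
      ≤ᵐ[Measure.pi fun _ : Fin K => μZ]
      (fun z => (∏ k, f k (z k)) * log K) := by
    filter_upwards [hae] with z hz
    rw [hWeq z]
    have hr : ∀ k, 0 < p (x, z k) / pZ μX p (z k) :=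
      fun k => div_pos (hz k).1 (hz k).2
    have hW : 0 ≤ p (x, z 0) * ∏ k ∈ Finset.univ.erase (0 : Fin K), pZ μX p (z k) := by
      refine mul_nonneg (hz 0).1.le (Finset.prod_nonneg fun k _ => (hz k).2.le)
    refine mul_le_mul_of_nonneg_left ?_ hW
    have hKpos : (0:ℝ) < K := by
      exact_mod_cast Nat.pos_of_ne_zero (NeZero.ne K)
    have hsum : 0 < ∑ k, p (x, z k) / pZ μX p (z k) :=
      Finset.sum_pos (fun k _ => hr k) Finset.univ_nonempty
    have hden : 0 < (1 / (K : ℝ)) * ∑ k, p (x, z k) / pZ μX p (z k) := by positivity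
    have hratio : (p (x, z 0) / pZ μX p (z 0)) /
        ((1 / (K : ℝ)) * ∑ k, p (x, z k) / pZ μX p (z k)) ≤ K := by
      rw [div_le_iff₀ hden]
      have h1 : p (x, z 0) / pZ μX p (z 0) ≤ ∑ k, p (x, z k) / pZ μX p (z k) :=
        Finset.single_le_sum (fun k _ => (hr k).le) (Finset.mem_univ 0)
      calc p (x, z 0) / pZ μX p (z 0) ≤ ∑ k, p (x, z k) / pZ μX p (z k) := h1
        _ = (K : ℝ) * ((1 / (K : ℝ)) * ∑ k, p (x, z k) / pZ μX p (z k)) := by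
            field_simp
    exact Real.log_le_log (div_pos (hr 0) hden) hratio
  have h := integral_mono_ae hS (hW_int.mul_const _) hmono
  rw [integral_mul_const, integral_pi_prod] at h
  have hprod : (∏ k, ∫ z, f k z ∂μZ) = pX μZ p x := by
    rw [← Finset.mul_prod_erase Finset.univ _ (Finset.mem_univ (0 : Fin K))]
    simp only [hf, if_pos rfl]
    have : ∀ k ∈ Finset.univ.erase (0 : Fin K), ∫ z, f k z ∂μZ = 1 := fun k hk => by
      simp only [hf, if_neg (Finset.ne_of_mem_erase hk)]; exact hg_one
    rw [Finset.prod_congr rfl this]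
    simp [pX]
  rw [hprod] at h
  rw [snceInner]
  linarith

lemma snceInner_le_mi_inner (μX : Measure X) (μZ : Measure Z) [SigmaFinite μX] [SigmaFinite μZ]
    (p : X × Z → ℝ) (K : ℕ) [NeZero K] (x : X)
    (hφ_int : Integrable (fun z => p (x, z)) μZ)
    (hφ_pos : ∀ᵐ z ∂μZ, 0 < p (x, z))
    (hg_int : Integrable (pZ μX p) μZ)
    (hg_one : ∫ z, pZ μX p z ∂μZ = 1)
    (hg_pos : ∀ᵐ z ∂μZ, 0 < pZ μX p z)
    (hc : 0 < pX μZ p x)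
    (hJ : Integrable (fun z => p (x, z) * log (p (x, z) / (pX μZ p x * pZ μX p z))) μZ)
    (hS : Integrable (fun z : Fin K → Z =>
        p (x, z 0) * (∏ k ∈ Finset.univ.erase (0 : Fin K), pZ μX p (z k)) *
          log ((p (x, z 0) / pZ μX p (z 0)) /
            ((1 / (K : ℝ)) * ∑ k, p (x, z k) / pZ μX p (z k))))
      (Measure.pi fun _ : Fin K => μZ)) :
    snceInner μX μZ p K x
      ≤ ∫ z, p (x, z) * log (p (x, z) / (pX μZ p x * pZ μX p z)) ∂μZ := by
  classical
  set piK := (Measure.pi fun _ : Fin K => μZ) with hpiK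
  set c := pX μZ p x with hcdef
  set ρ : Z → ℝ := fun z => p (x, z) / (c * pZ μX p z) with hρdef
  set Abar : (Fin K → Z) → ℝ := fun z => (1 / (K : ℝ)) * ∑ k, ρ (z k) with hAdef
  set J : ℝ := ∫ z, p (x, z) * log (ρ z) ∂μZ with hJdef
  have hKpos : (0:ℝ) < K := by exact_mod_cast Nat.pos_of_ne_zero (NeZero.ne K)
  have hae := ae_pi_forall (μ := μZ) (K := K) (hφ_pos.and hg_pos)
  -- the product for W * log ρ₀
  set f : Fin K → Z → ℝ :=
    fun k => if k = 0 then (fun z => p (x, z) * log (ρ z)) else pZ μX p with hf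
  have hfint : ∀ k, Integrable (f k) μZ := by
    intro k; by_cases h : k = 0 <;> simp [hf, h, hJ, hg_int] <;> exact hJ
  have hU_int := integrable_pi_prod μZ f hfint
  have hU_val : ∫ z : Fin K → Z, ∏ k, f k (z k) ∂piK = J := by
    rw [hpiK, integral_pi_prod,
      ← Finset.mul_prod_erase Finset.univ _ (Finset.mem_univ (0 : Fin K))]
    simp only [hf, if_pos rfl]
    have : ∀ k ∈ Finset.univ.erase (0 : Fin K), ∫ z, f k z ∂μZ = 1 := fun k hk => by
      simp only [hf, if_neg (Finset.ne_of_mem_erase hk)]; exact hg_one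
    rw [Finset.prod_congr rfl this]
    simp [hJdef]
  -- V := U - S
  set S : (Fin K → Z) → ℝ := fun z =>
      p (x, z 0) * (∏ k ∈ Finset.univ.erase (0 : Fin K), pZ μX p (z k)) *
        log ((p (x, z 0) / pZ μX p (z 0)) /
          ((1 / (K : ℝ)) * ∑ k, p (x, z k) / pZ μX p (z k))) with hSdef
  have hV_int : Integrable (fun z => (∏ k, f k (z k)) - S z) piK := hU_int.sub hS
  have hV_val : ∫ z, ((∏ k, f k (z k)) - S z) ∂piK = J - snceInner μX μZ p K x := by
    rw [integral_sub hU_int hS, hU_val]; rfl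
  -- identify V with F 0 a.e.
  set F : Fin K → (Fin K → Z) → ℝ :=
    fun j z => c * ((∏ k : Fin K, pZ μX p (z k)) * (ρ (z j) * log (Abar z))) with hFdef
  have hVF : (fun z => (∏ k, f k (z k)) - S z) =ᵐ[piK] F 0 := by
    filter_upwards [hae] with z hz
    have hφ0 := (hz 0).1
    have hg0 := (hz 0).2
    have hρpos : ∀ k, 0 < ρ (z k) := fun k => by
      have := (hz k).1; have := (hz k).2
      simp only [hρdef]; positivity
    have hrpos : ∀ k, 0 < p (x, z k) / pZ μX p (z k) := fun k =>
      div_pos (hz k).1 (hz k).2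
    have hApos : 0 < Abar z := by
      simp only [hAdef]
      have : 0 < ∑ k, ρ (z k) := Finset.sum_pos (fun k _ => hρpos k) Finset.univ_nonempty
      positivity
    have hrapos : 0 < (1 / (K : ℝ)) * ∑ k, p (x, z k) / pZ μX p (z k) := by
      have : 0 < ∑ k, p (x, z k) / pZ μX p (z k) :=
        Finset.sum_pos (fun k _ => hrpos k) Finset.univ_nonempty
      positivity
    have hprodf : (∏ k, f k (z k))
        = p (x, z 0) * log (ρ (z 0)) * ∏ k ∈ Finset.univ.erase (0 : Fin K), pZ μX p (z k) := by
      rw [← Finset.mul_prod_erase Finset.univ _ (Finset.mem_univ (0 : Fin K))]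
      simp only [hf, if_pos rfl]
      exact congrArg _ (Finset.prod_congr rfl fun k hk => by
        rw [if_neg (Finset.ne_of_mem_erase hk)])
    have hsm2 : ∑ k, ρ (z k) = (∑ k, p (x, z k) / pZ μX p (z k)) / c := by
      rw [Finset.sum_div]
      refine Finset.sum_congr rfl fun k _ => ?_
      simp only [hρdef]
      rw [div_div, mul_comm]
    have hlog : log (ρ (z 0)) - log ((p (x, z 0) / pZ μX p (z 0)) /
        ((1 / (K : ℝ)) * ∑ k, p (x, z k) / pZ μX p (z k))) = log (Abar z) := by
      rw [← Real.log_div (hρpos 0).ne' (div_pos (hrpos 0) hrapos).ne']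
      congr 1
      simp only [hAdef, hρdef, hsm2]
      field_simp
      ring_nf
      rw [Finset.mul_sum]
      refine Finset.sum_congr rfl fun k _ => ?_
      have := hc.ne'
      field_simp
    have hW : p (x, z 0) * ∏ k ∈ Finset.univ.erase (0 : Fin K), pZ μX p (z k)
        = c * ((∏ k : Fin K, pZ μX p (z k)) * ρ (z 0)) := by
      rw [← Finset.mul_prod_erase Finset.univ _ (Finset.mem_univ (0 : Fin K))]
      simp only [hρdef]
      field_simp
    calc (∏ k, f k (z k)) - S z
        = (p (x, z 0) * ∏ k ∈ Finset.univ.erase (0 : Fin K), pZ μX p (z k)) *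
            (log (ρ (z 0)) - log ((p (x, z 0) / pZ μX p (z 0)) /
              ((1 / (K : ℝ)) * ∑ k, p (x, z k) / pZ μX p (z k)))) := by
          rw [hprodf, hSdef]; ring
      _ = (p (x, z 0) * ∏ k ∈ Finset.univ.erase (0 : Fin K), pZ μX p (z k)) * log (Abar z) := by
          rw [hlog]
      _ = F 0 z := by rw [hW, hFdef]; ring
  have hF0_int : Integrable (F 0) piK := hV_int.congr hVF
  have hF0_val : ∫ z, F 0 z ∂piK = J - snceInner μX μZ p K x := by
    rw [← integral_congr_ae hVF, hV_val]
  -- permutation invariance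
  have hFj : ∀ j : Fin K, (fun z : Fin K → Z => F 0 (z ∘ Equiv.swap 0 j)) = F j := by
    intro j
    funext z
    simp only [hFdef, hAdef, Function.comp]
    rw [Equiv.prod_comp (Equiv.swap 0 j) (fun k => pZ μX p (z k)),
      Equiv.sum_comp (Equiv.swap 0 j) (fun k => ρ (z k)), Equiv.swap_apply_left]
  have hFj_int : ∀ j, Integrable (F j) piK := fun j => by
    rw [← hFj j]; exact integrable_comp_perm μZ _ hF0_int
  have hFj_val : ∀ j, ∫ z, F j z ∂piK = J - snceInner μX μZ p K x := fun j => by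
    rw [← hFj j]
    rw [hpiK]
    rw [integral_comp_perm μZ _ (F 0)]
    rw [← hpiK, hF0_val]
  -- sum identity
  have hsum : ∀ z, ∑ j, F j z
      = (K : ℝ) * (c * ((∏ k : Fin K, pZ μX p (z k)) * (Abar z * log (Abar z)))) := by
    intro z
    have h2 : ∑ j, ρ (z j) = (K : ℝ) * Abar z := by
      simp only [hAdef]
      field_simp
    calc ∑ j, F j z
        = ∑ j, ρ (z j) * (c * ((∏ k : Fin K, pZ μX p (z k)) * log (Abar z))) :=
          Finset.sum_congr rfl fun j _ => by simp only [hFdef]; ring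
      _ = (∑ j, ρ (z j)) * (c * ((∏ k : Fin K, pZ μX p (z k)) * log (Abar z))) := by
          rw [Finset.sum_mul]
      _ = _ := by rw [h2]; ring
  have hsum_int : Integrable (fun z => ∑ j, F j z) piK := integrable_finset_sum _ fun j _ => hFj_int j
  have hG_int : Integrable (fun z => c * ((∏ k : Fin K, pZ μX p (z k)) * (Abar z * log (Abar z)))) piK := by
    have := hsum_int.const_mul ((K : ℝ)⁻¹)
    refine this.congr (Filter.Eventually.of_forall fun z => ?_)
    dsimp only
    rw [hsum z]
    field_simp
  have hG_val : ∫ z, c * ((∏ k : Fin K, pZ μX p (z k)) * (Abar z * log (Abar z))) ∂piK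
      = J - snceInner μX μZ p K x := by
    have h1 : ∫ z, (∑ j, F j z) ∂piK = (K : ℝ) * (J - snceInner μX μZ p K x) := by
      rw [integral_finset_sum _ fun j _ => hFj_int j]
      simp [hFj_val, Finset.sum_const, Finset.card_univ]
      ring
    have h2 : ∫ z, (∑ j, F j z) ∂piK
        = (K : ℝ) * ∫ z, c * ((∏ k : Fin K, pZ μX p (z k)) * (Abar z * log (Abar z))) ∂piK := by
      rw [← integral_const_mul]
      exact integral_congr_ae (Filter.Eventually.of_forall fun z => hsum z)
    have := h1.symm.trans h2
    exact (mul_left_cancel₀ hKpos.ne' this).symm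
  -- lower bound integrand
  have hlow : ∀ j : Fin K, True := fun _ => trivial
  -- P * ρ_j integrable with integral 1
  have hPrj : ∀ j : Fin K, Integrable (fun z : Fin K → Z => (∏ k : Fin K, pZ μX p (z k)) * ρ (z j)) piK ∧
      ∫ z : Fin K → Z, (∏ k : Fin K, pZ μX p (z k)) * ρ (z j) ∂piK = 1 := by
    intro j
    set e : Fin K → Z → ℝ :=
      fun k => if k = j then (fun z => p (x, z) / c) else pZ μX p with he
    have heint : ∀ k, Integrable (e k) μZ := by
      intro k; by_cases h : k = j <;> simp [he, h, hg_int, hφ_int.div_const]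
    have hprod_int := integrable_pi_prod μZ e heint
    have haeeq : (fun z : Fin K → Z => ∏ k, e k (z k))
        =ᵐ[piK] (fun z => (∏ k : Fin K, pZ μX p (z k)) * ρ (z j)) := by
      filter_upwards [hae] with z hz
      rw [← Finset.mul_prod_erase Finset.univ _ (Finset.mem_univ j),
        ← Finset.mul_prod_erase Finset.univ (fun k => pZ μX p (z k)) (Finset.mem_univ j)]
      simp only [he, if_pos rfl]
      rw [Finset.prod_congr rfl (fun k hk => by
        simp [he, Finset.ne_of_mem_erase hk] :
          ∀ k ∈ Finset.univ.erase j, e k (z k) = pZ μX p (z k))]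
      have hgj := (hz j).2
      simp only [hρdef]
      field_simp
    constructor
    · exact hprod_int.congr haeeq
    · rw [← integral_congr_ae haeeq, hpiK, integral_pi_prod,
        ← Finset.mul_prod_erase Finset.univ _ (Finset.mem_univ j)]
      simp only [he, if_pos rfl]
      have : ∀ k ∈ Finset.univ.erase j, ∫ z, e k z ∂μZ = 1 := fun k hk => by
        simp only [he, if_neg (Finset.ne_of_mem_erase hk)]; exact hg_one
      rw [Finset.prod_congr rfl this]
      rw [integral_div]
      simp only [hcdef, pX]
      rw [div_self (by simpa [hcdef, pX] using hc.ne')]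
      simp
  -- P integrable with integral 1
  have hP_int := integrable_pi_prod (K := K) μZ (fun _ => pZ μX p) (fun _ => hg_int)
  have hP_val : ∫ z : Fin K → Z, ∏ k : Fin K, pZ μX p (z k) ∂piK = 1 := by
    rw [hpiK, integral_pi_prod]
    simp [hg_one]
  -- R := c * (P * (Abar - 1))
  have hPA_int : Integrable (fun z : Fin K → Z => (∏ k : Fin K, pZ μX p (z k)) * Abar z) piK := by
    have h := (integrable_finset_sum (μ := piK) Finset.univ
      (fun j _ => (hPrj j).1)).const_mul ((K : ℝ)⁻¹)
    refine h.congr (Filter.Eventually.of_forall fun z => ?_)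
    simp only [hAdef]
    rw [Finset.mul_sum]
    field_simp [Finset.mul_sum]
    rw [← Finset.sum_div, ← Finset.mul_sum]
    have := hKpos.ne'
    field_simp
  have hPA_val : ∫ z : Fin K → Z, (∏ k : Fin K, pZ μX p (z k)) * Abar z ∂piK = 1 := by
    have h1 : (fun z : Fin K → Z => (∏ k : Fin K, pZ μX p (z k)) * Abar z)
        = fun z => (K : ℝ)⁻¹ * ∑ j, (∏ k : Fin K, pZ μX p (z k)) * ρ (z j) := by
      funext z
      simp only [hAdef]
      rw [Finset.mul_sum]
      field_simp [Finset.mul_sum]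
      rw [← Finset.sum_div, ← Finset.mul_sum]
      have := hKpos.ne'
      field_simp
    rw [h1, integral_const_mul, integral_finset_sum _ fun j _ => (hPrj j).1]
    have : ∀ j ∈ (Finset.univ : Finset (Fin K)), ∫ z : Fin K → Z,
        (∏ k : Fin K, pZ μX p (z k)) * ρ (z j) ∂piK = 1 := fun j _ => (hPrj j).2
    rw [Finset.sum_congr rfl this]
    simp [Finset.card_univ]
  have hR_int : Integrable
      (fun z : Fin K → Z => c * ((∏ k : Fin K, pZ μX p (z k)) * Abar z - ∏ k : Fin K, pZ μX p (z k))) piK :=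
    ((hPA_int.sub hP_int).const_mul c)
  have hR_val : ∫ z : Fin K → Z,
      c * ((∏ k : Fin K, pZ μX p (z k)) * Abar z - ∏ k : Fin K, pZ μX p (z k)) ∂piK = 0 := by
    rw [integral_const_mul, integral_sub hPA_int hP_int, hPA_val, hP_val]
    simp
  -- a.e. inequality R ≤ G
  have hmono : (fun z : Fin K → Z =>
        c * ((∏ k : Fin K, pZ μX p (z k)) * Abar z - ∏ k : Fin K, pZ μX p (z k)))
      ≤ᵐ[piK] fun z => c * ((∏ k : Fin K, pZ μX p (z k)) * (Abar z * log (Abar z))) := by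
    filter_upwards [hae] with z hz
    have hρpos : ∀ k, 0 < ρ (z k) := fun k => by
      have := (hz k).1; have := (hz k).2
      simp only [hρdef]; positivity
    have hApos : 0 < Abar z := by
      simp only [hAdef]
      have : 0 < ∑ k, ρ (z k) := Finset.sum_pos (fun k _ => hρpos k) Finset.univ_nonempty
      positivity
    have hPpos : 0 ≤ ∏ k : Fin K, pZ μX p (z k) := Finset.prod_nonneg fun k _ => (hz k).2.le
    have h := sub_one_le_mul_log hApos
    have h2 := mul_le_mul_of_nonneg_left h hPpos
    have h3 := mul_le_mul_of_nonneg_left h2 hc.le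
    calc c * ((∏ k : Fin K, pZ μX p (z k)) * Abar z - ∏ k : Fin K, pZ μX p (z k))
        = c * ((∏ k : Fin K, pZ μX p (z k)) * (Abar z - 1)) := by ring
      _ ≤ c * ((∏ k : Fin K, pZ μX p (z k)) * (Abar z * log (Abar z))) := h3
  have hfinal := integral_mono_ae hR_int hG_int hmono
  rw [hR_val, hG_val] at hfinal
  have hJeq : J = ∫ z, p (x, z) * log (p (x, z) / (pX μZ p x * pZ μX p z)) ∂μZ := by
    simp only [hJdef, hρdef, hcdef]
  linarith [hJeq ▸ hfinal]

lemma nceInner_le_snceInner_aux (μX : Measure X) (μZ : Measure Z)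
    [SigmaFinite μX] [SigmaFinite μZ]
    (p T : X × Z → ℝ) (K : ℕ) [NeZero K] (x : X)
    (hφ_pos : ∀ᵐ z ∂μZ, 0 < p (x, z))
    (hg_pos : ∀ᵐ z ∂μZ, 0 < pZ μX p z)
    (hN : Integrable (fun z : Fin K → Z =>
        p (x, z 0) * (∏ k ∈ Finset.univ.erase (0 : Fin K), pZ μX p (z k)) *
          log (exp (T (x, z 0)) / ((1 / (K : ℝ)) * ∑ k, exp (T (x, z k)))))
      (Measure.pi fun _ : Fin K => μZ))
    (hS : Integrable (fun z : Fin K → Z =>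
        p (x, z 0) * (∏ k ∈ Finset.univ.erase (0 : Fin K), pZ μX p (z k)) *
          log ((p (x, z 0) / pZ μX p (z 0)) /
            ((1 / (K : ℝ)) * ∑ k, p (x, z k) / pZ μX p (z k))))
      (Measure.pi fun _ : Fin K => μZ)) :
    nceInner μX μZ p T K x ≤ snceInner μX μZ p K x := by
  classical
  set piK := (Measure.pi fun _ : Fin K => μZ) with hpiK
  have hKpos : (0:ℝ) < K := by exact_mod_cast Nat.pos_of_ne_zero (NeZero.ne K)
  have hae := ae_pi_forall (μ := μZ) (K := K) (hφ_pos.and hg_pos)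
  set G : (Fin K → Z) → ℝ := fun z =>
      (p (x, z 0) * (∏ k ∈ Finset.univ.erase (0 : Fin K), pZ μX p (z k)) *
          log ((p (x, z 0) / pZ μX p (z 0)) /
            ((1 / (K : ℝ)) * ∑ k, p (x, z k) / pZ μX p (z k)))) -
      (p (x, z 0) * (∏ k ∈ Finset.univ.erase (0 : Fin K), pZ μX p (z k)) *
          log (exp (T (x, z 0)) / ((1 / (K : ℝ)) * ∑ k, exp (T (x, z k))))) with hGdef
  have hG_int : Integrable G piK := hS.sub hN
  have hG_val : ∫ z, G z ∂piK = snceInner μX μZ p K x - nceInner μX μZ p T K x := by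
    rw [hGdef, integral_sub hS hN]; rfl
  set H : Fin K → (Fin K → Z) → ℝ := fun j z =>
      (∏ k : Fin K, pZ μX p (z k)) *
        ((p (x, z j) / pZ μX p (z j)) *
          log (((p (x, z j) / pZ μX p (z j)) / ∑ k, (p (x, z k) / pZ μX p (z k))) /
            (exp (T (x, z j)) / ∑ k, exp (T (x, z k))))) with hHdef
  have hGH : G =ᵐ[piK] H 0 := by
    filter_upwards [hae] with z hz
    have hrpos : ∀ k, 0 < p (x, z k) / pZ μX p (z k) := fun k =>
      div_pos (hz k).1 (hz k).2
    have hsum : 0 < ∑ k, p (x, z k) / pZ μX p (z k) :=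
      Finset.sum_pos (fun k _ => hrpos k) Finset.univ_nonempty
    have hesum : 0 < ∑ k, exp (T (x, z k)) :=
      Finset.sum_pos (fun k _ => exp_pos _) Finset.univ_nonempty
    have hA : 0 < (1 / (K : ℝ)) * ∑ k, p (x, z k) / pZ μX p (z k) := by positivity
    have hB : 0 < (1 / (K : ℝ)) * ∑ k, exp (T (x, z k)) := by positivity
    have hlog : log ((p (x, z 0) / pZ μX p (z 0)) /
          ((1 / (K : ℝ)) * ∑ k, p (x, z k) / pZ μX p (z k))) -
        log (exp (T (x, z 0)) / ((1 / (K : ℝ)) * ∑ k, exp (T (x, z k))))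
        = log (((p (x, z 0) / pZ μX p (z 0)) / ∑ k, (p (x, z k) / pZ μX p (z k))) /
            (exp (T (x, z 0)) / ∑ k, exp (T (x, z k)))) := by
      rw [← Real.log_div (div_pos (hrpos 0) hA).ne' (div_pos (exp_pos _) hB).ne']
      congr 1
      have key : ∀ (a b s t cc : ℝ), cc ≠ 0 → s ≠ 0 → t ≠ 0 → b ≠ 0 →
          (a / (cc * s)) / (b / (cc * t)) = (a / s) / (b / t) := by
        intros a b s t cc h1 h2 h3 h4
        field_simp
      exact key _ _ _ _ _ (one_div_ne_zero hKpos.ne') hsum.ne' hesum.ne' (exp_pos _).ne'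
    have hW : p (x, z 0) * ∏ k ∈ Finset.univ.erase (0 : Fin K), pZ μX p (z k)
        = (∏ k : Fin K, pZ μX p (z k)) * (p (x, z 0) / pZ μX p (z 0)) := by
      rw [← Finset.mul_prod_erase Finset.univ (fun k => pZ μX p (z k)) (Finset.mem_univ 0)]
      have := (hz 0).2.ne'
      field_simp
    calc G z = (p (x, z 0) * ∏ k ∈ Finset.univ.erase (0 : Fin K), pZ μX p (z k)) *
          (log ((p (x, z 0) / pZ μX p (z 0)) /
            ((1 / (K : ℝ)) * ∑ k, p (x, z k) / pZ μX p (z k))) -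
          log (exp (T (x, z 0)) / ((1 / (K : ℝ)) * ∑ k, exp (T (x, z k))))) := by
          rw [hGdef]; ring
      _ = H 0 z := by rw [hlog, hW, hHdef]; ring
  have hH0_int : Integrable (H 0) piK := hG_int.congr hGH
  have hH0_val : ∫ z, H 0 z ∂piK = snceInner μX μZ p K x - nceInner μX μZ p T K x := by
    rw [← integral_congr_ae hGH, hG_val]
  have hHj : ∀ j : Fin K, (fun z : Fin K → Z => H 0 (z ∘ Equiv.swap 0 j)) = H j := by
    intro j
    funext z
    simp only [hHdef, Function.comp]
    rw [Equiv.prod_comp (Equiv.swap 0 j) (fun k => pZ μX p (z k)),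
      Equiv.sum_comp (Equiv.swap 0 j) (fun k => p (x, z k) / pZ μX p (z k)),
      Equiv.sum_comp (Equiv.swap 0 j) (fun k => exp (T (x, z k))),
      Equiv.swap_apply_left]
  have hHj_int : ∀ j, Integrable (H j) piK := fun j => by
    rw [← hHj j]; exact integrable_comp_perm μZ _ hH0_int
  have hHj_val : ∀ j, ∫ z, H j z ∂piK
      = snceInner μX μZ p K x - nceInner μX μZ p T K x := fun j => by
    rw [← hHj j, hpiK, integral_comp_perm μZ _ (H 0), ← hpiK, hH0_val]
  have hsum_nonneg : 0 ≤ᵐ[piK] fun z => ∑ j, H j z := by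
    filter_upwards [hae] with z hz
    have hgibbs := gibbs (K := K) (fun k => p (x, z k) / pZ μX p (z k))
      (fun k => exp (T (x, z k))) (fun k => div_pos (hz k).1 (hz k).2) (fun k => exp_pos _)
    have hP : 0 ≤ ∏ k : Fin K, pZ μX p (z k) := Finset.prod_nonneg fun k _ => (hz k).2.le
    have : ∑ j, H j z = (∏ k : Fin K, pZ μX p (z k)) *
        ∑ j, (p (x, z j) / pZ μX p (z j)) *
          log (((p (x, z j) / pZ μX p (z j)) / ∑ k, (p (x, z k) / pZ μX p (z k))) /
            (exp (T (x, z j)) / ∑ k, exp (T (x, z k)))) := by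
      rw [Finset.mul_sum]
    rw [this]
    exact mul_nonneg hP hgibbs
  have h1 : 0 ≤ ∫ z, (∑ j, H j z) ∂piK := integral_nonneg_of_ae hsum_nonneg
  have h2 : ∫ z, (∑ j, H j z) ∂piK
      = (K : ℝ) * (snceInner μX μZ p K x - nceInner μX μZ p T K x) := by
    rw [integral_finset_sum _ fun j _ => hHj_int j]
    simp [hHj_val, Finset.card_univ]
    ring
  rw [h2] at h1
  nlinarith
/-- `log K` limitation of InfoNCE and Structured InfoNCE. -/
theorem infonce_logK
    (μX : Measure X) (μZ : Measure Z) [SigmaFinite μX] [SigmaFinite μZ]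
    (p : X × Z → ℝ)
    (hp_meas : Measurable p)
    (hp_pos : ∀ᵐ w ∂(μX.prod μZ), 0 < p w)
    (hp_int : Integrable p (μX.prod μZ))
    (hp_norm : ∫ w, p w ∂(μX.prod μZ) = 1)
    (K : ℕ) [NeZero K]
    (h_int_mi : Integrable (fun w => p w * log (p w / (pX μZ p w.1 * pZ μX p w.2)))
      (μX.prod μZ))
    (h_int_snce_inner : ∀ x, Integrable
      (fun z : Fin K → Z =>
        p (x, z 0) * (∏ k ∈ Finset.univ.erase (0 : Fin K), pZ μX p (z k)) *
          log ((p (x, z 0) / pZ μX p (z 0)) /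
            ((1 / (K : ℝ)) * ∑ k, p (x, z k) / pZ μX p (z k))))
      (Measure.pi fun _ : Fin K => μZ))
    (h_int_snce_outer : Integrable (fun x => snceInner μX μZ p K x) μX) :
    (∀ T : X × Z → ℝ, Measurable T →
      (∀ x, Integrable
        (fun z : Fin K → Z =>
          p (x, z 0) * (∏ k ∈ Finset.univ.erase (0 : Fin K), pZ μX p (z k)) *
            log (exp (T (x, z 0)) / ((1 / (K : ℝ)) * ∑ k, exp (T (x, z k)))))
        (Measure.pi fun _ : Fin K => μZ)) →
      Integrable (fun x => nceInner μX μZ p T K x) μX →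
      IInfoNCE μX μZ p T K ≤ ISInfoNCE μX μZ p K) ∧
    ISInfoNCE μX μZ p K ≤ log K ∧
    ISInfoNCE μX μZ p K ≤ MI μX μZ p ∧
    (∀ c : ℝ, IInfoNCE μX μZ p (fun _ => c) K = 0) ∧
    (∀ S : Set (X × Z → ℝ),
      (∀ T ∈ S, Measurable T ∧
        (∀ x, Integrable
          (fun z : Fin K → Z =>
            p (x, z 0) * (∏ k ∈ Finset.univ.erase (0 : Fin K), pZ μX p (z k)) *
              log (exp (T (x, z 0)) / ((1 / (K : ℝ)) * ∑ k, exp (T (x, z k)))))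
          (Measure.pi fun _ : Fin K => μZ)) ∧
        Integrable (fun x => nceInner μX μZ p T K x) μX) →
      (∃ c : ℝ, (fun _ => c) ∈ S) →
      sSup ((fun T => IInfoNCE μX μZ p T K) '' S) ∈ Set.Icc 0 (log K)) := by

  classical
  -- nontriviality
  have hμZ : μZ ≠ 0 := by
    intro h
    rw [h, Measure.prod_zero] at hp_norm
    simp at hp_norm
  have hμX : μX ≠ 0 := by
    intro h
    rw [h, Measure.zero_prod] at hp_norm
    simp at hp_norm
  -- slice facts in x
  have hφ_slice_int : ∀ᵐ x ∂μX, Integrable (fun z => p (x, z)) μZ := hp_int.prod_right_ae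
  have hφ_slice_pos : ∀ᵐ x ∂μX, ∀ᵐ z ∂μZ, 0 < p (x, z) := Measure.ae_ae_of_ae_prod hp_pos
  have hpX_pos : ∀ᵐ x ∂μX, 0 < pX μZ p x := by
    filter_upwards [hφ_slice_int, hφ_slice_pos] with x h1 h2
    exact integral_pos_of_ae_pos hμZ h1 h2
  have hpX_int : Integrable (pX μZ p) μX := hp_int.integral_prod_left
  have hpX_one : ∫ x, pX μZ p x ∂μX = 1 := by
    rw [← hp_norm, integral_prod p hp_int]; rfl
  -- pZ facts
  have hg_int : Integrable (pZ μX p) μZ := hp_int.integral_prod_right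
  have hg_one : ∫ z, pZ μX p z ∂μZ = 1 := by
    rw [← hp_norm, integral_prod_symm p hp_int]; rfl
  have hψ_slice_int : ∀ᵐ z ∂μZ, Integrable (fun x => p (x, z)) μX := hp_int.prod_left_ae
  have hψ_slice_pos : ∀ᵐ z ∂μZ, ∀ᵐ x ∂μX, 0 < p (x, z) := by
    have hswap : ∀ᵐ w ∂(μZ.prod μX), 0 < p (w.2, w.1) := by
      rw [← Measure.prod_swap]
      refine (ae_map_iff measurable_swap.aemeasurable ?_).mpr ?_
      · exact measurableSet_lt measurable_const
          (hp_meas.comp (measurable_snd.prodMk measurable_fst))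
      · exact hp_pos
    exact Measure.ae_ae_of_ae_prod hswap
  have hg_pos : ∀ᵐ z ∂μZ, 0 < pZ μX p z := by
    filter_upwards [hψ_slice_int, hψ_slice_pos] with z h1 h2
    exact integral_pos_of_ae_pos hμX h1 h2
  -- part 1
  have part1 : ∀ T : X × Z → ℝ, Measurable T →
      (∀ x, Integrable
        (fun z : Fin K → Z =>
          p (x, z 0) * (∏ k ∈ Finset.univ.erase (0 : Fin K), pZ μX p (z k)) *
            log (exp (T (x, z 0)) / ((1 / (K : ℝ)) * ∑ k, exp (T (x, z k)))))
        (Measure.pi fun _ : Fin K => μZ)) →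
      Integrable (fun x => nceInner μX μZ p T K x) μX →
      IInfoNCE μX μZ p T K ≤ ISInfoNCE μX μZ p K := by
    intro T _hTmeas hTinner hTouter
    have hmono : (fun x => nceInner μX μZ p T K x) ≤ᵐ[μX] fun x => snceInner μX μZ p K x := by
      filter_upwards [hφ_slice_pos] with x h2
      exact nceInner_le_snceInner_aux μX μZ p T K x h2 hg_pos (hTinner x) (h_int_snce_inner x)
    exact integral_mono_ae hTouter h_int_snce_outer hmono
  -- part 2
  have part2 : ISInfoNCE μX μZ p K ≤ log K := by
    have hmono : (fun x => snceInner μX μZ p K x) ≤ᵐ[μX] fun x => log K * pX μZ p x := by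
      filter_upwards [hφ_slice_int, hφ_slice_pos] with x h1 h2
      exact snceInner_le_logK μX μZ p K x h1 h2 hg_int hg_one hg_pos (h_int_snce_inner x)
    have h := integral_mono_ae h_int_snce_outer (hpX_int.const_mul (log K)) hmono
    rw [integral_const_mul, hpX_one, mul_one] at h
    exact h
  -- part 3
  have part3 : ISInfoNCE μX μZ p K ≤ MI μX μZ p := by
    have hJint : Integrable
        (fun x => ∫ z, p (x, z) * log (p (x, z) / (pX μZ p x * pZ μX p z)) ∂μZ) μX :=
      h_int_mi.integral_prod_left
    have hJslice : ∀ᵐ x ∂μX, Integrable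
        (fun z => p (x, z) * log (p (x, z) / (pX μZ p x * pZ μX p z))) μZ :=
      h_int_mi.prod_right_ae
    have hmono : (fun x => snceInner μX μZ p K x) ≤ᵐ[μX]
        fun x => ∫ z, p (x, z) * log (p (x, z) / (pX μZ p x * pZ μX p z)) ∂μZ := by
      filter_upwards [hφ_slice_int, hφ_slice_pos, hpX_pos, hJslice] with x h1 h2 h3 h4
      exact snceInner_le_mi_inner μX μZ p K x h1 h2 hg_int hg_one hg_pos h3 h4
        (h_int_snce_inner x)
    have h := integral_mono_ae h_int_snce_outer hJint hmono
    have hMI : MI μX μZ p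
        = ∫ x, ∫ z, p (x, z) * log (p (x, z) / (pX μZ p x * pZ μX p z)) ∂μZ ∂μX := by
      rw [MI, integral_prod _ h_int_mi]
    rw [← hMI] at h
    exact h
  -- part 4
  have part4 : ∀ c : ℝ, IInfoNCE μX μZ p (fun _ => c) K = 0 := by
    intro c
    have hK : (K : ℝ) ≠ 0 := by
      exact_mod_cast (Nat.pos_of_ne_zero (NeZero.ne K)).ne'
    have hzero : ∀ x, nceInner μX μZ p (fun _ => c) K x = 0 := by
      intro x
      rw [nceInner]
      have h0 : (fun z : Fin K → Z =>
          p (x, z 0) * (∏ k ∈ Finset.univ.erase (0 : Fin K), pZ μX p (z k)) *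
            log (exp ((fun _ : X × Z => c) (x, z 0)) /
              ((1 / (K : ℝ)) * ∑ k, exp ((fun _ : X × Z => c) (x, z k)))))
          = fun _ => (0 : ℝ) := by
        funext z
        have h1 : (1 / (K : ℝ)) * ∑ _k : Fin K, exp c = exp c := by
          rw [Finset.sum_const, Finset.card_univ, Fintype.card_fin, nsmul_eq_mul]
          field_simp
        show p (x, z 0) * (∏ k ∈ Finset.univ.erase (0 : Fin K), pZ μX p (z k)) *
            log (exp c / ((1 / (K : ℝ)) * ∑ _k : Fin K, exp c)) = 0
        rw [h1, div_self (exp_pos c).ne', Real.log_one, mul_zero]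
      rw [h0, integral_zero]
    rw [IInfoNCE]
    simp only [hzero]
    exact integral_zero _ _
  refine ⟨part1, part2, part3, part4, ?_⟩
  -- part 5
  intro S hS hconst
  obtain ⟨c, hcS⟩ := hconst
  have h0mem : (0 : ℝ) ∈ (fun T => IInfoNCE μX μZ p T K) '' S :=
    ⟨fun _ => c, hcS, part4 c⟩
  have hub : ∀ a ∈ (fun T => IInfoNCE μX μZ p T K) '' S, a ≤ log K := by
    rintro a ⟨T, hT, rfl⟩
    obtain ⟨h1, h2, h3⟩ := hS T hT
    exact le_trans (part1 T h1 h2 h3) part2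
  constructor
  · exact le_csSup ⟨log K, fun a ha => hub a ha⟩ h0mem
  · exact csSup_le ⟨0, h0mem⟩ hub


end Stmt7
end
end

section
/- (Linear bias reduction of AIS in the number of intermediate distributions T, under perfect transitions and a linear schedule.) For every integer T ≥ 1, EUBO_AIS(T) − ELBO_AIS(T) = (1/T)·( D_KL(π₁ ‖ π₀) + D_KL(π₀ ‖ π₁) ), where D_KL(r ‖ s) := ∫ r·log(r/s) dμ denotes the Kullback–Leibler divergence between probability densities r and s. -/
open MeasureTheory Real

noncomputable section

namespace Stmt8

variable {Ω : Type*} [MeasurableSpace Ω]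

/-- Normalizing constant of the geometric path, `Z_β = ∫ π₀^{1−β} π̃₁^β dμ`. -/
def Zb (μ : Measure Ω) (pi0 ptil1 : Ω → ℝ) (β : ℝ) : ℝ :=
  ∫ ω, pi0 ω ^ (1 - β) * ptil1 ω ^ β ∂μ

/-- Normalized intermediate density `π_β = π₀^{1−β} π̃₁^β / Z_β`. -/
def pib (μ : Measure Ω) (pi0 ptil1 : Ω → ℝ) (β : ℝ) (ω : Ω) : ℝ :=
  pi0 ω ^ (1 - β) * ptil1 ω ^ β / Zb μ pi0 ptil1 β

/-- Perfect-transition AIS lower bound with a linear schedule: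
`ELBO_AIS(T) = Σ_{t=1}^T (1/T) ∫ π_{(t−1)/T} log(π̃₁/π₀) dμ`. -/
def ELBO_AIS (μ : Measure Ω) (pi0 ptil1 : Ω → ℝ) (T : ℕ) : ℝ :=
  ∑ t ∈ Finset.range T, (1 / (T : ℝ)) *
    ∫ ω, pib μ pi0 ptil1 ((t : ℝ) / T) ω * log (ptil1 ω / pi0 ω) ∂μ

/-- Perfect-transition AIS upper bound with a linear schedule:
`EUBO_AIS(T) = Σ_{t=1}^T (1/T) ∫ π_{t/T} log(π̃₁/π₀) dμ`. -/
def EUBO_AIS (μ : Measure Ω) (pi0 ptil1 : Ω → ℝ) (T : ℕ) : ℝ :=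
  ∑ t ∈ Finset.range T, (1 / (T : ℝ)) *
    ∫ ω, pib μ pi0 ptil1 (((t : ℝ) + 1) / T) ω * log (ptil1 ω / pi0 ω) ∂μ

/-- Linear bias reduction of AIS in the number of intermediate distributions `T`,
under perfect transitions and a linear schedule. -/
theorem ais_linear_bias_reduction
    (μ : Measure Ω) [SigmaFinite μ] (pi0 ptil1 : Ω → ℝ)
    (hpi0_meas : Measurable pi0) (hpi0_nonneg : ∀ ω, 0 ≤ pi0 ω)
    (hpi0_pos : ∀ᵐ ω ∂μ, 0 < pi0 ω) (hpi0_norm : ∫ ω, pi0 ω ∂μ = 1)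
    (hptil1_meas : Measurable ptil1) (hptil1_pos : ∀ᵐ ω ∂μ, 0 < ptil1 ω)
    (hptil1_int : Integrable ptil1 μ)
    (Z1 : ℝ) (hZ1 : Z1 = ∫ ω, ptil1 ω ∂μ) (hZ1_pos : 0 < Z1)
    (T : ℕ) (hT : 1 ≤ T)
    (hZb_int : ∀ t : ℕ, t ≤ T →
      Integrable (fun ω => pi0 ω ^ (1 - (t : ℝ) / T) * ptil1 ω ^ ((t : ℝ) / T)) μ)
    (hZb_pos : ∀ t : ℕ, t ≤ T → 0 < Zb μ pi0 ptil1 ((t : ℝ) / T))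
    (h_int_log : ∀ t : ℕ, t ≤ T →
      Integrable (fun ω => pib μ pi0 ptil1 ((t : ℝ) / T) ω * log (ptil1 ω / pi0 ω)) μ)
    (h_int_kl1 : Integrable (fun ω => (ptil1 ω / Z1) * log ((ptil1 ω / Z1) / pi0 ω)) μ)
    (h_int_kl2 : Integrable (fun ω => pi0 ω * log (pi0 ω / (ptil1 ω / Z1))) μ) :
    EUBO_AIS μ pi0 ptil1 T - ELBO_AIS μ pi0 ptil1 T
      = (1 / (T : ℝ)) *
          ((∫ ω, (ptil1 ω / Z1) * log ((ptil1 ω / Z1) / pi0 ω) ∂μ)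
            + ∫ ω, pi0 ω * log (pi0 ω / (ptil1 ω / Z1)) ∂μ) := by
  have hT0 : (T:ℝ) ≠ 0 := Nat.cast_ne_zero.mpr (by omega)
  have hTT : ((T:ℕ):ℝ)/T = 1 := div_self hT0
  -- endpoint identifications
  have hpib0 : pib μ pi0 ptil1 0 = pi0 := by
    funext ω; simp [pib, Zb, hpi0_norm]
  have hpib1 : pib μ pi0 ptil1 (((T:ℕ):ℝ)/T) = fun ω => ptil1 ω / Z1 := by
    funext ω; rw [hTT]; simp [pib, Zb, hZ1.symm]
  -- integrability of endpoint integrands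
  have hA : Integrable (fun ω => (ptil1 ω / Z1) * log (ptil1 ω / pi0 ω)) μ := by
    have h := h_int_log T le_rfl
    simpa [hpib1] using h
  have hB : Integrable (fun ω => pi0 ω * log (ptil1 ω / pi0 ω)) μ := by
    have h := h_int_log 0 (by omega)
    simpa [hpib0] using h
  have hpi0_int : Integrable pi0 μ := by
    have h := hZb_int 0 (by omega)
    simpa using h
  set A : ℝ := ∫ ω, (ptil1 ω / Z1) * log (ptil1 ω / pi0 ω) ∂μ with hAdef
  set B : ℝ := ∫ ω, pi0 ω * log (ptil1 ω / pi0 ω) ∂μ with hBdef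
  -- KL integrals in terms of A, B
  have h1 : ∫ ω, (ptil1 ω / Z1) * log ((ptil1 ω / Z1) / pi0 ω) ∂μ = A - log Z1 := by
    have hcongr : (fun ω => (ptil1 ω / Z1) * log ((ptil1 ω / Z1) / pi0 ω)) =ᵐ[μ]
        fun ω => (ptil1 ω / Z1) * log (ptil1 ω / pi0 ω) - (ptil1 ω / Z1) * log Z1 := by
      filter_upwards [hpi0_pos, hptil1_pos] with ω h0 h1'
      rw [show (ptil1 ω / Z1) / pi0 ω = (ptil1 ω / pi0 ω) / Z1 by ring,
        Real.log_div (by positivity) hZ1_pos.ne']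
      ring
    rw [integral_congr_ae hcongr,
      integral_sub hA ((hptil1_int.div_const Z1).mul_const _)]
    have : ∫ ω, (ptil1 ω / Z1) * log Z1 ∂μ = log Z1 := by
      rw [integral_mul_const]
      simp [integral_div, ← hZ1, div_self hZ1_pos.ne']
    rw [this]
  have h2 : ∫ ω, pi0 ω * log (pi0 ω / (ptil1 ω / Z1)) ∂μ = log Z1 - B := by
    have hcongr : (fun ω => pi0 ω * log (pi0 ω / (ptil1 ω / Z1))) =ᵐ[μ]
        fun ω => pi0 ω * log Z1 - pi0 ω * log (ptil1 ω / pi0 ω) := by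
      filter_upwards [hpi0_pos, hptil1_pos] with ω h0 h1'
      rw [show pi0 ω / (ptil1 ω / Z1) = Z1 / (ptil1 ω / pi0 ω) by
          field_simp,
        Real.log_div hZ1_pos.ne' (by positivity)]
      ring
    rw [integral_congr_ae hcongr,
      integral_sub (hpi0_int.mul_const _) hB]
    have : ∫ ω, pi0 ω * log Z1 ∂μ = log Z1 := by
      rw [integral_mul_const, hpi0_norm, one_mul]
    rw [this]
  -- telescoping
  have htel : EUBO_AIS μ pi0 ptil1 T - ELBO_AIS μ pi0 ptil1 T = (1/(T:ℝ)) * (A - B) := by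
    unfold EUBO_AIS ELBO_AIS
    rw [← Finset.sum_sub_distrib]
    have hstep : ∀ t ∈ Finset.range T,
        (1 / (T : ℝ)) * ∫ ω, pib μ pi0 ptil1 (((t : ℝ) + 1) / T) ω * log (ptil1 ω / pi0 ω) ∂μ
        - (1 / (T : ℝ)) * ∫ ω, pib μ pi0 ptil1 ((t : ℝ) / T) ω * log (ptil1 ω / pi0 ω) ∂μ
        = (1 / (T : ℝ)) *
          ((fun s : ℕ => ∫ ω, pib μ pi0 ptil1 ((s : ℝ) / T) ω * log (ptil1 ω / pi0 ω) ∂μ) (t+1)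
           - (fun s : ℕ => ∫ ω, pib μ pi0 ptil1 ((s : ℝ) / T) ω * log (ptil1 ω / pi0 ω) ∂μ) t) := by
      intro t ht
      push_cast
      ring
    rw [Finset.sum_congr rfl hstep, ← Finset.mul_sum,
      Finset.sum_range_sub (f := fun s : ℕ =>
        ∫ ω, pib μ pi0 ptil1 ((s : ℝ) / T) ω * log (ptil1 ω / pi0 ω) ∂μ)]
    simp only [Nat.cast_zero, zero_div, hpib0, hpib1, hAdef, hBdef]
  rw [htel, h1, h2]
  ring

end Stmt8
end
end

section
/- (Improvement of Reverse IWAE over the single-sample ELBO and EUBO.) For every integer K ≥ 1: (i) ELBO_RIWAE(q,K) = ELBO(q) + ∫_{Ω^K} q_prop^R(z) · Σ_{s=1}^K ŵʳ_s(z)·log(K·ŵʳ_s(z)) dμ^K(z), and the correction term lies in [0, log K]; (ii) EUBO_RIWAE(q,K) = EUBO(q) − ∫_{Ω^K} (∏_{k=1}^K p(z_k)) · (1/K)·Σ_{s=1}^K log(1/(K·ŵʳ_s(z))) dμ^K(z), and the correction term lies in [0, ∫ p·log(p/q) dμ]. -/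
open MeasureTheory Real

noncomputable section

namespace Stmt9

variable {Ω : Type*} [MeasurableSpace Ω]

/-- Reverse importance ratio `r̂_k(z) = q(z_k) / p̃(z_k)`. -/
def rratio (q ptil : Ω → ℝ) {K : ℕ} (z : Fin K → Ω) (k : Fin K) : ℝ :=
  q (z k) / ptil (z k)

/-- Reverse self-normalized weights `ŵʳ_s(z)`. -/
def rsnis (q ptil : Ω → ℝ) {K : ℕ} (z : Fin K → Ω) (s : Fin K) : ℝ :=
  rratio q ptil z s / ∑ k, rratio q ptil z k

/-- Single-sample evidence lower bound `ELBO(q) = ∫ q log(p̃/q) dμ`. -/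
def ELBO (μ : Measure Ω) (q ptil : Ω → ℝ) : ℝ :=
  ∫ ω, q ω * log (ptil ω / q ω) ∂μ

/-- Single-sample evidence upper bound `EUBO(q) = ∫ p log(p̃/q) dμ`, `p = p̃/Z`. -/
def EUBO (μ : Measure Ω) (q ptil : Ω → ℝ) (Z : ℝ) : ℝ :=
  ∫ ω, (ptil ω / Z) * log (ptil ω / q ω) ∂μ

/-- Reverse IWAE lower bound on `log Z`. -/
def ELBO_RIWAE (μ : Measure Ω) (q ptil : Ω → ℝ) (Z : ℝ) (K : ℕ) [NeZero K] : ℝ :=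
  -∫ z : Fin K → Ω,
      q (z 0) * (∏ k ∈ Finset.univ.erase (0 : Fin K), (ptil (z k) / Z)) *
        log ((1 / (K : ℝ)) * ∑ k, rratio q ptil z k)
      ∂(Measure.pi fun _ : Fin K => μ)

/-- Reverse IWAE upper bound on `log Z`. -/
def EUBO_RIWAE (μ : Measure Ω) (q ptil : Ω → ℝ) (Z : ℝ) (K : ℕ) : ℝ :=
  -∫ z : Fin K → Ω,
      (∏ k, (ptil (z k) / Z)) * log ((1 / (K : ℝ)) * ∑ k, rratio q ptil z k)
      ∂(Measure.pi fun _ : Fin K => μ)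

/-- Reverse mixture proposal density `q_prop^R(z) = (1/K) Σ_s q(z_s) ∏_{k≠s} p(z_k)`. -/
def qpropR (q ptil : Ω → ℝ) (Z : ℝ) {K : ℕ} (z : Fin K → Ω) : ℝ :=
  (1 / (K : ℝ)) * ∑ s, q (z s) * ∏ k ∈ Finset.univ.erase s, (ptil (z k) / Z)

/-! ### Auxiliary lemmas -/

lemma prod_update {g h : Ω → ℝ} {K : ℕ} (s : Fin K) (z : Fin K → Ω) :
    (∏ i, Function.update (fun _ : Fin K => g) s h i (z i))
      = h (z s) * ∏ k ∈ Finset.univ.erase s, g (z k) := by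
  rw [← Finset.mul_prod_erase Finset.univ _ (Finset.mem_univ s), Function.update_self]
  congr 1
  exact Finset.prod_congr rfl fun k hk => by
    rw [Function.update_of_ne (Finset.mem_erase.mp hk).1]

lemma integrable_single_prod (μ : Measure Ω) [SigmaFinite μ] {g h : Ω → ℝ}
    (hg : Integrable g μ) (hh : Integrable h μ) {K : ℕ} (s : Fin K) :
    Integrable (fun z : Fin K → Ω => h (z s) * ∏ k ∈ Finset.univ.erase s, g (z k))
      (Measure.pi fun _ => μ) := by
  letI : MeasureSpace Ω := ⟨μ⟩
  have h1 : ∀ i : Fin K, Integrable (Function.update (fun _ : Fin K => g) s h i) μ := by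
    intro i
    rcases eq_or_ne i s with rfl | hi
    · simpa using hh
    · simpa [Function.update_of_ne hi] using hg
  have := MeasureTheory.Integrable.fintype_prod (f := Function.update (fun _ : Fin K => g) s h)
    (fun i => h1 i)
  simp only [prod_update] at this
  exact this

lemma integral_single_prod (μ : Measure Ω) [SigmaFinite μ] (g h : Ω → ℝ) {K : ℕ} (s : Fin K) :
    ∫ z : Fin K → Ω, h (z s) * ∏ k ∈ Finset.univ.erase s, g (z k) ∂(Measure.pi fun _ => μ)
      = (∫ ω, h ω ∂μ) * (∫ ω, g ω ∂μ) ^ (K - 1) := by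
  letI : MeasureSpace Ω := ⟨μ⟩
  have := MeasureTheory.integral_fintype_prod_eq_prod (ι := Fin K) (μ := fun _ => volume)
    (f := Function.update (fun _ : Fin K => g) s h)
  simp only [prod_update] at this
  rw [show (Measure.pi fun _ : Fin K => μ) = (Measure.pi fun _ : Fin K => (volume : Measure Ω)) from rfl]
  rw [this, ← Finset.mul_prod_erase Finset.univ _ (Finset.mem_univ s), Function.update_self]
  congr 1
  rw [Finset.prod_congr rfl (fun k hk => by rw [Function.update_of_ne (Finset.mem_erase.mp hk).1]),
    Finset.prod_const, Finset.card_erase_of_mem (Finset.mem_univ s), Finset.card_univ,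
    Fintype.card_fin]
  rfl

lemma integral_comp_perm (μ : Measure Ω) [SigmaFinite μ] {K : ℕ} (e : Equiv.Perm (Fin K))
    (F : (Fin K → Ω) → ℝ) :
    ∫ z : Fin K → Ω, F (z ∘ e) ∂(Measure.pi fun _ => μ)
      = ∫ z : Fin K → Ω, F z ∂(Measure.pi fun _ => μ) := by
  have hT : MeasurePreserving (MeasurableEquiv.arrowCongr' e.symm (MeasurableEquiv.refl Ω))
      (Measure.pi fun _ : Fin K => μ) (Measure.pi fun _ : Fin K => μ) :=
    measurePreserving_arrowCongr' (fun _ => μ) (fun _ => μ) e.symm (MeasurableEquiv.refl Ω)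
      (fun _ => MeasurePreserving.id μ)
  have := hT.integral_comp (MeasurableEquiv.measurableEmbedding _) F
  convert this using 2
  rfl

lemma integrable_comp_perm (μ : Measure Ω) [SigmaFinite μ] {K : ℕ} (e : Equiv.Perm (Fin K))
    {F : (Fin K → Ω) → ℝ} (hF : Integrable F (Measure.pi fun _ => μ)) :
    Integrable (fun z : Fin K → Ω => F (z ∘ e)) (Measure.pi fun _ => μ) := by
  have hT : MeasurePreserving (MeasurableEquiv.arrowCongr' e.symm (MeasurableEquiv.refl Ω))
      (Measure.pi fun _ : Fin K => μ) (Measure.pi fun _ : Fin K => μ) :=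
    measurePreserving_arrowCongr' (fun _ => μ) (fun _ => μ) e.symm (MeasurableEquiv.refl Ω)
      (fun _ => MeasurePreserving.id μ)
  have := (hT.integrable_comp_emb (MeasurableEquiv.measurableEmbedding _)).mpr hF
  convert this using 2
  rfl

lemma ae_good (μ : Measure Ω) [SigmaFinite μ] {q ptil : Ω → ℝ}
    (hq_pos : ∀ᵐ ω ∂μ, 0 < q ω) (hptil_pos : ∀ᵐ ω ∂μ, 0 < ptil ω) (K : ℕ) :
    ∀ᵐ z : Fin K → Ω ∂(Measure.pi fun _ => μ), ∀ k, 0 < q (z k) ∧ 0 < ptil (z k) := by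
  rw [ae_all_iff]
  intro k
  have h0 : μ {ω | ¬(0 < q ω ∧ 0 < ptil ω)} = 0 := by
    have := hq_pos.and hptil_pos
    rwa [ae_iff] at this
  have : (Measure.pi fun _ : Fin K => μ)
      (Function.eval k ⁻¹' {ω | ¬(0 < q ω ∧ 0 < ptil ω)}) = 0 :=
    Measure.pi_eval_preimage_null _ h0
  rw [ae_iff]
  exact this

lemma rsnis_comp {q ptil : Ω → ℝ} {K : ℕ} (e : Equiv.Perm (Fin K)) (z : Fin K → Ω) (t : Fin K) :
    rsnis q ptil (z ∘ e) t = rsnis q ptil z (e t) := by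
  simp only [rsnis, rratio, Function.comp_apply]
  congr 1
  exact Equiv.sum_comp e (fun k => q (z k) / ptil (z k))

section Pointwise
variable {q ptil : Ω → ℝ} {Z : ℝ} {K : ℕ} {z : Fin K → Ω}

lemma r_pos (hz : ∀ k, 0 < q (z k) ∧ 0 < ptil (z k)) (k : Fin K) :
    0 < rratio q ptil z k := div_pos (hz k).1 (hz k).2

lemma S_pos [NeZero K] (hz : ∀ k, 0 < q (z k) ∧ 0 < ptil (z k)) :
    0 < ∑ k, rratio q ptil z k :=
  Finset.sum_pos (fun k _ => r_pos hz k) (Finset.univ_nonempty)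

lemma w_pos [NeZero K] (hz : ∀ k, 0 < q (z k) ∧ 0 < ptil (z k)) (s : Fin K) :
    0 < rsnis q ptil z s := div_pos (r_pos hz s) (S_pos hz)

lemma w_sum [NeZero K] (hz : ∀ k, 0 < q (z k) ∧ 0 < ptil (z k)) :
    ∑ s, rsnis q ptil z s = 1 := by
  simp only [rsnis, ← Finset.sum_div]
  exact div_self (S_pos hz).ne'

lemma key1 (hz : ∀ k, 0 < q (z k) ∧ 0 < ptil (z k)) (s : Fin K) :
    q (z s) * ∏ k ∈ Finset.univ.erase s, (ptil (z k) / Z)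
      = rratio q ptil z s * ((∏ k, ptil (z k)) / Z ^ (K - 1)) := by
  rw [Finset.prod_div_distrib, Finset.prod_const,
    Finset.card_erase_of_mem (Finset.mem_univ s), Finset.card_univ, Fintype.card_fin,
    ← Finset.mul_prod_erase Finset.univ (fun k => ptil (z k)) (Finset.mem_univ s), rratio]
  have h := (hz s).2.ne'
  field_simp

lemma qpropR_eq [NeZero K] (hz : ∀ k, 0 < q (z k) ∧ 0 < ptil (z k)) :
    qpropR q ptil Z z
      = (1 / (K : ℝ)) * (∑ k, rratio q ptil z k) * ((∏ k, ptil (z k)) / Z ^ (K - 1)) := by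
  rw [qpropR]
  rw [Finset.sum_congr rfl (fun s _ => key1 hz s), ← Finset.sum_mul, mul_assoc]

lemma qpropR_nonneg (hz : ∀ k, 0 < q (z k) ∧ 0 < ptil (z k)) (hZp : 0 < Z) :
    0 ≤ qpropR q ptil Z z := by
  rw [qpropR]
  refine mul_nonneg (by positivity) (Finset.sum_nonneg fun s _ => ?_)
  exact mul_nonneg (hz s).1.le (Finset.prod_nonneg fun k _ => div_nonneg (hz k).2.le hZp.le)

lemma key2 [NeZero K] (hz : ∀ k, 0 < q (z k) ∧ 0 < ptil (z k)) (s : Fin K) :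
    qpropR q ptil Z z * rsnis q ptil z s
      = (1 / (K : ℝ)) * (q (z s) * ∏ k ∈ Finset.univ.erase s, (ptil (z k) / Z)) := by
  have hS := (S_pos hz).ne'
  rw [rsnis, key1 hz s, qpropR_eq hz]
  rw [show (1 / (K : ℝ)) * (∑ k, rratio q ptil z k) * ((∏ k, ptil (z k)) / Z ^ (K - 1)) *
      (rratio q ptil z s / ∑ k, rratio q ptil z k)
      = (1 / (K : ℝ)) * ((∏ k, ptil (z k)) / Z ^ (K - 1)) * rratio q ptil z s *
        ((∑ k, rratio q ptil z k) / ∑ k, rratio q ptil z k) from by ring,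
    div_self hS, mul_one]
  ring

lemma key3 [NeZero K] (hz : ∀ k, 0 < q (z k) ∧ 0 < ptil (z k)) (s : Fin K) :
    log ((K : ℝ) * rsnis q ptil z s)
      = -log (ptil (z s) / q (z s)) - log ((1 / (K : ℝ)) * ∑ k, rratio q ptil z k) := by
  have hK : (0:ℝ) < K := Nat.cast_pos.mpr (Nat.pos_of_ne_zero (NeZero.ne K))
  have hS := S_pos hz
  have hr := r_pos hz s
  rw [rsnis]
  rw [show (K : ℝ) * (rratio q ptil z s / ∑ k, rratio q ptil z k)
      = rratio q ptil z s / ((1 / (K : ℝ)) * ∑ k, rratio q ptil z k) by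
    field_simp]
  rw [log_div hr.ne' (by positivity), rratio, ← log_inv, inv_div]

lemma key4 [NeZero K] (hz : ∀ k, 0 < q (z k) ∧ 0 < ptil (z k)) (s : Fin K) :
    log (1 / ((K : ℝ) * rsnis q ptil z s))
      = log (ptil (z s) / q (z s)) + log ((1 / (K : ℝ)) * ∑ k, rratio q ptil z k) := by
  rw [one_div, log_inv, key3 hz s]
  ring

lemma klw_nonneg [NeZero K] (hz : ∀ k, 0 < q (z k) ∧ 0 < ptil (z k)) :
    0 ≤ ∑ s, rsnis q ptil z s * log ((K : ℝ) * rsnis q ptil z s) := by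
  have hK : (0:ℝ) < K := Nat.cast_pos.mpr (Nat.pos_of_ne_zero (NeZero.ne K))
  have h : ∀ s : Fin K, rsnis q ptil z s - (1 / (K:ℝ))
      ≤ rsnis q ptil z s * log ((K : ℝ) * rsnis q ptil z s) := by
    intro s
    have hw := w_pos hz s
    have hKw : (0:ℝ) < (K:ℝ) * rsnis q ptil z s := by positivity
    have hlog0 := Real.log_le_sub_one_of_pos (x := 1 / ((K:ℝ) * rsnis q ptil z s)) (by positivity)
    rw [one_div, log_inv] at hlog0
    have hlog : 1 - ((K:ℝ) * rsnis q ptil z s)⁻¹ ≤ log ((K:ℝ) * rsnis q ptil z s) := by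
      linarith
    have h2 := mul_le_mul_of_nonneg_left hlog hw.le
    have h3 : rsnis q ptil z s * (1 - ((K:ℝ) * rsnis q ptil z s)⁻¹)
        = rsnis q ptil z s - 1 / (K:ℝ) := by
      field_simp
    linarith [h2, h3.symm.le, h3.le]
  calc (0:ℝ) = ∑ s : Fin K, (rsnis q ptil z s - (1 / (K:ℝ))) := by
        rw [Finset.sum_sub_distrib, w_sum hz, Finset.sum_const, Finset.card_univ,
          Fintype.card_fin, nsmul_eq_mul]
        field_simp
        ring
    _ ≤ _ := Finset.sum_le_sum fun s _ => h s

lemma klw_le [NeZero K] (hz : ∀ k, 0 < q (z k) ∧ 0 < ptil (z k)) :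
    ∑ s, rsnis q ptil z s * log ((K : ℝ) * rsnis q ptil z s) ≤ log K := by
  have hK : (0:ℝ) < K := Nat.cast_pos.mpr (Nat.pos_of_ne_zero (NeZero.ne K))
  calc ∑ s, rsnis q ptil z s * log ((K : ℝ) * rsnis q ptil z s)
      ≤ ∑ s, rsnis q ptil z s * log (K : ℝ) := by
        refine Finset.sum_le_sum fun s _ => ?_
        refine mul_le_mul_of_nonneg_left ?_ (w_pos hz s).le
        refine Real.log_le_log (mul_pos hK (w_pos hz s)) ?_
        have hw1 : rsnis q ptil z s ≤ 1 := by
          rw [rsnis]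
          rw [div_le_one (S_pos hz)]
          exact Finset.single_le_sum (fun k _ => (r_pos hz k).le) (Finset.mem_univ s)
        nlinarith
    _ = log K := by rw [← Finset.sum_mul, w_sum hz, one_mul]

lemma sumlog_nonneg [NeZero K] (hz : ∀ k, 0 < q (z k) ∧ 0 < ptil (z k)) :
    0 ≤ ∑ s, log (1 / ((K : ℝ) * rsnis q ptil z s)) := by
  have hK : (0:ℝ) < K := Nat.cast_pos.mpr (Nat.pos_of_ne_zero (NeZero.ne K))
  have h : ∀ s : Fin K, 1 - (K:ℝ) * rsnis q ptil z s
      ≤ log (1 / ((K : ℝ) * rsnis q ptil z s)) := by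
    intro s
    have hw := w_pos hz s
    have hlog := Real.log_le_sub_one_of_pos (x := (K:ℝ) * rsnis q ptil z s) (by positivity)
    rw [one_div, log_inv]
    linarith
  calc (0:ℝ) = ∑ s : Fin K, (1 - (K:ℝ) * rsnis q ptil z s) := by
        rw [Finset.sum_sub_distrib, ← Finset.mul_sum, w_sum hz, Finset.sum_const,
          Finset.card_univ, Fintype.card_fin, nsmul_eq_mul]
        ring
    _ ≤ _ := Finset.sum_le_sum fun s _ => h s

lemma key5 (hz : ∀ k, 0 < q (z k) ∧ 0 < ptil (z k)) (hZ_pos : 0 < Z) (s : Fin K) :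
    rratio q ptil z s * ∏ k, (ptil (z k) / Z)
      = (q (z s) / Z) * ∏ k ∈ Finset.univ.erase s, (ptil (z k) / Z) := by
  rw [← Finset.mul_prod_erase Finset.univ (fun k => ptil (z k) / Z) (Finset.mem_univ s), rratio]
  have h := (hz s).2.ne'
  field_simp

end Pointwise

/-- Improvement of Reverse IWAE over the single-sample ELBO and EUBO. -/
theorem riwae_improvement
    (μ : Measure Ω) [SigmaFinite μ] (q ptil : Ω → ℝ)
    (hq_meas : Measurable q) (hq_nonneg : ∀ ω, 0 ≤ q ω)
    (hq_pos : ∀ᵐ ω ∂μ, 0 < q ω) (hq_norm : ∫ ω, q ω ∂μ = 1)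
    (hptil_meas : Measurable ptil) (hptil_pos : ∀ᵐ ω ∂μ, 0 < ptil ω)
    (hptil_int : Integrable ptil μ)
    (Z : ℝ) (hZ : Z = ∫ ω, ptil ω ∂μ) (hZ_pos : 0 < Z)
    (K : ℕ) [NeZero K]
    (h_int_elbo : Integrable (fun ω => q ω * log (ptil ω / q ω)) μ)
    (h_int_eubo : Integrable (fun ω => (ptil ω / Z) * log (ptil ω / q ω)) μ)
    (h_int_relbo : Integrable
      (fun z : Fin K → Ω =>
        q (z 0) * (∏ k ∈ Finset.univ.erase (0 : Fin K), (ptil (z k) / Z)) *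
          log ((1 / (K : ℝ)) * ∑ k, rratio q ptil z k))
      (Measure.pi fun _ : Fin K => μ))
    (h_int_reubo : Integrable
      (fun z : Fin K → Ω =>
        (∏ k, (ptil (z k) / Z)) * log ((1 / (K : ℝ)) * ∑ k, rratio q ptil z k))
      (Measure.pi fun _ : Fin K => μ))
    (h_int_corr1 : Integrable
      (fun z : Fin K → Ω =>
        qpropR q ptil Z z * ∑ s, rsnis q ptil z s * log ((K : ℝ) * rsnis q ptil z s))
      (Measure.pi fun _ : Fin K => μ))
    (h_int_corr2 : Integrable
      (fun z : Fin K → Ω =>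
        (∏ k, (ptil (z k) / Z)) *
          ((1 / (K : ℝ)) * ∑ s, log (1 / ((K : ℝ) * rsnis q ptil z s))))
      (Measure.pi fun _ : Fin K => μ))
    (h_int_kl : Integrable (fun ω => (ptil ω / Z) * log ((ptil ω / Z) / q ω)) μ) :
    (ELBO_RIWAE μ q ptil Z K
        = ELBO μ q ptil
          + ∫ z : Fin K → Ω,
              qpropR q ptil Z z * ∑ s, rsnis q ptil z s * log ((K : ℝ) * rsnis q ptil z s)
              ∂(Measure.pi fun _ : Fin K => μ) ∧
      0 ≤ ∫ z : Fin K → Ω,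
            qpropR q ptil Z z * ∑ s, rsnis q ptil z s * log ((K : ℝ) * rsnis q ptil z s)
            ∂(Measure.pi fun _ : Fin K => μ) ∧
      (∫ z : Fin K → Ω,
          qpropR q ptil Z z * ∑ s, rsnis q ptil z s * log ((K : ℝ) * rsnis q ptil z s)
          ∂(Measure.pi fun _ : Fin K => μ)) ≤ log K) ∧
    (EUBO_RIWAE μ q ptil Z K
        = EUBO μ q ptil Z
          - ∫ z : Fin K → Ω,
              (∏ k, (ptil (z k) / Z)) *
                ((1 / (K : ℝ)) * ∑ s, log (1 / ((K : ℝ) * rsnis q ptil z s)))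
              ∂(Measure.pi fun _ : Fin K => μ) ∧
      0 ≤ ∫ z : Fin K → Ω,
            (∏ k, (ptil (z k) / Z)) *
              ((1 / (K : ℝ)) * ∑ s, log (1 / ((K : ℝ) * rsnis q ptil z s)))
            ∂(Measure.pi fun _ : Fin K => μ) ∧
      (∫ z : Fin K → Ω,
          (∏ k, (ptil (z k) / Z)) *
            ((1 / (K : ℝ)) * ∑ s, log (1 / ((K : ℝ) * rsnis q ptil z s)))
          ∂(Measure.pi fun _ : Fin K => μ))
        ≤ ∫ ω, (ptil ω / Z) * log ((ptil ω / Z) / q ω) ∂μ) := by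
  classical
  have hK0 : (0:ℝ) < K := Nat.cast_pos.mpr (Nat.pos_of_ne_zero (NeZero.ne K))
  have hGood : ∀ᵐ z : Fin K → Ω ∂(Measure.pi fun _ : Fin K => μ),
      ∀ k, 0 < q (z k) ∧ 0 < ptil (z k) := ae_good μ hq_pos hptil_pos K
  have hq_int : Integrable q μ := by
    by_contra h
    rw [integral_undef h] at hq_norm
    exact one_ne_zero hq_norm.symm
  have hp_int : Integrable (fun ω => ptil ω / Z) μ := hptil_int.div_const Z
  have hp_norm : ∫ ω, ptil ω / Z ∂μ = 1 := by
    rw [integral_div, ← hZ, div_self hZ_pos.ne']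
  -- ### Part (i)
  have hGae : (fun z : Fin K → Ω =>
        -((q (z 0) * log (ptil (z 0) / q (z 0))) *
            ∏ k ∈ Finset.univ.erase (0 : Fin K), (ptil (z k) / Z))
          - q (z 0) * (∏ k ∈ Finset.univ.erase (0 : Fin K), (ptil (z k) / Z)) *
              log ((1 / (K : ℝ)) * ∑ k, rratio q ptil z k))
      =ᵐ[(Measure.pi fun _ : Fin K => μ)]
      (fun z : Fin K → Ω =>
        q (z 0) * (∏ k ∈ Finset.univ.erase (0 : Fin K), (ptil (z k) / Z)) *
          log ((K : ℝ) * rsnis q ptil z 0)) := by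
    filter_upwards [hGood] with z hz
    rw [key3 hz 0]
    ring
  have hG_int : Integrable (fun z : Fin K → Ω =>
      q (z 0) * (∏ k ∈ Finset.univ.erase (0 : Fin K), (ptil (z k) / Z)) *
        log ((K : ℝ) * rsnis q ptil z 0)) (Measure.pi fun _ : Fin K => μ) :=
    (((integrable_single_prod μ hp_int h_int_elbo 0).neg).sub h_int_relbo).congr hGae
  have hG_val : ∫ z : Fin K → Ω,
        q (z 0) * (∏ k ∈ Finset.univ.erase (0 : Fin K), (ptil (z k) / Z)) *
          log ((K : ℝ) * rsnis q ptil z 0) ∂(Measure.pi fun _ : Fin K => μ)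
      = -(ELBO μ q ptil)
        - ∫ z : Fin K → Ω,
            q (z 0) * (∏ k ∈ Finset.univ.erase (0 : Fin K), (ptil (z k) / Z)) *
              log ((1 / (K : ℝ)) * ∑ k, rratio q ptil z k)
            ∂(Measure.pi fun _ : Fin K => μ) := by
    have hint1 : Integrable (fun z : Fin K → Ω =>
        -((q (z 0) * log (ptil (z 0) / q (z 0))) *
            ∏ k ∈ Finset.univ.erase (0 : Fin K), (ptil (z k) / Z)))
        (Measure.pi fun _ : Fin K => μ) := (integrable_single_prod μ hp_int h_int_elbo 0).neg
    have hsp := integral_single_prod μ (fun ω => ptil ω / Z)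
      (fun ω => q ω * log (ptil ω / q ω)) (0 : Fin K)
    rw [← integral_congr_ae hGae, integral_sub hint1 h_int_relbo,
      integral_neg, hsp, hp_norm, one_pow, mul_one, ELBO]
  have hptwise : ∀ (s : Fin K) (z : Fin K → Ω),
      q ((z ∘ (Equiv.swap (0 : Fin K) s)) 0) *
          (∏ k ∈ Finset.univ.erase (0 : Fin K),
            (ptil ((z ∘ (Equiv.swap (0 : Fin K) s)) k) / Z)) *
          log ((K : ℝ) * rsnis q ptil (z ∘ (Equiv.swap (0 : Fin K) s)) 0)
        = q (z s) * (∏ k ∈ Finset.univ.erase s, (ptil (z k) / Z)) *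
            log ((K : ℝ) * rsnis q ptil z s) := by
    intro s z
    have h2 : (∏ k ∈ Finset.univ.erase (0 : Fin K),
          (ptil ((z ∘ (Equiv.swap (0 : Fin K) s)) k) / Z))
        = ∏ k ∈ Finset.univ.erase ((Equiv.swap (0 : Fin K) s) 0), (ptil (z k) / Z) := by
      refine Finset.prod_equiv (Equiv.swap (0 : Fin K) s) ?_ ?_
      · intro k
        simp only [Finset.mem_erase, Finset.mem_univ, and_true, ne_eq]
        refine not_congr ⟨fun h => by rw [h, Equiv.swap_apply_left], fun h => ?_⟩
        exact (Equiv.swap (0 : Fin K) s).injective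
          (h.trans (Equiv.swap_apply_left (0 : Fin K) s).symm)
      · intro k _
        rfl
    rw [h2, rsnis_comp, show ((z ∘ (Equiv.swap (0 : Fin K) s)) 0) = z ((Equiv.swap (0 : Fin K) s) 0)
      from rfl, Equiv.swap_apply_left]
  have hGs_int : ∀ s : Fin K, Integrable (fun z : Fin K → Ω =>
      q (z s) * (∏ k ∈ Finset.univ.erase s, (ptil (z k) / Z)) *
        log ((K : ℝ) * rsnis q ptil z s)) (Measure.pi fun _ : Fin K => μ) := by
    intro s
    have h := integrable_comp_perm μ (Equiv.swap (0 : Fin K) s) hG_int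
    exact h.congr (Filter.Eventually.of_forall fun z => hptwise s z)
  have hGs_val : ∀ s : Fin K,
      (∫ z : Fin K → Ω, q (z s) * (∏ k ∈ Finset.univ.erase s, (ptil (z k) / Z)) *
          log ((K : ℝ) * rsnis q ptil z s) ∂(Measure.pi fun _ : Fin K => μ))
      = ∫ z : Fin K → Ω, q (z 0) * (∏ k ∈ Finset.univ.erase (0 : Fin K), (ptil (z k) / Z)) *
          log ((K : ℝ) * rsnis q ptil z 0) ∂(Measure.pi fun _ : Fin K => μ) := by
    intro s
    rw [← integral_comp_perm μ (Equiv.swap (0 : Fin K) s)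
      (fun z : Fin K → Ω => q (z 0) * (∏ k ∈ Finset.univ.erase (0 : Fin K), (ptil (z k) / Z)) *
        log ((K : ℝ) * rsnis q ptil z 0))]
    exact integral_congr_ae (Filter.Eventually.of_forall fun z => (hptwise s z).symm)
  have hC1ae : (fun z : Fin K → Ω =>
        qpropR q ptil Z z * ∑ s, rsnis q ptil z s * log ((K : ℝ) * rsnis q ptil z s))
      =ᵐ[(Measure.pi fun _ : Fin K => μ)]
      (fun z : Fin K → Ω => ∑ s, (1 / (K : ℝ)) *
        (q (z s) * (∏ k ∈ Finset.univ.erase s, (ptil (z k) / Z)) *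
          log ((K : ℝ) * rsnis q ptil z s))) := by
    filter_upwards [hGood] with z hz
    rw [Finset.mul_sum]
    refine Finset.sum_congr rfl fun s _ => ?_
    rw [← mul_assoc, key2 hz s]
    ring
  have hC1 : (∫ z : Fin K → Ω,
        qpropR q ptil Z z * ∑ s, rsnis q ptil z s * log ((K : ℝ) * rsnis q ptil z s)
        ∂(Measure.pi fun _ : Fin K => μ))
      = -(ELBO μ q ptil)
        - ∫ z : Fin K → Ω,
            q (z 0) * (∏ k ∈ Finset.univ.erase (0 : Fin K), (ptil (z k) / Z)) *
              log ((1 / (K : ℝ)) * ∑ k, rratio q ptil z k)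
            ∂(Measure.pi fun _ : Fin K => μ) := by
    rw [integral_congr_ae hC1ae,
      integral_finset_sum _ (fun s _ => (hGs_int s).const_mul (1 / (K : ℝ)))]
    have hterm : ∀ s : Fin K, (∫ z : Fin K → Ω, (1 / (K : ℝ)) *
        (q (z s) * (∏ k ∈ Finset.univ.erase s, (ptil (z k) / Z)) *
          log ((K : ℝ) * rsnis q ptil z s)) ∂(Measure.pi fun _ : Fin K => μ))
        = (1 / (K : ℝ)) * ∫ z : Fin K → Ω,
            q (z 0) * (∏ k ∈ Finset.univ.erase (0 : Fin K), (ptil (z k) / Z)) *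
              log ((K : ℝ) * rsnis q ptil z 0) ∂(Measure.pi fun _ : Fin K => μ) := by
      intro s
      rw [integral_const_mul, hGs_val s]
    rw [Finset.sum_congr rfl fun s _ => hterm s, Finset.sum_const, Finset.card_univ,
      Fintype.card_fin, nsmul_eq_mul, ← mul_assoc, mul_one_div, div_self hK0.ne', one_mul,
      hG_val]
  -- ### Part (ii)
  have hH_int : ∀ s : Fin K, Integrable (fun z : Fin K → Ω =>
      ((ptil (z s) / Z) * log (ptil (z s) / q (z s))) *
        ∏ k ∈ Finset.univ.erase s, (ptil (z k) / Z)) (Measure.pi fun _ : Fin K => μ) :=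
    fun s => integrable_single_prod μ hp_int h_int_eubo s
  have hH_val : ∀ s : Fin K, (∫ z : Fin K → Ω,
        ((ptil (z s) / Z) * log (ptil (z s) / q (z s))) *
          ∏ k ∈ Finset.univ.erase s, (ptil (z k) / Z) ∂(Measure.pi fun _ : Fin K => μ))
      = EUBO μ q ptil Z := by
    intro s
    have hsp := integral_single_prod μ (fun ω => ptil ω / Z)
      (fun ω => (ptil ω / Z) * log (ptil ω / q ω)) s
    rw [hsp, hp_norm, one_pow, mul_one, EUBO]
  have hC2ae : (fun z : Fin K → Ω =>
        (∏ k, (ptil (z k) / Z)) *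
          ((1 / (K : ℝ)) * ∑ s, log (1 / ((K : ℝ) * rsnis q ptil z s))))
      =ᵐ[(Measure.pi fun _ : Fin K => μ)]
      (fun z : Fin K → Ω =>
        (1 / (K : ℝ)) * ∑ s, (((ptil (z s) / Z) * log (ptil (z s) / q (z s))) *
            ∏ k ∈ Finset.univ.erase s, (ptil (z k) / Z))
          + (∏ k, (ptil (z k) / Z)) * log ((1 / (K : ℝ)) * ∑ k, rratio q ptil z k)) := by
    filter_upwards [hGood] with z hz
    rw [Finset.sum_congr rfl fun s _ => key4 hz s, Finset.sum_add_distrib, Finset.sum_const,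
      Finset.card_univ, Fintype.card_fin, nsmul_eq_mul]
    have hps : ∀ s : Fin K, ((ptil (z s) / Z) * log (ptil (z s) / q (z s))) *
          ∏ k ∈ Finset.univ.erase s, (ptil (z k) / Z)
        = (∏ k, (ptil (z k) / Z)) * log (ptil (z s) / q (z s)) := by
      intro s
      rw [← Finset.mul_prod_erase Finset.univ (fun k => ptil (z k) / Z) (Finset.mem_univ s)]
      ring
    rw [Finset.sum_congr rfl fun s _ => hps s, ← Finset.mul_sum]
    field_simp
  have hC2 : (∫ z : Fin K → Ω,
        (∏ k, (ptil (z k) / Z)) *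
          ((1 / (K : ℝ)) * ∑ s, log (1 / ((K : ℝ) * rsnis q ptil z s)))
        ∂(Measure.pi fun _ : Fin K => μ))
      = EUBO μ q ptil Z
        + ∫ z : Fin K → Ω,
            (∏ k, (ptil (z k) / Z)) * log ((1 / (K : ℝ)) * ∑ k, rratio q ptil z k)
            ∂(Measure.pi fun _ : Fin K => μ) := by
    rw [integral_congr_ae hC2ae,
      integral_add ((integrable_finset_sum _ (fun s _ => hH_int s)).const_mul _) h_int_reubo,
      integral_const_mul, integral_finset_sum _ (fun s _ => hH_int s),
      Finset.sum_congr rfl fun s _ => hH_val s, Finset.sum_const, Finset.card_univ,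
      Fintype.card_fin, nsmul_eq_mul, ← mul_assoc, one_div_mul_cancel hK0.ne', one_mul]
  -- ### conclusion
  refine ⟨⟨?_, ?_, ?_⟩, ?_, ?_, ?_⟩
  · rw [ELBO_RIWAE, hC1]
    ring
  · refine integral_nonneg_of_ae ?_
    filter_upwards [hGood] with z hz
    exact mul_nonneg (qpropR_nonneg hz hZ_pos) (klw_nonneg hz)
  · have hqp_int : Integrable (fun z : Fin K → Ω => qpropR q ptil Z z)
        (Measure.pi fun _ : Fin K => μ) := by
      have h1 : Integrable (fun z : Fin K → Ω =>
          ∑ s, q (z s) * ∏ k ∈ Finset.univ.erase s, (ptil (z k) / Z))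
          (Measure.pi fun _ : Fin K => μ) :=
        integrable_finset_sum _ (fun s _ => integrable_single_prod μ hp_int hq_int s)
      simpa [qpropR] using h1.const_mul (1 / (K : ℝ))
    have hqp_val : (∫ z : Fin K → Ω, qpropR q ptil Z z ∂(Measure.pi fun _ : Fin K => μ)) = 1 := by
      simp only [qpropR]
      rw [integral_const_mul,
        integral_finset_sum _ (fun s _ => integrable_single_prod μ hp_int hq_int s)]
      have hone : ∀ s : Fin K, (∫ z : Fin K → Ω,
          q (z s) * ∏ k ∈ Finset.univ.erase s, (ptil (z k) / Z)
          ∂(Measure.pi fun _ : Fin K => μ)) = 1 := by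
        intro s
        have hsp := integral_single_prod μ (fun ω => ptil ω / Z) q s
        rw [hsp, hq_norm, hp_norm, one_pow, mul_one]
      rw [Finset.sum_congr rfl fun s _ => hone s, Finset.sum_const, Finset.card_univ,
        Fintype.card_fin, nsmul_eq_mul, mul_one, one_div, inv_mul_cancel₀ hK0.ne']
    refine le_trans (integral_mono_ae h_int_corr1 (hqp_int.mul_const (log K)) ?_) ?_
    · filter_upwards [hGood] with z hz
      exact mul_le_mul_of_nonneg_left (klw_le hz) (qpropR_nonneg hz hZ_pos)
    · rw [integral_mul_const, hqp_val, one_mul]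
  · rw [EUBO_RIWAE, hC2]
    ring
  · refine integral_nonneg_of_ae ?_
    filter_upwards [hGood] with z hz
    refine mul_nonneg (Finset.prod_nonneg fun k _ => div_nonneg (hz k).2.le hZ_pos.le) ?_
    exact mul_nonneg (by positivity) (sumlog_nonneg hz)
  · have hKL : (∫ ω, (ptil ω / Z) * log ((ptil ω / Z) / q ω) ∂μ)
        = EUBO μ q ptil Z - log Z := by
      have hae : (fun ω => (ptil ω / Z) * log ((ptil ω / Z) / q ω))
          =ᵐ[μ] fun ω => (ptil ω / Z) * log (ptil ω / q ω) - (ptil ω / Z) * log Z := by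
        filter_upwards [hq_pos, hptil_pos] with ω h1 h2
        rw [show (ptil ω / Z) / q ω = (ptil ω / q ω) / Z from by rw [div_div, div_div, mul_comm],
          log_div (by positivity) hZ_pos.ne']
        ring
      rw [integral_congr_ae hae, integral_sub h_int_eubo (hp_int.mul_const _),
        integral_mul_const, hp_norm, one_mul, EUBO]
    have hR_int : Integrable (fun z : Fin K → Ω =>
        Z * (1 / (K : ℝ)) * ∑ s, ((q (z s) / Z) * ∏ k ∈ Finset.univ.erase s, (ptil (z k) / Z))
          - (1 + log Z) * ((ptil (z 0) / Z) * ∏ k ∈ Finset.univ.erase (0 : Fin K),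
              (ptil (z k) / Z))) (Measure.pi fun _ : Fin K => μ) :=
      ((integrable_finset_sum _ (fun s _ =>
          integrable_single_prod μ hp_int (hq_int.div_const Z) s)).const_mul _).sub
        ((integrable_single_prod μ hp_int hp_int 0).const_mul _)
    have hR_val : (∫ z : Fin K → Ω,
        Z * (1 / (K : ℝ)) * ∑ s, ((q (z s) / Z) * ∏ k ∈ Finset.univ.erase s, (ptil (z k) / Z))
          - (1 + log Z) * ((ptil (z 0) / Z) * ∏ k ∈ Finset.univ.erase (0 : Fin K),
              (ptil (z k) / Z)) ∂(Measure.pi fun _ : Fin K => μ)) = -log Z := by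
      rw [integral_sub
        ((integrable_finset_sum _ (fun s _ =>
          integrable_single_prod μ hp_int (hq_int.div_const Z) s)).const_mul _)
        ((integrable_single_prod μ hp_int hp_int 0).const_mul _),
        integral_const_mul, integral_const_mul,
        integral_finset_sum _ (fun s _ => integrable_single_prod μ hp_int (hq_int.div_const Z) s)]
      have hone : ∀ s : Fin K, (∫ z : Fin K → Ω,
          (q (z s) / Z) * ∏ k ∈ Finset.univ.erase s, (ptil (z k) / Z)
          ∂(Measure.pi fun _ : Fin K => μ)) = 1 / Z := by
        intro s
        have hsp := integral_single_prod μ (fun ω => ptil ω / Z) (fun ω => q ω / Z) s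
        rw [hsp, hp_norm, one_pow, mul_one, integral_div, hq_norm]
      have hsp := integral_single_prod μ (fun ω => ptil ω / Z) (fun ω => ptil ω / Z) (0 : Fin K)
      rw [Finset.sum_congr rfl fun s _ => hone s, Finset.sum_const, Finset.card_univ,
        Fintype.card_fin, nsmul_eq_mul, hsp, hp_norm, one_pow, mul_one]
      field_simp
      ring
    have hB_le : (∫ z : Fin K → Ω,
          (∏ k, (ptil (z k) / Z)) * log ((1 / (K : ℝ)) * ∑ k, rratio q ptil z k)
          ∂(Measure.pi fun _ : Fin K => μ)) ≤ -log Z := by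
      refine le_trans (integral_mono_ae h_int_reubo hR_int ?_) (le_of_eq hR_val)
      filter_upwards [hGood] with z hz
      have hS := S_pos hz
      have hprod : (∏ k, (ptil (z k) / Z))
          = (ptil (z 0) / Z) * ∏ k ∈ Finset.univ.erase (0 : Fin K), (ptil (z k) / Z) :=
        (Finset.mul_prod_erase Finset.univ _ (Finset.mem_univ 0)).symm
      have hsum : (∑ s, ((q (z s) / Z) * ∏ k ∈ Finset.univ.erase s, (ptil (z k) / Z)))
          = (∑ k, rratio q ptil z k) * ∏ k, (ptil (z k) / Z) := by
        rw [Finset.sum_mul]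
        exact Finset.sum_congr rfl fun s _ => (key5 hz hZ_pos s).symm
      have hP0 : 0 ≤ ∏ k, (ptil (z k) / Z) :=
        Finset.prod_nonneg fun k _ => div_nonneg (hz k).2.le hZ_pos.le
      have hx : (0:ℝ) < (1 / (K : ℝ)) * ∑ k, rratio q ptil z k :=
        mul_pos (by positivity) hS
      have hlog := Real.log_le_sub_one_of_pos
        (x := Z * ((1 / (K : ℝ)) * ∑ k, rratio q ptil z k)) (mul_pos hZ_pos hx)
      rw [log_mul hZ_pos.ne' hx.ne'] at hlog
      have hle : log ((1 / (K : ℝ)) * ∑ k, rratio q ptil z k)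
          ≤ Z * ((1 / (K : ℝ)) * ∑ k, rratio q ptil z k) - 1 - log Z := by linarith
      calc (∏ k, (ptil (z k) / Z)) * log ((1 / (K : ℝ)) * ∑ k, rratio q ptil z k)
          ≤ (∏ k, (ptil (z k) / Z)) *
              (Z * ((1 / (K : ℝ)) * ∑ k, rratio q ptil z k) - 1 - log Z) :=
            mul_le_mul_of_nonneg_left hle hP0
        _ = Z * (1 / (K : ℝ)) *
              (∑ s, ((q (z s) / Z) * ∏ k ∈ Finset.univ.erase s, (ptil (z k) / Z)))
            - (1 + log Z) * ((ptil (z 0) / Z) * ∏ k ∈ Finset.univ.erase (0 : Fin K),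
                (ptil (z k) / Z)) := by
            rw [hsum, ← hprod]
            ring
    rw [hC2, hKL]
    linarith [hB_le]

end Stmt9
end
end

section
/- (Improvement of Coupled Reverse Multi-Sample AIS over single-sample AIS.) For (w₁,…,w_K, z) ∈ W^K × Z let ρ_s := Q(w_s,z)/r(w_s,z) and ŵ_s := ρ_s/Σ_{k=1}^K ρ_k. Then for every integer K ≥ 1: (i) ELBO_CR(K) = ELBO_CR(1) + ∫ Q_K · Σ_{s=1}^K ŵ_s·log(K·ŵ_s) d(ν^K ⊗ μ), and the correction term lies in [0, log K]; (ii) EUBO_CR(K) = EUBO_CR(1) − ∫ (P̃_K/Z*) · (1/K)·Σ_{s=1}^K log(1/(K·ŵ_s)) d(ν^K ⊗ μ), and the correction term lies in [0, ∫ (P̃₁/Z*)·log((P̃₁/Z*)/Q₁) d(ν ⊗ μ)], the KL gap of the single-sample bound. -/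
open MeasureTheory Real

noncomputable section

namespace Stmt11

variable {W Z : Type*} [MeasurableSpace W] [MeasurableSpace Z]

def PtilK (ptil : Z → ℝ) (r : W × Z → ℝ) {K : ℕ} (wz : (Fin K → W) × Z) : ℝ :=
  ptil wz.2 * ∏ k, r (wz.1 k, wz.2)

def QK (Q r : W × Z → ℝ) {K : ℕ} (wz : (Fin K → W) × Z) : ℝ :=
  (1 / (K : ℝ)) * ∑ s, Q (wz.1 s, wz.2) * ∏ k ∈ Finset.univ.erase s, r (wz.1 k, wz.2)

def wCR (Q r : W × Z → ℝ) {K : ℕ} (wz : (Fin K → W) × Z) (s : Fin K) : ℝ :=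
  (Q (wz.1 s, wz.2) / r (wz.1 s, wz.2)) / ∑ k, Q (wz.1 k, wz.2) / r (wz.1 k, wz.2)

def ELBO_CR (ν : Measure W) (μ : Measure Z) (ptil : Z → ℝ) (Q r : W × Z → ℝ)
    (K : ℕ) : ℝ :=
  ∫ wz : (Fin K → W) × Z, QK Q r wz * log (PtilK ptil r wz / QK Q r wz)
    ∂((Measure.pi fun _ : Fin K => ν).prod μ)

def EUBO_CR (ν : Measure W) (μ : Measure Z) (ptil : Z → ℝ) (Q r : W × Z → ℝ)
    (Zs : ℝ) (K : ℕ) : ℝ :=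
  ∫ wz : (Fin K → W) × Z, (PtilK ptil r wz / Zs) * log (PtilK ptil r wz / QK Q r wz)
    ∂((Measure.pi fun _ : Fin K => ν).prod μ)

lemma transfer1 (ν : Measure W) (μ : Measure Z) [SigmaFinite ν] [SigmaFinite μ]
    (g : W × Z → ℝ) :
    (∫ wz : (Fin 1 → W) × Z, g (wz.1 0, wz.2) ∂((Measure.pi fun _ : Fin 1 => ν).prod μ)
      = ∫ wz, g wz ∂(ν.prod μ)) ∧
    (Integrable (fun wz : (Fin 1 → W) × Z => g (wz.1 0, wz.2))
        ((Measure.pi fun _ : Fin 1 => ν).prod μ) ↔ Integrable g (ν.prod μ)) := by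
  have hmp : MeasurePreserving
      (⇑((MeasurableEquiv.funUnique (Fin 1) W).prodCongr (MeasurableEquiv.refl Z)))
      ((Measure.pi fun _ : Fin 1 => ν).prod μ) (ν.prod μ) :=
    (measurePreserving_funUnique ν (Fin 1)).prod (MeasurePreserving.id μ)
  have hemb := ((MeasurableEquiv.funUnique (Fin 1) W).prodCongr
    (MeasurableEquiv.refl Z)).measurableEmbedding
  exact ⟨hmp.integral_comp hemb g, hmp.integrable_comp_emb hemb⟩

omit [MeasurableSpace W] [MeasurableSpace Z] in
lemma QK_one (Q r : W × Z → ℝ) (wz : (Fin 1 → W) × Z) : QK Q r wz = Q (wz.1 0, wz.2) := by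
  simp [QK]

omit [MeasurableSpace W] [MeasurableSpace Z] in
lemma PtilK_one (ptil : Z → ℝ) (r : W × Z → ℝ) (wz : (Fin 1 → W) × Z) :
    PtilK ptil r wz = ptil wz.2 * r (wz.1 0, wz.2) := by
  simp [PtilK]

/-- a.e. positivity of a function of the second coordinate. -/
lemma ae_pos_snd {X : Type*} [MeasurableSpace X] (m : Measure X) [SigmaFinite m]
    (μ : Measure Z) [SigmaFinite μ] {ptil : Z → ℝ}
    (hptil_meas : Measurable ptil) (hptil_pos : ∀ᵐ z ∂μ, 0 < ptil z) :
    ∀ᵐ wz ∂(m.prod μ), 0 < ptil wz.2 := by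
  rw [ae_iff]
  have hN : MeasurableSet {z : Z | ¬ 0 < ptil z} :=
    (measurableSet_lt measurable_const hptil_meas).compl
  have hN0 : μ {z : Z | ¬ 0 < ptil z} = 0 := by rw [← ae_iff]; exact hptil_pos
  have h : {wz : X × Z | ¬ 0 < ptil wz.2} = Prod.snd ⁻¹' {z : Z | ¬ 0 < ptil z} := rfl
  rw [h, ← Measure.map_apply measurable_snd hN, Measure.map_snd_prod,
    Measure.smul_apply, hN0, smul_zero]

/-- Integrability and integral of `ptil(z) r(w,z)`. -/
lemma ptilr (ν : Measure W) (μ : Measure Z) [SigmaFinite ν] [SigmaFinite μ]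
    (ptil : Z → ℝ) (r : W × Z → ℝ)
    (hptil_meas : Measurable ptil) (hptil_int : Integrable ptil μ)
    (hr_meas : Measurable r) (hr_pos : ∀ᵐ wz ∂(ν.prod μ), 0 < r wz)
    (hr_norm : ∀ᵐ z ∂μ, ∫ w, r (w, z) ∂ν = 1) :
    Integrable (fun wz : W × Z => ptil wz.2 * r wz) (ν.prod μ) ∧
    ∫ wz : W × Z, ptil wz.2 * r wz ∂(ν.prod μ) = ∫ z, ptil z ∂μ := by
  have hz1 : ∀ᵐ z ∂μ, ∀ᵐ w ∂ν, 0 < r (w, z) := by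
    have hms : MeasurableSet {wz : W × Z | 0 < r wz} :=
      measurableSet_lt measurable_const hr_meas
    have h1 : ∀ᵐ x ∂(Measure.map Prod.swap (μ.prod ν)), 0 < r x := by
      rw [Measure.prod_swap]; exact hr_pos
    have h2 : ∀ᵐ zw ∂(μ.prod ν), 0 < r (Prod.swap zw) :=
      (ae_map_iff measurable_swap.aemeasurable hms).mp h1
    exact Measure.ae_ae_of_ae_prod h2
  have hz_rint : ∀ᵐ z ∂μ, Integrable (fun w => r (w, z)) ν := by
    filter_upwards [hr_norm] with z h2
    by_contra h
    rw [integral_undef h] at h2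
    exact one_ne_zero h2.symm
  have hm : Measurable fun wz : W × Z => ptil wz.2 * r wz :=
    (hptil_meas.comp measurable_snd).mul hr_meas
  have hint : Integrable (fun wz : W × Z => ptil wz.2 * r wz) (ν.prod μ) := by
    refine (integrable_prod_iff' hm.aestronglyMeasurable).mpr ⟨?_, ?_⟩
    · filter_upwards [hz_rint] with z h1
      exact h1.const_mul (ptil z)
    · have he : ∀ᵐ z ∂μ, (∫ w, ‖ptil z * r (w, z)‖ ∂ν) = |ptil z| := by
        filter_upwards [hz1, hr_norm] with z h1 h2
        have : (fun w => ‖ptil z * r (w, z)‖) = fun w => |ptil z| * |r (w, z)| := by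
          funext w; rw [Real.norm_eq_abs, abs_mul]
        rw [this, integral_const_mul]
        have : (∫ w, |r (w, z)| ∂ν) = 1 := by
          rw [← h2]
          exact integral_congr_ae (by filter_upwards [h1] with w hw; simp [le_of_lt hw])
        rw [this, mul_one]
      exact hptil_int.abs.congr (by filter_upwards [he] with z hz; rw [hz])
  refine ⟨hint, ?_⟩
  rw [integral_prod_symm _ hint]
  refine integral_congr_ae ?_
  filter_upwards [hr_norm] with z h2
  rw [integral_const_mul, h2, mul_one]


/-- Lift a null set of `ν.prod μ` along a coordinate map. -/
lemma coord_null (ν : Measure W) (μ : Measure Z) [SigmaFinite ν] [SigmaFinite μ]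
    {A : Set (W × Z)} (hA : MeasurableSet A) (hA0 : ν.prod μ A = 0)
    {K : ℕ} (k : Fin K) :
    ((Measure.pi fun _ : Fin K => ν).prod μ)
      {wz : (Fin K → W) × Z | (wz.1 k, wz.2) ∈ A} = 0 := by
  have hmeas : MeasurableSet {wz : (Fin K → W) × Z | (wz.1 k, wz.2) ∈ A} := by
    exact (((measurable_pi_apply k).comp measurable_fst).prodMk measurable_snd) hA
  rw [Measure.measure_prod_null hmeas]
  have hsec : ∀ᵐ w ∂ν, μ (Prod.mk w ⁻¹' A) = 0 := Measure.measure_ae_null_of_prod_null hA0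
  -- the set of bad w is ν-null
  have hlift : ∀ᵐ x ∂(Measure.pi fun _ : Fin K => ν), μ (Prod.mk (x k) ⁻¹' A) = 0 := by
    rw [ae_iff] at hsec ⊢
    have : {x : Fin K → W | ¬ μ (Prod.mk (x k) ⁻¹' A) = 0}
        = Function.eval k ⁻¹' {w : W | ¬ μ (Prod.mk w ⁻¹' A) = 0} := rfl
    rw [this]
    exact Measure.pi_eval_preimage_null _ hsec
  filter_upwards [hlift] with x hx
  exact hx

/-- a.e. positivity transferred to the extended space. -/
lemma ae_good (ν : Measure W) (μ : Measure Z) [SigmaFinite ν] [SigmaFinite μ]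
    (ptil : Z → ℝ) (Q r : W × Z → ℝ)
    (hptil_meas : Measurable ptil) (hptil_pos : ∀ᵐ z ∂μ, 0 < ptil z)
    (hr_meas : Measurable r) (hr_pos : ∀ᵐ wz ∂(ν.prod μ), 0 < r wz)
    (hQ_meas : Measurable Q) (hQ_pos : ∀ᵐ wz ∂(ν.prod μ), 0 < Q wz)
    (K : ℕ) :
    ∀ᵐ wz ∂((Measure.pi fun _ : Fin K => ν).prod μ),
      0 < ptil wz.2 ∧ (∀ k, 0 < r (wz.1 k, wz.2)) ∧ (∀ k, 0 < Q (wz.1 k, wz.2)) := by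
  set P := (Measure.pi fun _ : Fin K => ν).prod μ
  have hp : ∀ᵐ wz ∂P, 0 < ptil wz.2 := by
    rw [ae_iff]
    have hN : MeasurableSet {z : Z | ¬ 0 < ptil z} :=
      (measurableSet_lt measurable_const hptil_meas).compl
    have hN0 : μ {z : Z | ¬ 0 < ptil z} = 0 := by rw [← ae_iff]; exact hptil_pos
    have : {wz : (Fin K → W) × Z | ¬ 0 < ptil wz.2}
        = Prod.snd ⁻¹' {z : Z | ¬ 0 < ptil z} := rfl
    rw [this, ← Measure.map_apply measurable_snd hN, Measure.map_snd_prod,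
      Measure.smul_apply, hN0, smul_zero]
  have hr' : ∀ᵐ wz ∂P, ∀ k, 0 < r (wz.1 k, wz.2) := by
    rw [ae_all_iff]
    intro k
    rw [ae_iff]
    have hA : MeasurableSet {wz : W × Z | ¬ 0 < r wz} :=
      (measurableSet_lt measurable_const hr_meas).compl
    have hA0 : ν.prod μ {wz : W × Z | ¬ 0 < r wz} = 0 := by rw [← ae_iff]; exact hr_pos
    exact coord_null ν μ hA hA0 k
  have hq' : ∀ᵐ wz ∂P, ∀ k, 0 < Q (wz.1 k, wz.2) := by
    rw [ae_all_iff]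
    intro k
    rw [ae_iff]
    have hA : MeasurableSet {wz : W × Z | ¬ 0 < Q wz} :=
      (measurableSet_lt measurable_const hQ_meas).compl
    have hA0 : ν.prod μ {wz : W × Z | ¬ 0 < Q wz} = 0 := by rw [← ae_iff]; exact hQ_pos
    exact coord_null ν μ hA hA0 k
  filter_upwards [hp, hr', hq'] with wz h1 h2 h3
  exact ⟨h1, h2, h3⟩


/-- Key marginalization lemma. -/
lemma key (ν : Measure W) (μ : Measure Z) [SigmaFinite ν] [SigmaFinite μ]
    (r f : W × Z → ℝ) (hr_meas : Measurable r)
    (hr_pos : ∀ᵐ wz ∂(ν.prod μ), 0 < r wz)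
    (hr_norm : ∀ᵐ z ∂μ, ∫ w, r (w, z) ∂ν = 1)
    (hf_meas : Measurable f) (hf_int : Integrable f (ν.prod μ))
    {K : ℕ} (s : Fin K) :
    Integrable (fun wz : (Fin K → W) × Z =>
        (∏ k ∈ Finset.univ.erase s, r (wz.1 k, wz.2)) * f (wz.1 s, wz.2))
      ((Measure.pi fun _ : Fin K => ν).prod μ) ∧
    ∫ wz : (Fin K → W) × Z,
        (∏ k ∈ Finset.univ.erase s, r (wz.1 k, wz.2)) * f (wz.1 s, wz.2)
      ∂((Measure.pi fun _ : Fin K => ν).prod μ) = ∫ wz, f wz ∂(ν.prod μ) := by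
  letI : MeasureSpace W := ⟨ν⟩
  haveI : SigmaFinite (volume : Measure W) := ‹SigmaFinite ν›
  have hvol : (Measure.pi fun _ : Fin K => ν) = (volume : Measure (Fin K → W)) := rfl
  -- per-z facts
  have hz1 : ∀ᵐ z ∂μ, ∀ᵐ w ∂ν, 0 < r (w, z) := by
    have hms : MeasurableSet {wz : W × Z | 0 < r wz} :=
      measurableSet_lt measurable_const hr_meas
    have h1 : ∀ᵐ x ∂(Measure.map Prod.swap (μ.prod ν)), 0 < r x := by
      rw [Measure.prod_swap]; exact hr_pos
    have h2 : ∀ᵐ zw ∂(μ.prod ν), 0 < r (Prod.swap zw) :=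
      (ae_map_iff measurable_swap.aemeasurable hms).mp h1
    exact Measure.ae_ae_of_ae_prod h2
  have hz_rint : ∀ᵐ z ∂μ, Integrable (fun w => r (w, z)) ν := by
    filter_upwards [hr_norm] with z h2
    by_contra h
    rw [integral_undef h] at h2
    exact one_ne_zero h2.symm
  have hz_fint : ∀ᵐ z ∂μ, Integrable (fun w => f (w, z)) ν := hf_int.prod_left_ae
  have hz_fnorm : Integrable (fun z => ∫ w, ‖f (w, z)‖ ∂ν) μ :=
    ((integrable_prod_iff' hf_int.aestronglyMeasurable).mp hf_int).2
  -- pointwise product form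
  have hprod_eq : ∀ (z : Z) (x : Fin K → W),
      (∏ k ∈ Finset.univ.erase s, r (x k, z)) * f (x s, z)
        = ∏ k, (fun w => if k = s then f (w, z) else r (w, z)) (x k) := by
    intro z x
    rw [← Finset.mul_prod_erase Finset.univ
        (fun k => (fun w => if k = s then f (w, z) else r (w, z)) (x k)) (Finset.mem_univ s)]
    simp only [if_pos rfl]
    rw [mul_comm]
    congr 1
    exact Finset.prod_congr rfl fun k hk => by
      simp [Finset.ne_of_mem_erase hk]
  have habs_eq : ∀ (z : Z) (x : Fin K → W),
      ‖(∏ k ∈ Finset.univ.erase s, r (x k, z)) * f (x s, z)‖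
        = ∏ k, (fun w => if k = s then ‖f (w, z)‖ else ‖r (w, z)‖) (x k) := by
    intro z x
    rw [hprod_eq z x, Real.norm_eq_abs, Finset.abs_prod]
    exact Finset.prod_congr rfl fun k _ => by
      by_cases h : k = s <;> simp [h, Real.norm_eq_abs]
  -- measurability
  have hcoord : ∀ k : Fin K, Measurable fun wz : (Fin K → W) × Z => (wz.1 k, wz.2) :=
    fun k => ((measurable_pi_apply k).comp measurable_fst).prodMk measurable_snd
  have hF_meas : Measurable fun wz : (Fin K → W) × Z =>
      (∏ k ∈ Finset.univ.erase s, r (wz.1 k, wz.2)) * f (wz.1 s, wz.2) :=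
    (Finset.measurable_prod _ fun k _ => hr_meas.comp (hcoord k)).mul (hf_meas.comp (hcoord s))
  -- integrability of inner slices
  have hz_int : ∀ᵐ z ∂μ, Integrable
      (fun x : Fin K → W => (∏ k ∈ Finset.univ.erase s, r (x k, z)) * f (x s, z))
      (Measure.pi fun _ : Fin K => ν) := by
    filter_upwards [hz_rint, hz_fint] with z h1 h2
    have h3 : Integrable
        (fun x : Fin K → W => ∏ k, (fun w => if k = s then f (w, z) else r (w, z)) (x k))
        (volume : Measure (Fin K → W)) := by
      apply Integrable.fintype_prod (f := fun k w => if k = s then f (w, z) else r (w, z))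
      intro k
      by_cases h : k = s <;> simp [h] <;> assumption
    rw [hvol]
    exact h3.congr (ae_of_all _ fun x => (hprod_eq z x).symm)
  -- norm slice computation
  have hnorm_eq : ∀ᵐ z ∂μ,
      (∫ x : Fin K → W, ‖(∏ k ∈ Finset.univ.erase s, r (x k, z)) * f (x s, z)‖
          ∂(Measure.pi fun _ : Fin K => ν))
        = ∫ w, ‖f (w, z)‖ ∂ν := by
    filter_upwards [hz1, hr_norm] with z h1 h3
    have e1 : (∫ x : Fin K → W, ‖(∏ k ∈ Finset.univ.erase s, r (x k, z)) * f (x s, z)‖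
          ∂(Measure.pi fun _ : Fin K => ν))
        = ∫ x : Fin K → W, ∏ k, (fun w => if k = s then ‖f (w, z)‖ else ‖r (w, z)‖) (x k) := by
      rw [hvol]
      exact integral_congr_ae (ae_of_all _ fun x => habs_eq z x)
    rw [e1]
    have e2 := MeasureTheory.integral_fintype_prod_volume_eq_prod (𝕜 := ℝ) (ι := Fin K)
      (fun k (w : W) => if k = s then ‖f (w, z)‖ else ‖r (w, z)‖)
    rw [e2]
    have hr1 : (∫ w, ‖r (w, z)‖ ∂ν) = 1 := by
      rw [← h3]
      exact integral_congr_ae (by filter_upwards [h1] with w hw; simp [le_of_lt hw])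
    rw [← Finset.mul_prod_erase Finset.univ _ (Finset.mem_univ s)]
    simp only [if_pos rfl]
    have : ∀ k ∈ Finset.univ.erase s,
        (∫ w, if k = s then ‖f (w, z)‖ else ‖r (w, z)‖ ∂(volume : Measure W)) = 1 := by
      intro k hk
      simp only [Finset.ne_of_mem_erase hk, if_false]
      exact hr1
    rw [Finset.prod_congr rfl this]
    simp only [Finset.prod_const_one, mul_one]
    rfl
  -- integrability on the product space
  have hF_int : Integrable (fun wz : (Fin K → W) × Z =>
      (∏ k ∈ Finset.univ.erase s, r (wz.1 k, wz.2)) * f (wz.1 s, wz.2))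
      ((Measure.pi fun _ : Fin K => ν).prod μ) := by
    refine (integrable_prod_iff' hF_meas.aestronglyMeasurable).mpr ⟨hz_int, ?_⟩
    exact hz_fnorm.congr (by filter_upwards [hnorm_eq] with z hz; rw [hz])
  refine ⟨hF_int, ?_⟩
  rw [integral_prod_symm _ hF_int, integral_prod_symm _ hf_int]
  apply integral_congr_ae
  filter_upwards [hr_norm] with z h3
  have e1 : (∫ x : Fin K → W, (∏ k ∈ Finset.univ.erase s, r (x k, z)) * f (x s, z)
        ∂(Measure.pi fun _ : Fin K => ν))
      = ∫ x : Fin K → W, ∏ k, (fun w => if k = s then f (w, z) else r (w, z)) (x k) := by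
    rw [hvol]
    exact integral_congr_ae (ae_of_all _ fun x => hprod_eq z x)
  rw [e1, MeasureTheory.integral_fintype_prod_volume_eq_prod (𝕜 := ℝ) (ι := Fin K)
    (fun k (w : W) => if k = s then f (w, z) else r (w, z)),
    ← Finset.mul_prod_erase Finset.univ _ (Finset.mem_univ s)]
  simp only [if_pos rfl]
  have : ∀ k ∈ Finset.univ.erase s,
      (∫ w, if k = s then f (w, z) else r (w, z) ∂(volume : Measure W)) = 1 := by
    intro k hk
    simp only [Finset.ne_of_mem_erase hk, if_false]
    exact h3
  rw [Finset.prod_congr rfl this]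
  simp only [Finset.prod_const_one, mul_one]
  rfl

lemma alg1 {K : ℕ} (hK : 1 ≤ K) (ρ : Fin K → ℝ) (pr p : ℝ)
    (hρ : ∀ k, 0 < ρ k) (hpr : 0 < pr) (hp : 0 < p) :
    (1/(K:ℝ) * ((∑ k, ρ k) * pr)) * (log K + log p - log (∑ k, ρ k))
      = (1/(K:ℝ) * ((∑ k, ρ k) * pr)) *
          (∑ s, (ρ s / ∑ k, ρ k) * (log K + log (ρ s) - log (∑ k, ρ k)))
        + (1/(K:ℝ)) * ∑ s, (ρ s * pr) * (log p - log (ρ s)) := by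
  haveI : Nonempty (Fin K) := ⟨⟨0, hK⟩⟩
  have hS : 0 < ∑ k, ρ k := Finset.sum_pos (fun k _ => hρ k) Finset.univ_nonempty
  have h1 : (1/(K:ℝ) * ((∑ k, ρ k) * pr)) *
      (∑ s, (ρ s / ∑ k, ρ k) * (log K + log (ρ s) - log (∑ k, ρ k)))
      = (1/(K:ℝ)) * ∑ s, (ρ s * pr) * (log K + log (ρ s) - log (∑ k, ρ k)) := by
    rw [Finset.mul_sum, Finset.mul_sum]
    refine Finset.sum_congr rfl fun s _ => ?_
    have hSne : (∑ k, ρ k) ≠ 0 := ne_of_gt hS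
    field_simp
  rw [h1, ← mul_add, ← Finset.sum_add_distrib]
  have h2 : ∑ s, ((ρ s * pr) * (log K + log (ρ s) - log (∑ k, ρ k))
        + (ρ s * pr) * (log p - log (ρ s)))
      = ∑ s, (ρ s * pr) * (log K + log p - log (∑ k, ρ k)) :=
    Finset.sum_congr rfl fun s _ => by ring
  have h3 : ∑ s, (ρ s * pr) * (log K + log p - log (∑ k, ρ k))
      = (∑ s, ρ s) * (pr * (log K + log p - log (∑ k, ρ k))) := by
    rw [Finset.sum_mul]
    exact Finset.sum_congr rfl fun s _ => by ring
  rw [h2, h3]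
  ring

lemma alg2 {K : ℕ} (hK : 1 ≤ K) (P L A B : ℝ) (l : Fin K → ℝ) :
    P * (L + A - B) = -(P * ((1/(K:ℝ)) * ∑ s : Fin K, -(L + l s - B)))
      + (1/(K:ℝ)) * ∑ s : Fin K, P * (A - l s) := by
  have hKne : (K:ℝ) ≠ 0 := Nat.cast_ne_zero.mpr (by omega)
  have h1 : ∑ s : Fin K, -(L + l s - B) = (K:ℝ) * (B - L) - ∑ s, l s := by
    rw [show (fun s : Fin K => -(L + l s - B)) = fun s => (B - L) - l s from funext fun s => by ring,
      Finset.sum_sub_distrib, Finset.sum_const, Finset.card_univ, Fintype.card_fin, nsmul_eq_mul]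
  have h2 : ∑ s : Fin K, P * (A - l s) = (K:ℝ) * (P * A) - P * ∑ s, l s := by
    rw [show (fun s : Fin K => P * (A - l s)) = fun s => P * A - P * l s from funext fun s => by ring,
      Finset.sum_sub_distrib, Finset.sum_const, Finset.card_univ, Fintype.card_fin, nsmul_eq_mul,
      ← Finset.mul_sum]
  rw [h1, h2]
  field_simp
  ring

lemma kl_term {p q : ℝ} (hp : 0 < p) (hq : 0 < q) : p - q ≤ p * log (p / q) := by
  have h1 : log (q / p) ≤ q / p - 1 := Real.log_le_sub_one_of_pos (div_pos hq hp)
  have h2 : log (p / q) = -log (q / p) := by rw [← Real.log_inv, inv_div]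
  have h3 : 1 - q / p ≤ log (p / q) := by rw [h2]; linarith
  have h4 : p * (1 - q / p) ≤ p * log (p / q) :=
    mul_le_mul_of_nonneg_left h3 (le_of_lt hp)
  have h5 : p * (1 - q / p) = p - q := by field_simp
  linarith

section pointwise

variable {ptil : Z → ℝ} {Q r : W × Z → ℝ} {K : ℕ} {wz : (Fin K → W) × Z}

omit [MeasurableSpace W] [MeasurableSpace Z]

lemma basic_facts (hK : 1 ≤ K) (hp : 0 < ptil wz.2)
    (hr : ∀ k, 0 < r (wz.1 k, wz.2)) (hq : ∀ k, 0 < Q (wz.1 k, wz.2)) :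
    (∀ s, Q (wz.1 s, wz.2) * ∏ k ∈ Finset.univ.erase s, r (wz.1 k, wz.2)
        = (Q (wz.1 s, wz.2) / r (wz.1 s, wz.2)) * ∏ k, r (wz.1 k, wz.2)) ∧
    QK Q r wz = 1/(K:ℝ) * ((∑ k, Q (wz.1 k, wz.2) / r (wz.1 k, wz.2)) * ∏ k, r (wz.1 k, wz.2)) ∧
    0 < QK Q r wz ∧ 0 < PtilK ptil r wz := by
  haveI : Nonempty (Fin K) := ⟨⟨0, hK⟩⟩
  have hρpos : ∀ k, 0 < Q (wz.1 k, wz.2) / r (wz.1 k, wz.2) := fun k => div_pos (hq k) (hr k)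
  have hSpos : 0 < ∑ k, Q (wz.1 k, wz.2) / r (wz.1 k, wz.2) :=
    Finset.sum_pos (fun k _ => hρpos k) Finset.univ_nonempty
  have hprpos : 0 < ∏ k, r (wz.1 k, wz.2) := Finset.prod_pos fun k _ => hr k
  have hKpos : (0:ℝ) < K := by exact_mod_cast hK
  have hterm : ∀ s, Q (wz.1 s, wz.2) * ∏ k ∈ Finset.univ.erase s, r (wz.1 k, wz.2)
      = (Q (wz.1 s, wz.2) / r (wz.1 s, wz.2)) * ∏ k, r (wz.1 k, wz.2) := by
    intro s
    rw [← Finset.mul_prod_erase Finset.univ _ (Finset.mem_univ s), ← mul_assoc,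
      div_mul_cancel₀ _ (ne_of_gt (hr s))]
  have hQKeq : QK Q r wz
      = 1/(K:ℝ) * ((∑ k, Q (wz.1 k, wz.2) / r (wz.1 k, wz.2)) * ∏ k, r (wz.1 k, wz.2)) := by
    rw [QK, Finset.sum_congr rfl fun s _ => hterm s, ← Finset.sum_mul]
  refine ⟨hterm, hQKeq, ?_, ?_⟩
  · rw [hQKeq]; positivity
  · rw [PtilK]; positivity

lemma pointwise_elbo (hK : 1 ≤ K) (hp : 0 < ptil wz.2)
    (hr : ∀ k, 0 < r (wz.1 k, wz.2)) (hq : ∀ k, 0 < Q (wz.1 k, wz.2)) :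
    QK Q r wz * log (PtilK ptil r wz / QK Q r wz)
      = QK Q r wz * (∑ s, wCR Q r wz s * log ((K : ℝ) * wCR Q r wz s))
        + (1 / (K : ℝ)) * ∑ s, (∏ k ∈ Finset.univ.erase s, r (wz.1 k, wz.2)) *
            (Q (wz.1 s, wz.2) * log (ptil wz.2 * r (wz.1 s, wz.2) / Q (wz.1 s, wz.2))) := by
  haveI : Nonempty (Fin K) := ⟨⟨0, hK⟩⟩
  obtain ⟨hterm, hQKeq, hQKpos, hPpos⟩ := basic_facts (ptil := ptil) hK hp hr hq
  have hρpos : ∀ k, 0 < Q (wz.1 k, wz.2) / r (wz.1 k, wz.2) := fun k => div_pos (hq k) (hr k)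
  have hSpos : 0 < ∑ k, Q (wz.1 k, wz.2) / r (wz.1 k, wz.2) :=
    Finset.sum_pos (fun k _ => hρpos k) Finset.univ_nonempty
  have hprpos : 0 < ∏ k, r (wz.1 k, wz.2) := Finset.prod_pos fun k _ => hr k
  have hKpos : (0:ℝ) < K := by exact_mod_cast hK
  have hlogratio : log (PtilK ptil r wz / QK Q r wz)
      = log K + log (ptil wz.2) - log (∑ k, Q (wz.1 k, wz.2) / r (wz.1 k, wz.2)) := by
    have h1 : PtilK ptil r wz / QK Q r wz
        = (K:ℝ) * ptil wz.2 / (∑ k, Q (wz.1 k, wz.2) / r (wz.1 k, wz.2)) := by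
      rw [PtilK, hQKeq]
      field_simp
    rw [h1, log_div (by positivity) (ne_of_gt hSpos),
      log_mul (ne_of_gt hKpos) (ne_of_gt hp)]
  have hsum1 : (∑ s, wCR Q r wz s * log ((K : ℝ) * wCR Q r wz s))
      = ∑ s, (Q (wz.1 s, wz.2) / r (wz.1 s, wz.2) / ∑ k, Q (wz.1 k, wz.2) / r (wz.1 k, wz.2)) *
          (log K + log (Q (wz.1 s, wz.2) / r (wz.1 s, wz.2))
            - log (∑ k, Q (wz.1 k, wz.2) / r (wz.1 k, wz.2))) := by
    refine Finset.sum_congr rfl fun s _ => ?_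
    rw [wCR, log_mul (ne_of_gt hKpos) (ne_of_gt (div_pos (hρpos s) hSpos)),
      log_div (ne_of_gt (hρpos s)) (ne_of_gt hSpos)]
    ring
  have hsum2 : (∑ s, (∏ k ∈ Finset.univ.erase s, r (wz.1 k, wz.2)) *
        (Q (wz.1 s, wz.2) * log (ptil wz.2 * r (wz.1 s, wz.2) / Q (wz.1 s, wz.2))))
      = ∑ s, ((Q (wz.1 s, wz.2) / r (wz.1 s, wz.2)) * ∏ k, r (wz.1 k, wz.2)) *
          (log (ptil wz.2) - log (Q (wz.1 s, wz.2) / r (wz.1 s, wz.2))) := by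
    refine Finset.sum_congr rfl fun s _ => ?_
    have hlf : log (ptil wz.2 * r (wz.1 s, wz.2) / Q (wz.1 s, wz.2))
        = log (ptil wz.2) - log (Q (wz.1 s, wz.2) / r (wz.1 s, wz.2)) := by
      rw [← div_div_eq_mul_div, log_div (ne_of_gt hp) (ne_of_gt (hρpos s))]
    rw [hlf, ← hterm s]
    ring
  rw [hlogratio, hsum1, hsum2, hQKeq]
  exact alg1 hK _ _ _ hρpos hprpos hp

lemma sum_wCR (hK : 1 ≤ K)
    (hr : ∀ k, 0 < r (wz.1 k, wz.2)) (hq : ∀ k, 0 < Q (wz.1 k, wz.2)) :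
    ∑ s, wCR Q r wz s = 1 := by
  haveI : Nonempty (Fin K) := ⟨⟨0, hK⟩⟩
  have hSpos : 0 < ∑ k, Q (wz.1 k, wz.2) / r (wz.1 k, wz.2) :=
    Finset.sum_pos (fun k _ => div_pos (hq k) (hr k)) Finset.univ_nonempty
  rw [show (fun s => wCR Q r wz s) = fun s => (Q (wz.1 s, wz.2) / r (wz.1 s, wz.2)) /
      ∑ k, Q (wz.1 k, wz.2) / r (wz.1 k, wz.2) from rfl, ← Finset.sum_div,
    div_self (ne_of_gt hSpos)]

lemma wCR_pos (hK : 1 ≤ K)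
    (hr : ∀ k, 0 < r (wz.1 k, wz.2)) (hq : ∀ k, 0 < Q (wz.1 k, wz.2)) (s : Fin K) :
    0 < wCR Q r wz s := by
  haveI : Nonempty (Fin K) := ⟨⟨0, hK⟩⟩
  have hSpos : 0 < ∑ k, Q (wz.1 k, wz.2) / r (wz.1 k, wz.2) :=
    Finset.sum_pos (fun k _ => div_pos (hq k) (hr k)) Finset.univ_nonempty
  exact div_pos (div_pos (hq s) (hr s)) hSpos

lemma B1 (hK : 1 ≤ K)
    (hr : ∀ k, 0 < r (wz.1 k, wz.2)) (hq : ∀ k, 0 < Q (wz.1 k, wz.2)) :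
    0 ≤ ∑ s, wCR Q r wz s * log ((K : ℝ) * wCR Q r wz s) := by
  have hKpos : (0:ℝ) < K := by exact_mod_cast hK
  have hw := wCR_pos (wz := wz) hK hr hq
  have h0 : ∑ s, (wCR Q r wz s - 1/(K:ℝ)) = 0 := by
    rw [Finset.sum_sub_distrib, sum_wCR hK hr hq, Finset.sum_const, Finset.card_univ,
      Fintype.card_fin, nsmul_eq_mul]
    field_simp
    norm_num
  rw [← h0]
  refine Finset.sum_le_sum fun s _ => ?_
  have hx : 0 < (K:ℝ) * wCR Q r wz s := mul_pos hKpos (hw s)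
  have hlog := Real.log_le_sub_one_of_pos (show (0:ℝ) < ((K:ℝ) * wCR Q r wz s)⁻¹ from inv_pos.mpr hx)
  rw [Real.log_inv] at hlog
  have h2 : wCR Q r wz s * (1 - ((K:ℝ) * wCR Q r wz s)⁻¹) ≤
      wCR Q r wz s * log ((K:ℝ) * wCR Q r wz s) :=
    mul_le_mul_of_nonneg_left (by linarith) (le_of_lt (hw s))
  have h3 : wCR Q r wz s * (1 - ((K:ℝ) * wCR Q r wz s)⁻¹) = wCR Q r wz s - 1/(K:ℝ) := by
    rw [mul_sub, mul_one, mul_inv, ← mul_assoc, mul_comm (wCR Q r wz s) (K:ℝ)⁻¹, mul_assoc,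
      mul_inv_cancel₀ (hw s).ne', mul_one, one_div]
  linarith

lemma B2 (hK : 1 ≤ K)
    (hr : ∀ k, 0 < r (wz.1 k, wz.2)) (hq : ∀ k, 0 < Q (wz.1 k, wz.2)) :
    ∑ s, wCR Q r wz s * log ((K : ℝ) * wCR Q r wz s) ≤ log K := by
  haveI : Nonempty (Fin K) := ⟨⟨0, hK⟩⟩
  have hKpos : (0:ℝ) < K := by exact_mod_cast hK
  have hw := wCR_pos (wz := wz) hK hr hq
  have hSpos : 0 < ∑ k, Q (wz.1 k, wz.2) / r (wz.1 k, wz.2) :=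
    Finset.sum_pos (fun k _ => div_pos (hq k) (hr k)) Finset.univ_nonempty
  have hw1 : ∀ s, wCR Q r wz s ≤ 1 := by
    intro s
    rw [wCR, div_le_one hSpos]
    exact Finset.single_le_sum (fun k _ => le_of_lt (div_pos (hq k) (hr k))) (Finset.mem_univ s)
  calc ∑ s, wCR Q r wz s * log ((K : ℝ) * wCR Q r wz s)
      ≤ ∑ s, wCR Q r wz s * log (K : ℝ) := by
        refine Finset.sum_le_sum fun s _ => ?_
        refine mul_le_mul_of_nonneg_left ?_ (le_of_lt (hw s))
        refine Real.log_le_log (mul_pos hKpos (hw s)) ?_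
        calc (K:ℝ) * wCR Q r wz s ≤ (K:ℝ) * 1 :=
              mul_le_mul_of_nonneg_left (hw1 s) (le_of_lt hKpos)
          _ = (K:ℝ) := mul_one _
    _ = log K := by rw [← Finset.sum_mul, sum_wCR hK hr hq, one_mul]

lemma B3 (hK : 1 ≤ K)
    (hr : ∀ k, 0 < r (wz.1 k, wz.2)) (hq : ∀ k, 0 < Q (wz.1 k, wz.2)) :
    0 ≤ ∑ s, log (1 / ((K : ℝ) * wCR Q r wz s)) := by
  have hKpos : (0:ℝ) < K := by exact_mod_cast hK
  have hw := wCR_pos (wz := wz) hK hr hq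
  have h0 : ∑ s, (1 - (K:ℝ) * wCR Q r wz s) = 0 := by
    rw [Finset.sum_sub_distrib, ← Finset.mul_sum, sum_wCR hK hr hq, Finset.sum_const,
      Finset.card_univ, Fintype.card_fin, nsmul_eq_mul]
    ring
  rw [← h0]
  refine Finset.sum_le_sum fun s _ => ?_
  have hx : 0 < (K:ℝ) * wCR Q r wz s := mul_pos hKpos (hw s)
  have hlog := Real.log_le_sub_one_of_pos hx
  rw [one_div, Real.log_inv]
  linarith


lemma log_div_Zs {a q Zs : ℝ} (ha : 0 < a) (hq : 0 < q) (hZ : 0 < Zs) :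
    (a / Zs) * log ((a / Zs) / q) = (a / Zs) * log (a / q) - (a / Zs) * log Zs := by
  have h : (a / Zs) / q = (a / q) / Zs := by ring
  rw [h, log_div (ne_of_gt (div_pos ha hq)) (ne_of_gt hZ)]
  ring

lemma pointwise_eubo (hK : 1 ≤ K) {Zs : ℝ} (hZs : 0 < Zs) (hp : 0 < ptil wz.2)
    (hr : ∀ k, 0 < r (wz.1 k, wz.2)) (hq : ∀ k, 0 < Q (wz.1 k, wz.2)) :
    (PtilK ptil r wz / Zs) * log (PtilK ptil r wz / QK Q r wz)
      = -((PtilK ptil r wz / Zs) *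
            ((1 / (K : ℝ)) * ∑ s, log (1 / ((K : ℝ) * wCR Q r wz s))))
        + (1 / (K : ℝ)) * ∑ s, (∏ k ∈ Finset.univ.erase s, r (wz.1 k, wz.2)) *
            ((ptil wz.2 * r (wz.1 s, wz.2) / Zs) *
              log (ptil wz.2 * r (wz.1 s, wz.2) / Q (wz.1 s, wz.2))) := by
  haveI : Nonempty (Fin K) := ⟨⟨0, hK⟩⟩
  obtain ⟨hterm, hQKeq, hQKpos, hPpos⟩ := basic_facts (ptil := ptil) hK hp hr hq
  have hρpos : ∀ k, 0 < Q (wz.1 k, wz.2) / r (wz.1 k, wz.2) := fun k => div_pos (hq k) (hr k)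
  have hSpos : 0 < ∑ k, Q (wz.1 k, wz.2) / r (wz.1 k, wz.2) :=
    Finset.sum_pos (fun k _ => hρpos k) Finset.univ_nonempty
  have hprpos : 0 < ∏ k, r (wz.1 k, wz.2) := Finset.prod_pos fun k _ => hr k
  have hKpos : (0:ℝ) < K := by exact_mod_cast hK
  have hlogratio : log (PtilK ptil r wz / QK Q r wz)
      = log K + log (ptil wz.2) - log (∑ k, Q (wz.1 k, wz.2) / r (wz.1 k, wz.2)) := by
    have h1 : PtilK ptil r wz / QK Q r wz
        = (K:ℝ) * ptil wz.2 / (∑ k, Q (wz.1 k, wz.2) / r (wz.1 k, wz.2)) := by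
      rw [PtilK, hQKeq]
      field_simp
    rw [h1, log_div (by positivity) (ne_of_gt hSpos),
      log_mul (ne_of_gt hKpos) (ne_of_gt hp)]
  have hsum1 : (∑ s, log (1 / ((K : ℝ) * wCR Q r wz s)))
      = ∑ s : Fin K, -(log K + log (Q (wz.1 s, wz.2) / r (wz.1 s, wz.2))
          - log (∑ k, Q (wz.1 k, wz.2) / r (wz.1 k, wz.2))) := by
    refine Finset.sum_congr rfl fun s _ => ?_
    rw [one_div, Real.log_inv, wCR,
      log_mul (ne_of_gt hKpos) (ne_of_gt (div_pos (hρpos s) hSpos)),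
      log_div (ne_of_gt (hρpos s)) (ne_of_gt hSpos)]
    ring
  have hsum2 : (∑ s, (∏ k ∈ Finset.univ.erase s, r (wz.1 k, wz.2)) *
        ((ptil wz.2 * r (wz.1 s, wz.2) / Zs) *
          log (ptil wz.2 * r (wz.1 s, wz.2) / Q (wz.1 s, wz.2))))
      = ∑ s, (PtilK ptil r wz / Zs) *
          (log (ptil wz.2) - log (Q (wz.1 s, wz.2) / r (wz.1 s, wz.2))) := by
    refine Finset.sum_congr rfl fun s _ => ?_
    have hlf : log (ptil wz.2 * r (wz.1 s, wz.2) / Q (wz.1 s, wz.2))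
        = log (ptil wz.2) - log (Q (wz.1 s, wz.2) / r (wz.1 s, wz.2)) := by
      rw [← div_div_eq_mul_div, log_div (ne_of_gt hp) (ne_of_gt (hρpos s))]
    rw [hlf, PtilK, ← Finset.mul_prod_erase Finset.univ
      (fun k => r (wz.1 k, wz.2)) (Finset.mem_univ s)]
    ring
  rw [hlogratio, hsum1, hsum2]
  exact alg2 hK (PtilK ptil r wz / Zs) (log K) (log (ptil wz.2))
    (log (∑ k, Q (wz.1 k, wz.2) / r (wz.1 k, wz.2)))
    (fun s => log (Q (wz.1 s, wz.2) / r (wz.1 s, wz.2)))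

end pointwise
/-- Improvement of Coupled Reverse Multi-Sample AIS over single-sample AIS. -/
theorem cr_ais_improvement
    (ν : Measure W) (μ : Measure Z) [SigmaFinite ν] [SigmaFinite μ]
    (ptil : Z → ℝ) (Q r : W × Z → ℝ)
    (hptil_meas : Measurable ptil) (hptil_pos : ∀ᵐ z ∂μ, 0 < ptil z)
    (hptil_int : Integrable ptil μ)
    (Zs : ℝ) (hZs : Zs = ∫ z, ptil z ∂μ) (hZs_pos : 0 < Zs)
    (hr_meas : Measurable r) (hr_pos : ∀ᵐ wz ∂(ν.prod μ), 0 < r wz)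
    (hr_norm : ∀ᵐ z ∂μ, ∫ w, r (w, z) ∂ν = 1)
    (hQ_meas : Measurable Q) (hQ_pos : ∀ᵐ wz ∂(ν.prod μ), 0 < Q wz)
    (hQ_int : Integrable Q (ν.prod μ))
    (hQ_norm : ∫ wz, Q wz ∂(ν.prod μ) = 1)
    (K : ℕ) (hK : 1 ≤ K)
    (h_int_elboK : Integrable
      (fun wz : (Fin K → W) × Z => QK Q r wz * log (PtilK ptil r wz / QK Q r wz))
      ((Measure.pi fun _ : Fin K => ν).prod μ))
    (h_int_euboK : Integrable
      (fun wz : (Fin K → W) × Z =>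
        (PtilK ptil r wz / Zs) * log (PtilK ptil r wz / QK Q r wz))
      ((Measure.pi fun _ : Fin K => ν).prod μ))
    (h_int_elbo1 : Integrable
      (fun wz : (Fin 1 → W) × Z => QK Q r wz * log (PtilK ptil r wz / QK Q r wz))
      ((Measure.pi fun _ : Fin 1 => ν).prod μ))
    (h_int_eubo1 : Integrable
      (fun wz : (Fin 1 → W) × Z =>
        (PtilK ptil r wz / Zs) * log (PtilK ptil r wz / QK Q r wz))
      ((Measure.pi fun _ : Fin 1 => ν).prod μ))
    (h_int_corr1 : Integrable
      (fun wz : (Fin K → W) × Z =>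
        QK Q r wz * ∑ s, wCR Q r wz s * log ((K : ℝ) * wCR Q r wz s))
      ((Measure.pi fun _ : Fin K => ν).prod μ))
    (h_int_corr2 : Integrable
      (fun wz : (Fin K → W) × Z =>
        (PtilK ptil r wz / Zs) *
          ((1 / (K : ℝ)) * ∑ s, log (1 / ((K : ℝ) * wCR Q r wz s))))
      ((Measure.pi fun _ : Fin K => ν).prod μ))
    (h_int_gap1 : Integrable
      (fun wz : (Fin 1 → W) × Z =>
        (PtilK ptil r wz / Zs) * log ((PtilK ptil r wz / Zs) / QK Q r wz))
      ((Measure.pi fun _ : Fin 1 => ν).prod μ)) :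
    (ELBO_CR ν μ ptil Q r K
        = ELBO_CR ν μ ptil Q r 1
          + ∫ wz : (Fin K → W) × Z,
              QK Q r wz * ∑ s, wCR Q r wz s * log ((K : ℝ) * wCR Q r wz s)
              ∂((Measure.pi fun _ : Fin K => ν).prod μ) ∧
      0 ≤ ∫ wz : (Fin K → W) × Z,
            QK Q r wz * ∑ s, wCR Q r wz s * log ((K : ℝ) * wCR Q r wz s)
            ∂((Measure.pi fun _ : Fin K => ν).prod μ) ∧
      (∫ wz : (Fin K → W) × Z,
          QK Q r wz * ∑ s, wCR Q r wz s * log ((K : ℝ) * wCR Q r wz s)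
          ∂((Measure.pi fun _ : Fin K => ν).prod μ)) ≤ log K) ∧
    (EUBO_CR ν μ ptil Q r Zs K
        = EUBO_CR ν μ ptil Q r Zs 1
          - ∫ wz : (Fin K → W) × Z,
              (PtilK ptil r wz / Zs) *
                ((1 / (K : ℝ)) * ∑ s, log (1 / ((K : ℝ) * wCR Q r wz s)))
              ∂((Measure.pi fun _ : Fin K => ν).prod μ) ∧
      0 ≤ ∫ wz : (Fin K → W) × Z,
            (PtilK ptil r wz / Zs) *
              ((1 / (K : ℝ)) * ∑ s, log (1 / ((K : ℝ) * wCR Q r wz s)))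
            ∂((Measure.pi fun _ : Fin K => ν).prod μ) ∧
      (∫ wz : (Fin K → W) × Z,
          (PtilK ptil r wz / Zs) *
            ((1 / (K : ℝ)) * ∑ s, log (1 / ((K : ℝ) * wCR Q r wz s)))
          ∂((Measure.pi fun _ : Fin K => ν).prod μ))
        ≤ ∫ wz : (Fin 1 → W) × Z,
            (PtilK ptil r wz / Zs) * log ((PtilK ptil r wz / Zs) / QK Q r wz)
            ∂((Measure.pi fun _ : Fin 1 => ν).prod μ)) := by
  have hK0 : (K : ℝ) ≠ 0 := Nat.cast_ne_zero.mpr (by omega)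
  have hZs_ne : Zs ≠ 0 := ne_of_gt hZs_pos
  -- measurability of the one-sample functions
  have hlogm : Measurable fun wz : W × Z => log (ptil wz.2 * r wz / Q wz) :=
    Real.measurable_log.comp (((hptil_meas.comp measurable_snd).mul hr_meas).div hQ_meas)
  have hphiE_meas : Measurable fun wz : W × Z => Q wz * log (ptil wz.2 * r wz / Q wz) :=
    hQ_meas.mul hlogm
  have hfP_meas : Measurable fun wz : W × Z => ptil wz.2 * r wz / Zs :=
    ((hptil_meas.comp measurable_snd).mul hr_meas).div_const Zs
  have hphiU_meas : Measurable fun wz : W × Z =>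
      (ptil wz.2 * r wz / Zs) * log (ptil wz.2 * r wz / Q wz) := hfP_meas.mul hlogm
  -- one-sample integrability via transfer
  have hphiE_int : Integrable (fun wz : W × Z => Q wz * log (ptil wz.2 * r wz / Q wz))
      (ν.prod μ) := by
    refine (transfer1 ν μ _).2.mp ?_
    exact h_int_elbo1.congr (ae_of_all _ fun wz => by simp only [QK_one, PtilK_one])
  have hphiU_int : Integrable (fun wz : W × Z =>
      (ptil wz.2 * r wz / Zs) * log (ptil wz.2 * r wz / Q wz)) (ν.prod μ) := by
    refine (transfer1 ν μ _).2.mp ?_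
    exact h_int_eubo1.congr (ae_of_all _ fun wz => by simp only [QK_one, PtilK_one])
  obtain ⟨hptilr_int, hptilr_integral⟩ := ptilr ν μ ptil r hptil_meas hptil_int
    hr_meas hr_pos hr_norm
  have hfP_int : Integrable (fun wz : W × Z => ptil wz.2 * r wz / Zs) (ν.prod μ) :=
    hptilr_int.div_const Zs
  have hfP_integral : ∫ wz : W × Z, ptil wz.2 * r wz / Zs ∂(ν.prod μ) = 1 := by
    rw [integral_div, hptilr_integral, ← hZs, div_self hZs_ne]
  -- one-sample bounds as integrals over ν.prod μ
  have hELBO1 : ELBO_CR ν μ ptil Q r 1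
      = ∫ wz : W × Z, Q wz * log (ptil wz.2 * r wz / Q wz) ∂(ν.prod μ) := by
    rw [show ELBO_CR ν μ ptil Q r 1 = ∫ wz : (Fin 1 → W) × Z,
        QK Q r wz * log (PtilK ptil r wz / QK Q r wz)
        ∂((Measure.pi fun _ : Fin 1 => ν).prod μ) from rfl,
      integral_congr_ae (ae_of_all _ fun wz : (Fin 1 → W) × Z => by
        simp only [QK_one, PtilK_one] :
        (fun wz : (Fin 1 → W) × Z => QK Q r wz * log (PtilK ptil r wz / QK Q r wz))
          =ᵐ[(Measure.pi fun _ : Fin 1 => ν).prod μ]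
        fun wz => Q (wz.1 0, wz.2) *
          log (ptil wz.2 * r (wz.1 0, wz.2) / Q (wz.1 0, wz.2)))]
    exact (transfer1 ν μ (fun wz => Q wz * log (ptil wz.2 * r wz / Q wz))).1
  have hEUBO1 : EUBO_CR ν μ ptil Q r Zs 1
      = ∫ wz : W × Z, (ptil wz.2 * r wz / Zs) * log (ptil wz.2 * r wz / Q wz)
          ∂(ν.prod μ) := by
    rw [show EUBO_CR ν μ ptil Q r Zs 1 = ∫ wz : (Fin 1 → W) × Z,
        (PtilK ptil r wz / Zs) * log (PtilK ptil r wz / QK Q r wz)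
        ∂((Measure.pi fun _ : Fin 1 => ν).prod μ) from rfl,
      integral_congr_ae (ae_of_all _ fun wz : (Fin 1 → W) × Z => by
        simp only [QK_one, PtilK_one] :
        (fun wz : (Fin 1 → W) × Z =>
            (PtilK ptil r wz / Zs) * log (PtilK ptil r wz / QK Q r wz))
          =ᵐ[(Measure.pi fun _ : Fin 1 => ν).prod μ]
        fun wz => (ptil wz.2 * r (wz.1 0, wz.2) / Zs) *
          log (ptil wz.2 * r (wz.1 0, wz.2) / Q (wz.1 0, wz.2)))]
    exact (transfer1 ν μ (fun wz =>
      (ptil wz.2 * r wz / Zs) * log (ptil wz.2 * r wz / Q wz))).1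
  -- key marginalizations
  have hkeyQ := fun s : Fin K => key ν μ r Q hr_meas hr_pos hr_norm hQ_meas hQ_int s
  have hkeyE := fun s : Fin K => key ν μ r
    (fun wz => Q wz * log (ptil wz.2 * r wz / Q wz)) hr_meas hr_pos hr_norm
    hphiE_meas hphiE_int s
  have hkeyU := fun s : Fin K => key ν μ r
    (fun wz => (ptil wz.2 * r wz / Zs) * log (ptil wz.2 * r wz / Q wz))
    hr_meas hr_pos hr_norm hphiU_meas hphiU_int s
  have hkeyP := fun s : Fin K => key ν μ r
    (fun wz => ptil wz.2 * r wz / Zs) hr_meas hr_pos hr_norm hfP_meas hfP_int s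
  -- facts about QK on the K-space
  have hQKflip : ∀ wz : (Fin K → W) × Z, QK Q r wz
      = (1 / (K : ℝ)) * ∑ s, (∏ k ∈ Finset.univ.erase s, r (wz.1 k, wz.2)) *
          Q (wz.1 s, wz.2) := by
    intro wz
    rw [QK]
    congr 1
    exact Finset.sum_congr rfl fun s _ => mul_comm _ _
  have hQK_int : Integrable (fun wz : (Fin K → W) × Z => QK Q r wz)
      ((Measure.pi fun _ : Fin K => ν).prod μ) := by
    have h := (integrable_finset_sum Finset.univ fun s _ => (hkeyQ s).1).const_mul (1/(K:ℝ))
    exact h.congr (ae_of_all _ fun wz => (hQKflip wz).symm)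
  have hQK_integral : ∫ wz : (Fin K → W) × Z, QK Q r wz
      ∂((Measure.pi fun _ : Fin K => ν).prod μ) = 1 := by
    rw [integral_congr_ae (ae_of_all _ hQKflip), integral_const_mul,
      integral_finset_sum _ fun s _ => (hkeyQ s).1,
      Finset.sum_congr rfl fun s _ => (hkeyQ s).2.trans hQ_norm,
      Finset.sum_const, Finset.card_univ, Fintype.card_fin, nsmul_eq_mul, mul_one,
      one_div, inv_mul_cancel₀ hK0]
  -- facts about PtilK / Zs on the K-space
  have s0 : Fin K := ⟨0, hK⟩
  have hpeq : ∀ wz : (Fin K → W) × Z,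
      (∏ k ∈ Finset.univ.erase s0, r (wz.1 k, wz.2)) *
        (ptil wz.2 * r (wz.1 s0, wz.2) / Zs) = PtilK ptil r wz / Zs := by
    intro wz
    rw [PtilK, ← Finset.mul_prod_erase Finset.univ
      (fun k => r (wz.1 k, wz.2)) (Finset.mem_univ s0)]
    ring
  have hp_int : Integrable (fun wz : (Fin K → W) × Z => PtilK ptil r wz / Zs)
      ((Measure.pi fun _ : Fin K => ν).prod μ) :=
    (hkeyP s0).1.congr (ae_of_all _ hpeq)
  have hp_integral : ∫ wz : (Fin K → W) × Z, PtilK ptil r wz / Zs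
      ∂((Measure.pi fun _ : Fin K => ν).prod μ) = 1 := by
    rw [integral_congr_ae (ae_of_all _ fun wz => (hpeq wz).symm), (hkeyP s0).2,
      hfP_integral]
  -- good events
  have hGoodK := ae_good ν μ ptil Q r hptil_meas hptil_pos hr_meas hr_pos hQ_meas hQ_pos K
  have hGood1 : ∀ᵐ wz ∂(ν.prod μ), 0 < ptil wz.2 ∧ 0 < r wz ∧ 0 < Q wz := by
    filter_upwards [ae_pos_snd ν μ hptil_meas hptil_pos, hr_pos, hQ_pos] with wz h1 h2 h3
    exact ⟨h1, h2, h3⟩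
  -- the sum terms
  have hsumE_int : Integrable (fun wz : (Fin K → W) × Z =>
      (1 / (K : ℝ)) * ∑ s, (∏ k ∈ Finset.univ.erase s, r (wz.1 k, wz.2)) *
        (Q (wz.1 s, wz.2) * log (ptil wz.2 * r (wz.1 s, wz.2) / Q (wz.1 s, wz.2))))
      ((Measure.pi fun _ : Fin K => ν).prod μ) :=
    (integrable_finset_sum Finset.univ fun s _ => (hkeyE s).1).const_mul _
  have hsumE_integral : ∫ wz : (Fin K → W) × Z,
      (1 / (K : ℝ)) * ∑ s, (∏ k ∈ Finset.univ.erase s, r (wz.1 k, wz.2)) *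
        (Q (wz.1 s, wz.2) * log (ptil wz.2 * r (wz.1 s, wz.2) / Q (wz.1 s, wz.2)))
      ∂((Measure.pi fun _ : Fin K => ν).prod μ)
      = ∫ wz : W × Z, Q wz * log (ptil wz.2 * r wz / Q wz) ∂(ν.prod μ) := by
    rw [integral_const_mul, integral_finset_sum _ fun s _ => (hkeyE s).1,
      Finset.sum_congr rfl fun s _ => (hkeyE s).2,
      Finset.sum_const, Finset.card_univ, Fintype.card_fin, nsmul_eq_mul,
      ← mul_assoc, one_div, inv_mul_cancel₀ hK0, one_mul]
  have hsumU_int : Integrable (fun wz : (Fin K → W) × Z =>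
      (1 / (K : ℝ)) * ∑ s, (∏ k ∈ Finset.univ.erase s, r (wz.1 k, wz.2)) *
        ((ptil wz.2 * r (wz.1 s, wz.2) / Zs) *
          log (ptil wz.2 * r (wz.1 s, wz.2) / Q (wz.1 s, wz.2))))
      ((Measure.pi fun _ : Fin K => ν).prod μ) :=
    (integrable_finset_sum Finset.univ fun s _ => (hkeyU s).1).const_mul _
  have hsumU_integral : ∫ wz : (Fin K → W) × Z,
      (1 / (K : ℝ)) * ∑ s, (∏ k ∈ Finset.univ.erase s, r (wz.1 k, wz.2)) *
        ((ptil wz.2 * r (wz.1 s, wz.2) / Zs) *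
          log (ptil wz.2 * r (wz.1 s, wz.2) / Q (wz.1 s, wz.2)))
      ∂((Measure.pi fun _ : Fin K => ν).prod μ)
      = ∫ wz : W × Z, (ptil wz.2 * r wz / Zs) * log (ptil wz.2 * r wz / Q wz)
          ∂(ν.prod μ) := by
    rw [integral_const_mul, integral_finset_sum _ fun s _ => (hkeyU s).1,
      Finset.sum_congr rfl fun s _ => (hkeyU s).2,
      Finset.sum_const, Finset.card_univ, Fintype.card_fin, nsmul_eq_mul,
      ← mul_assoc, one_div, inv_mul_cancel₀ hK0, one_mul]
  -- identity (i)
  have hIdE : ELBO_CR ν μ ptil Q r K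
      = (∫ wz : (Fin K → W) × Z,
          QK Q r wz * ∑ s, wCR Q r wz s * log ((K : ℝ) * wCR Q r wz s)
          ∂((Measure.pi fun _ : Fin K => ν).prod μ)) + ELBO_CR ν μ ptil Q r 1 := by
    have h1 : ELBO_CR ν μ ptil Q r K = ∫ wz : (Fin K → W) × Z,
        (QK Q r wz * ∑ s, wCR Q r wz s * log ((K : ℝ) * wCR Q r wz s)
          + (1 / (K : ℝ)) * ∑ s, (∏ k ∈ Finset.univ.erase s, r (wz.1 k, wz.2)) *
              (Q (wz.1 s, wz.2) * log (ptil wz.2 * r (wz.1 s, wz.2) / Q (wz.1 s, wz.2))))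
        ∂((Measure.pi fun _ : Fin K => ν).prod μ) := by
      refine integral_congr_ae ?_
      filter_upwards [hGoodK] with wz h
      exact pointwise_elbo hK h.1 h.2.1 h.2.2
    rw [h1, integral_add h_int_corr1 hsumE_int, hsumE_integral, hELBO1]
  -- identity (ii)
  have hIdU : EUBO_CR ν μ ptil Q r Zs K
      = EUBO_CR ν μ ptil Q r Zs 1
        - ∫ wz : (Fin K → W) × Z,
            (PtilK ptil r wz / Zs) *
              ((1 / (K : ℝ)) * ∑ s, log (1 / ((K : ℝ) * wCR Q r wz s)))
            ∂((Measure.pi fun _ : Fin K => ν).prod μ) := by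
    have h1 : EUBO_CR ν μ ptil Q r Zs K = ∫ wz : (Fin K → W) × Z,
        ((1 / (K : ℝ)) * ∑ s, (∏ k ∈ Finset.univ.erase s, r (wz.1 k, wz.2)) *
              ((ptil wz.2 * r (wz.1 s, wz.2) / Zs) *
                log (ptil wz.2 * r (wz.1 s, wz.2) / Q (wz.1 s, wz.2)))
          - (PtilK ptil r wz / Zs) *
              ((1 / (K : ℝ)) * ∑ s, log (1 / ((K : ℝ) * wCR Q r wz s))))
        ∂((Measure.pi fun _ : Fin K => ν).prod μ) := by
      refine integral_congr_ae ?_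
      filter_upwards [hGoodK] with wz h
      have := pointwise_eubo hK hZs_pos h.1 h.2.1 h.2.2
      linarith
    rw [h1, integral_sub hsumU_int h_int_corr2, hsumU_integral, hEUBO1]
  -- bounds for correction 1
  have hcorr1_nonneg : 0 ≤ ∫ wz : (Fin K → W) × Z,
      QK Q r wz * ∑ s, wCR Q r wz s * log ((K : ℝ) * wCR Q r wz s)
      ∂((Measure.pi fun _ : Fin K => ν).prod μ) := by
    refine integral_nonneg_of_ae ?_
    filter_upwards [hGoodK] with wz h
    obtain ⟨_, _, hQKpos, _⟩ := basic_facts (ptil := ptil) hK h.1 h.2.1 h.2.2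
    exact mul_nonneg (le_of_lt hQKpos) (B1 hK h.2.1 h.2.2)
  have hcorr1_le : (∫ wz : (Fin K → W) × Z,
      QK Q r wz * ∑ s, wCR Q r wz s * log ((K : ℝ) * wCR Q r wz s)
      ∂((Measure.pi fun _ : Fin K => ν).prod μ)) ≤ log K := by
    have h1 : (fun wz : (Fin K → W) × Z =>
        QK Q r wz * ∑ s, wCR Q r wz s * log ((K : ℝ) * wCR Q r wz s))
        ≤ᵐ[(Measure.pi fun _ : Fin K => ν).prod μ]
        fun wz => QK Q r wz * log K := by
      filter_upwards [hGoodK] with wz h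
      obtain ⟨_, _, hQKpos, _⟩ := basic_facts (ptil := ptil) hK h.1 h.2.1 h.2.2
      exact mul_le_mul_of_nonneg_left (B2 hK h.2.1 h.2.2) (le_of_lt hQKpos)
    have h2 := integral_mono_ae h_int_corr1 (hQK_int.mul_const (log K)) h1
    rwa [integral_mul_const, hQK_integral, one_mul] at h2
  -- bounds for correction 2
  have hcorr2_nonneg : 0 ≤ ∫ wz : (Fin K → W) × Z,
      (PtilK ptil r wz / Zs) *
        ((1 / (K : ℝ)) * ∑ s, log (1 / ((K : ℝ) * wCR Q r wz s)))
      ∂((Measure.pi fun _ : Fin K => ν).prod μ) := by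
    refine integral_nonneg_of_ae ?_
    filter_upwards [hGoodK] with wz h
    obtain ⟨_, _, _, hPpos⟩ := basic_facts (ptil := ptil) (Q := Q) hK h.1 h.2.1 h.2.2
    refine mul_nonneg (div_nonneg (le_of_lt hPpos) (le_of_lt hZs_pos)) ?_
    exact mul_nonneg (by positivity) (B3 hK h.2.1 h.2.2)
  -- the single-sample gap
  have hgap : (∫ wz : (Fin 1 → W) × Z,
      (PtilK ptil r wz / Zs) * log ((PtilK ptil r wz / Zs) / QK Q r wz)
      ∂((Measure.pi fun _ : Fin 1 => ν).prod μ))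
      = EUBO_CR ν μ ptil Q r Zs 1 - log Zs := by
    have e1 : (∫ wz : (Fin 1 → W) × Z,
        (PtilK ptil r wz / Zs) * log ((PtilK ptil r wz / Zs) / QK Q r wz)
        ∂((Measure.pi fun _ : Fin 1 => ν).prod μ))
        = ∫ wz : W × Z, (ptil wz.2 * r wz / Zs) * log ((ptil wz.2 * r wz / Zs) / Q wz)
            ∂(ν.prod μ) := by
      rw [integral_congr_ae (ae_of_all _ fun wz : (Fin 1 → W) × Z => by
        simp only [QK_one, PtilK_one] :
        (fun wz : (Fin 1 → W) × Z =>
            (PtilK ptil r wz / Zs) * log ((PtilK ptil r wz / Zs) / QK Q r wz))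
          =ᵐ[(Measure.pi fun _ : Fin 1 => ν).prod μ]
        fun wz => (ptil wz.2 * r (wz.1 0, wz.2) / Zs) *
          log ((ptil wz.2 * r (wz.1 0, wz.2) / Zs) / Q (wz.1 0, wz.2)))]
      exact (transfer1 ν μ (fun wz =>
        (ptil wz.2 * r wz / Zs) * log ((ptil wz.2 * r wz / Zs) / Q wz))).1
    have e2 : (fun wz : W × Z =>
        (ptil wz.2 * r wz / Zs) * log ((ptil wz.2 * r wz / Zs) / Q wz))
        =ᵐ[ν.prod μ] fun wz =>
          (ptil wz.2 * r wz / Zs) * log (ptil wz.2 * r wz / Q wz)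
            - (ptil wz.2 * r wz / Zs) * log Zs := by
      filter_upwards [hGood1] with wz h
      exact log_div_Zs (mul_pos h.1 h.2.1) h.2.2 hZs_pos
    rw [e1, integral_congr_ae e2,
      integral_sub hphiU_int (hfP_int.mul_const (log Zs)),
      integral_mul_const, hfP_integral, one_mul, hEUBO1]
  -- EUBO_CR K is at least log Zs
  have hlower : log Zs ≤ EUBO_CR ν μ ptil Q r Zs K := by
    have hle : (fun wz : (Fin K → W) × Z =>
        (PtilK ptil r wz / Zs - QK Q r wz) + (PtilK ptil r wz / Zs) * log Zs)
        ≤ᵐ[(Measure.pi fun _ : Fin K => ν).prod μ]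
        fun wz => (PtilK ptil r wz / Zs) * log (PtilK ptil r wz / QK Q r wz) := by
      filter_upwards [hGoodK] with wz h
      obtain ⟨_, _, hQKpos, hPpos⟩ := basic_facts (ptil := ptil) hK h.1 h.2.1 h.2.2
      have hp' : 0 < PtilK ptil r wz / Zs := div_pos hPpos hZs_pos
      have hx : PtilK ptil r wz / QK Q r wz
          = ((PtilK ptil r wz / Zs) / QK Q r wz) * Zs := by
        field_simp
      rw [hx, log_mul (ne_of_gt (div_pos hp' hQKpos)) hZs_ne, mul_add]
      linarith [kl_term hp' hQKpos]
    have hsub : Integrable (fun wz : (Fin K → W) × Z =>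
        PtilK ptil r wz / Zs - QK Q r wz)
        ((Measure.pi fun _ : Fin K => ν).prod μ) := hp_int.sub hQK_int
    have hmul : Integrable (fun wz : (Fin K → W) × Z =>
        (PtilK ptil r wz / Zs) * log Zs)
        ((Measure.pi fun _ : Fin K => ν).prod μ) := hp_int.mul_const _
    have hHint : Integrable (fun wz : (Fin K → W) × Z =>
        (PtilK ptil r wz / Zs - QK Q r wz) + (PtilK ptil r wz / Zs) * log Zs)
        ((Measure.pi fun _ : Fin K => ν).prod μ) := hsub.add hmul
    have h2 := integral_mono_ae hHint h_int_euboK hle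
    rw [integral_add hsub hmul,
      integral_sub hp_int hQK_int, integral_mul_const, hp_integral, hQK_integral] at h2
    have hdef : EUBO_CR ν μ ptil Q r Zs K = ∫ wz : (Fin K → W) × Z,
        (PtilK ptil r wz / Zs) * log (PtilK ptil r wz / QK Q r wz)
        ∂((Measure.pi fun _ : Fin K => ν).prod μ) := rfl
    rw [hdef]
    linarith
  refine ⟨⟨by linarith [hIdE], hcorr1_nonneg, hcorr1_le⟩,
    hIdU, hcorr2_nonneg, ?_⟩
  rw [hgap]
  linarith [hIdU, hlower]

end Stmt11
end
end

section
/- (The optimal IBAL critic attains the mutual information.) Let c : X → ℝ be measurable and suppose the critic has the form T(x,z) = log(p(x,z)/q(z|x)) + c(x). Then 𝒵_T(x) = p_X(x)·e^{c(x)} for every x, and IBAL(q,T) = I(x;z). -/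
open MeasureTheory Real

noncomputable section

namespace Stmt12

variable {X Z : Type*} [MeasurableSpace X] [MeasurableSpace Z]

/-- Marginal density `p_X(x) = ∫ p(x,z) dμ_Z(z)`. -/
def pX (μZ : Measure Z) (p : X × Z → ℝ) (x : X) : ℝ := ∫ z, p (x, z) ∂μZ

/-- Marginal density `p_Z(z) = ∫ p(x,z) dμ_X(x)`. -/
def pZ (μX : Measure X) (p : X × Z → ℝ) (z : Z) : ℝ := ∫ x, p (x, z) ∂μX

/-- Mutual information `I(x;z)`. -/
def MI (μX : Measure X) (μZ : Measure Z) (p : X × Z → ℝ) : ℝ :=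
  ∫ w, p w * log (p w / (pX μZ p w.1 * pZ μX p w.2)) ∂(μX.prod μZ)

/-- Barber–Agakov lower bound `I_BA_L(q) = ∫∫ p(x,z) log(q(z|x)/p_Z(z))`. -/
def IBAL (μX : Measure X) (μZ : Measure Z) (p q : X × Z → ℝ) : ℝ :=
  ∫ w, p w * log (q w / pZ μX p w.2) ∂(μX.prod μZ)

/-- Partition function `𝒵_T(x) = ∫ q(z|x) e^{T(x,z)} dμ_Z(z)`. -/
def ZT (μZ : Measure Z) (q T : X × Z → ℝ) (x : X) : ℝ :=
  ∫ z, q (x, z) * exp (T (x, z)) ∂μZ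

/-- Implicit Barber–Agakov lower bound
`IBAL(q,T) = I_BA_L(q) + ∫∫ p T − ∫ p_X log 𝒵_T`. -/
def IBALT (μX : Measure X) (μZ : Measure Z) (p q T : X × Z → ℝ) : ℝ :=
  IBAL μX μZ p q + (∫ w, p w * T w ∂(μX.prod μZ))
    - ∫ x, pX μZ p x * log (ZT μZ q T x) ∂μX

/-- The optimal IBAL critic attains the mutual information. -/
theorem optimal_ibal_critic
    (μX : Measure X) (μZ : Measure Z) [SigmaFinite μX] [SigmaFinite μZ]
    (p q T : X × Z → ℝ)
    (hp_meas : Measurable p)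
    (hp_pos : ∀ x, ∀ᵐ z ∂μZ, 0 < p (x, z))
    (hp_int : Integrable p (μX.prod μZ))
    (hp_norm : ∫ w, p w ∂(μX.prod μZ) = 1)
    (hq_meas : Measurable q)
    (hq_pos : ∀ x, ∀ᵐ z ∂μZ, 0 < q (x, z))
    (hq_norm : ∀ x, ∫ z, q (x, z) ∂μZ = 1)
    (c : X → ℝ) (hc_meas : Measurable c)
    (hT : ∀ x z, T (x, z) = log (p (x, z) / q (x, z)) + c x)
    (hZT_int : ∀ x, Integrable (fun z => q (x, z) * exp (T (x, z))) μZ)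
    (hZT_pos : ∀ᵐ x ∂μX, 0 < ZT μZ q T x)
    (hpX_int : ∀ x, Integrable (fun z => p (x, z)) μZ)
    (h_int_ba : Integrable (fun w => p w * log (q w / pZ μX p w.2)) (μX.prod μZ))
    (h_int_pT : Integrable (fun w => p w * T w) (μX.prod μZ))
    (h_int_pXlogZ : Integrable (fun x => pX μZ p x * log (ZT μZ q T x)) μX)
    (h_int_mi : Integrable (fun w => p w * log (p w / (pX μZ p w.1 * pZ μX p w.2)))
      (μX.prod μZ)) :
    (∀ x, ZT μZ q T x = pX μZ p x * exp (c x)) ∧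
    IBALT μX μZ p q T = MI μX μZ p := by
  -- Part 1: the partition function
  have hZT_eq : ∀ x, ZT μZ q T x = pX μZ p x * exp (c x) := by
    intro x
    have : (fun z => q (x, z) * exp (T (x, z))) =ᵐ[μZ]
        (fun z => p (x, z) * exp (c x)) := by
      filter_upwards [hp_pos x, hq_pos x] with z hpz hqz
      rw [hT, exp_add, exp_log (div_pos hpz hqz)]
      field_simp
    rw [ZT, integral_congr_ae this, integral_mul_const, pX]
  refine ⟨hZT_eq, ?_⟩
  -- μX is nonzero
  have hμX_ne : μX ≠ 0 := by
    intro h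
    rw [h] at hp_norm
    simp [Measure.zero_prod] at hp_norm
  -- positivity of p and q a.e. on the product
  have hp_pos_prod : ∀ᵐ w ∂(μX.prod μZ), 0 < p w := by
    rw [Measure.ae_prod_iff_ae_ae (measurableSet_lt measurable_const hp_meas)]
    exact Filter.Eventually.of_forall hp_pos
  have hq_pos_prod : ∀ᵐ w ∂(μX.prod μZ), 0 < q w := by
    rw [Measure.ae_prod_iff_ae_ae (measurableSet_lt measurable_const hq_meas)]
    exact Filter.Eventually.of_forall hq_pos
  -- positivity of p_Z a.e.
  have hp_pos_swap : ∀ᵐ z ∂μZ, ∀ᵐ x ∂μX, 0 < p (x, z) := by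
    have h1 : ∀ᵐ v ∂(μZ.prod μX), 0 < p (v.2, v.1) :=
      (Measure.measurePreserving_swap).quasiMeasurePreserving.ae hp_pos_prod
    exact Measure.ae_ae_of_ae_prod h1
  have hpZ_int_ae : ∀ᵐ z ∂μZ, Integrable (fun x => p (x, z)) μX := by
    have := hp_int.swap.prod_right_ae
    filter_upwards [this] with z hz using hz
  have hpZ_pos : ∀ᵐ z ∂μZ, 0 < pZ μX p z := by
    filter_upwards [hpZ_int_ae, hp_pos_swap] with z hint hpos
    rw [pZ, integral_pos_iff_support_of_nonneg_ae (hpos.mono fun x hx => hx.le) hint]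
    rw [pos_iff_ne_zero]
    intro hsupp
    have hsub : {x | 0 < p (x, z)} ⊆ Function.support fun x => p (x, z) :=
      fun x hx => ne_of_gt hx
    have h1 : μX {x | 0 < p (x, z)} = 0 := measure_mono_null hsub hsupp
    have h2 : μX {x | ¬ 0 < p (x, z)} = 0 := hpos
    have h2' : μX ({x | 0 < p (x, z)}ᶜ) = 0 := h2
    have : μX Set.univ = 0 := by
      have hle := measure_union_le (μ := μX) {x | 0 < p (x, z)} ({x | 0 < p (x, z)}ᶜ)
      rw [Set.union_compl_self, h1, h2'] at hle
      simpa using hle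
    exact hμX_ne (Measure.measure_univ_eq_zero.mp this)
  -- positivity of p_X a.e.
  have hpX_pos : ∀ᵐ x ∂μX, 0 < pX μZ p x := by
    filter_upwards [hZT_pos] with x hx
    rw [hZT_eq x] at hx
    nlinarith [exp_pos (c x)]
  -- lift to the product
  have hpX_pos_prod : ∀ᵐ w ∂(μX.prod μZ), 0 < pX μZ p w.1 :=
    Measure.quasiMeasurePreserving_fst.ae hpX_pos
  have hpZ_pos_prod : ∀ᵐ w ∂(μX.prod μZ), 0 < pZ μX p w.2 :=
    Measure.quasiMeasurePreserving_snd.ae hpZ_pos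
  -- key pointwise identity
  have key : ∀ᵐ w ∂(μX.prod μZ),
      p w * log (q w / pZ μX p w.2) + p w * T w
        - p w * log (p w / (pX μZ p w.1 * pZ μX p w.2))
      = p w * log (ZT μZ q T w.1) := by
    filter_upwards [hp_pos_prod, hq_pos_prod, hpX_pos_prod, hpZ_pos_prod]
      with w h1 h2 h3 h4
    obtain ⟨x, z⟩ := w
    simp only at h1 h2 h3 h4 ⊢
    rw [hZT_eq, hT, log_mul (ne_of_gt h3) (exp_ne_zero _), log_exp,
      log_div (ne_of_gt h2) (ne_of_gt h4),
      log_div (ne_of_gt h1) (ne_of_gt (mul_pos h3 h4)),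
      log_mul (ne_of_gt h3) (ne_of_gt h4),
      log_div (ne_of_gt h1) (ne_of_gt h2)]
    ring
  -- integrability of p * log ZT on the product
  have h_int_plogZ : Integrable (fun w => p w * log (ZT μZ q T w.1)) (μX.prod μZ) :=
    ((h_int_ba.add h_int_pT).sub h_int_mi).congr key
  -- Fubini
  have hfub : ∫ w, p w * log (ZT μZ q T w.1) ∂(μX.prod μZ)
      = ∫ x, pX μZ p x * log (ZT μZ q T x) ∂μX := by
    rw [MeasureTheory.integral_prod _ h_int_plogZ]
    refine integral_congr_ae (Filter.Eventually.of_forall fun x => ?_)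
    simp only
    rw [integral_mul_const, pX, mul_comm]
  -- conclude
  have hMI : MI μX μZ p
      = IBAL μX μZ p q + (∫ w, p w * T w ∂(μX.prod μZ))
        - ∫ x, pX μZ p x * log (ZT μZ q T x) ∂μX := by
    rw [MI, IBAL, ← hfub,
      ← integral_add h_int_ba h_int_pT,
      ← integral_sub (show Integrable
          (fun w => p w * log (q w / pZ μX p w.2) + p w * T w) (μX.prod μZ) from
          h_int_ba.add h_int_pT) h_int_plogZ]
    refine integral_congr_ae (key.mono fun w hw => ?_)
    simp only [Pi.add_apply, Pi.sub_apply] at hw ⊢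
    linarith
  rw [IBALT, hMI]

end Stmt12
end
end

section
/- (IBAL is a lower bound on mutual information, squeezed between the Barber–Agakov bound and the mutual information.) (i) I(x;z) = I_BA_L(q) + ∫ p_X(x)·D_KL(p(·|x) ‖ q(·|x)) dμ_X, where D_KL(p(·|x) ‖ q(·|x)) := ∫ p(z|x)·log(p(z|x)/q(z|x)) dμ_Z(z). (ii) For every measurable critic T : X × Z → ℝ (with 𝒵_T(x) ∈ (0,∞) a.e.), the contrastive term satisfies ∫∫ p(x,z)·T(x,z) − ∫ p_X(x)·log 𝒵_T(x) dμ_X ≤ ∫ p_X(x)·D_KL(p(·|x) ‖ q(·|x)) dμ_X, hence IBAL(q,T) ≤ I(x;z). (iii) If T is constant then IBAL(q,T) = I_BA_L(q). Consequently the supremum of IBAL(q,T) over any family of critics containing a constant critic lies in [I_BA_L(q), I(x;z)]. -/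
open MeasureTheory Real

noncomputable section

namespace Stmt13

variable {X Z : Type*} [MeasurableSpace X] [MeasurableSpace Z]

/-- Marginal density `p_X(x) = ∫ p(x,z) dμ_Z(z)`. -/
def pX (μZ : Measure Z) (p : X × Z → ℝ) (x : X) : ℝ := ∫ z, p (x, z) ∂μZ

/-- Marginal density `p_Z(z) = ∫ p(x,z) dμ_X(x)`. -/
def pZ (μX : Measure X) (p : X × Z → ℝ) (z : Z) : ℝ := ∫ x, p (x, z) ∂μX

/-- Mutual information `I(x;z)`. -/
def MI (μX : Measure X) (μZ : Measure Z) (p : X × Z → ℝ) : ℝ :=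
  ∫ w, p w * log (p w / (pX μZ p w.1 * pZ μX p w.2)) ∂(μX.prod μZ)

/-- Barber–Agakov lower bound `I_BA_L(q) = ∫∫ p(x,z) log(q(z|x)/p_Z(z))`. -/
def IBAL (μX : Measure X) (μZ : Measure Z) (p q : X × Z → ℝ) : ℝ :=
  ∫ w, p w * log (q w / pZ μX p w.2) ∂(μX.prod μZ)

/-- Partition function `𝒵_T(x) = ∫ q(z|x) e^{T(x,z)} dμ_Z(z)`. -/
def ZT (μZ : Measure Z) (q T : X × Z → ℝ) (x : X) : ℝ :=
  ∫ z, q (x, z) * exp (T (x, z)) ∂μZ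

/-- Implicit Barber–Agakov lower bound
`IBAL(q,T) = I_BA_L(q) + ∫∫ p T − ∫ p_X log 𝒵_T`. -/
def IBALT (μX : Measure X) (μZ : Measure Z) (p q T : X × Z → ℝ) : ℝ :=
  IBAL μX μZ p q + (∫ w, p w * T w ∂(μX.prod μZ))
    - ∫ x, pX μZ p x * log (ZT μZ q T x) ∂μX

/-- Conditional KL divergence `D_KL(p(·|x) ‖ q(·|x))`. -/
def DKLcond (μZ : Measure Z) (p q : X × Z → ℝ) (x : X) : ℝ :=
  ∫ z, (p (x, z) / pX μZ p x) * log ((p (x, z) / pX μZ p x) / q (x, z)) ∂μZ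

/-- Gibbs inequality: if `a, b ≥ 0` have equal integrals, then `∫ a log(a/b) ≥ 0`. -/
lemma gibbs {Z : Type*} [MeasurableSpace Z] (ν : Measure Z) (a b : Z → ℝ)
    (ha : Integrable a ν) (hb : Integrable b ν)
    (ha0 : ∀ᵐ z ∂ν, 0 ≤ a z) (hb0 : ∀ᵐ z ∂ν, 0 < b z)
    (heq : ∫ z, a z ∂ν = ∫ z, b z ∂ν)
    (hf : Integrable (fun z => a z * log (a z / b z)) ν) :
    0 ≤ ∫ z, a z * log (a z / b z) ∂ν := by
  have key : ∀ᵐ z ∂ν, a z - b z ≤ a z * log (a z / b z) := by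
    filter_upwards [ha0, hb0] with z h0 h1
    rcases eq_or_lt_of_le h0 with h | h
    · simp [← h]; linarith
    · have hlog := Real.log_le_sub_one_of_pos (show 0 < b z / a z from div_pos h1 h)
      have hneg : Real.log (b z / a z) = - Real.log (a z / b z) := by
        rw [← Real.log_inv]
        congr 1
        field_simp
      rw [hneg] at hlog
      have h2 : a z * (- log (a z / b z)) ≤ a z * (b z / a z - 1) :=
        mul_le_mul_of_nonneg_left hlog h0
      have h3 : a z * (b z / a z - 1) = b z - a z := by field_simp
      nlinarith
  have h4 : ∫ z, (a z - b z) ∂ν ≤ ∫ z, a z * log (a z / b z) ∂ν :=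
    integral_mono_ae (ha.sub hb) hf key
  rwa [integral_sub ha hb, heq, sub_self] at h4

/-- A.e.-positive integrable functions over a nonzero measure have positive integral. -/
lemma integral_pos_of {α : Type*} [MeasurableSpace α] {ν : Measure α} (hν : ν ≠ 0)
    {f : α → ℝ} (hf : Integrable f ν) (hpos : ∀ᵐ z ∂ν, 0 < f z) :
    0 < ∫ z, f z ∂ν := by
  rw [integral_pos_iff_support_of_nonneg_ae (hpos.mono fun z hz => hz.le) hf]
  by_contra h
  push_neg at h
  have h0 : ν (Function.support f) = 0 := le_antisymm h zero_le
  have hz : ∀ᵐ z ∂ν, f z = 0 := by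
    rw [ae_iff]
    simpa [Function.support] using h0
  have hfalse : ∀ᵐ z ∂ν, False := by
    filter_upwards [hpos, hz] with z h1 h2
    exact absurd h2 h1.ne'
  have huniv : ν Set.univ = 0 := by simpa [ae_iff] using hfalse
  exact hν (Measure.measure_univ_eq_zero.mp huniv)

/-- Donsker–Varadhan-type pointwise bound at a fixed `x`. -/
lemma step2 {Z : Type*} [MeasurableSpace Z] (μZ : Measure Z) (pz qz tz : Z → ℝ) (c : ℝ)
    (hc : 0 < c)
    (hpz_pos : ∀ᵐ z ∂μZ, 0 < pz z) (hqz_pos : ∀ᵐ z ∂μZ, 0 < qz z)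
    (hpz_int : Integrable pz μZ) (hpc : ∫ z, pz z ∂μZ = c)
    (hqe_int : Integrable (fun z => qz z * exp (tz z)) μZ)
    (hZ : 0 < ∫ z, qz z * exp (tz z) ∂μZ)
    (hpt_int : Integrable (fun z => pz z * tz z) μZ)
    (hkl_int : Integrable (fun z => (pz z / c) * log ((pz z / c) / qz z)) μZ) :
    (∫ z, pz z * tz z ∂μZ) - c * log (∫ z, qz z * exp (tz z) ∂μZ)
      ≤ c * ∫ z, (pz z / c) * log ((pz z / c) / qz z) ∂μZ := by
  set Zc := ∫ z, qz z * exp (tz z) ∂μZ with hZc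
  set a : Z → ℝ := fun z => pz z / c with haa
  set b : Z → ℝ := fun z => qz z * exp (tz z) / Zc with hbb
  have ha_int : Integrable a μZ := hpz_int.div_const c
  have hb_int : Integrable b μZ := hqe_int.div_const Zc
  have hIa : ∫ z, a z ∂μZ = 1 := by
    simp only [haa, integral_div, hpc]
    exact div_self hc.ne'
  have hIb : ∫ z, b z ∂μZ = 1 := by
    simp only [hbb, integral_div, ← hZc]
    exact div_self hZ.ne'
  have hfg : (fun z => a z * log (a z / b z)) =ᵐ[μZ]
      (fun z => a z * log (a z / qz z) - (pz z * tz z) / c + a z * log Zc) := by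
    filter_upwards [hpz_pos, hqz_pos] with z hp hq
    have hap : 0 < a z := div_pos hp hc
    have hbp : 0 < b z := div_pos (mul_pos hq (exp_pos _)) hZ
    have h1 : log (a z / b z) = log (a z / qz z) - tz z + log Zc := by
      rw [Real.log_div hap.ne' hbp.ne', Real.log_div hap.ne' hq.ne',
        Real.log_div (mul_pos hq (exp_pos _)).ne' hZ.ne',
        Real.log_mul hq.ne' (exp_pos _).ne', Real.log_exp]
      ring
    rw [h1]
    simp only [haa]
    ring
  have hf_int : Integrable (fun z => a z * log (a z / b z)) μZ :=
    ((hkl_int.sub (hpt_int.div_const c)).add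
      ((hpz_int.div_const c).mul_const (log Zc))).congr hfg.symm
  have hgibbs := gibbs μZ a b ha_int hb_int
    (hpz_pos.mono fun z hz => (div_pos hz hc).le)
    (hqz_pos.mono fun z hz => div_pos (mul_pos hz (exp_pos _)) hZ)
    (by rw [hIa, hIb]) hf_int
  have hval : ∫ z, a z * log (a z / b z) ∂μZ =
      (∫ z, (pz z / c) * log ((pz z / c) / qz z) ∂μZ)
        - (∫ z, pz z * tz z ∂μZ) / c + log Zc := by
    have h2 : ∫ z, (a z * log (a z / qz z) - pz z * tz z / c + a z * log Zc) ∂μZ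
        = (∫ z, (a z * log (a z / qz z) - pz z * tz z / c) ∂μZ)
          + ∫ z, a z * log Zc ∂μZ :=
      integral_add (hkl_int.sub (hpt_int.div_const c))
        ((hpz_int.div_const c).mul_const (log Zc))
    have h3 : ∫ z, (a z * log (a z / qz z) - pz z * tz z / c) ∂μZ
        = (∫ z, a z * log (a z / qz z) ∂μZ) - ∫ z, pz z * tz z / c ∂μZ :=
      integral_sub hkl_int (hpt_int.div_const c)
    have h4 : ∫ z, a z * log Zc ∂μZ = 1 * log Zc := by
      rw [integral_mul_const, hIa]
    rw [integral_congr_ae hfg, h2, h3, h4, integral_div, one_mul]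
  rw [hval] at hgibbs
  have hcc : (∫ z, pz z * tz z ∂μZ) / c * c = ∫ z, pz z * tz z ∂μZ :=
    div_mul_cancel₀ _ hc.ne'
  nlinarith [mul_le_mul_of_nonneg_left hgibbs hc.le]

/-- IBAL is a lower bound on mutual information, squeezed between the
Barber–Agakov bound and the mutual information. -/
theorem ibal_squeeze
    (μX : Measure X) (μZ : Measure Z) [SigmaFinite μX] [SigmaFinite μZ]
    (p q : X × Z → ℝ)
    (hp_meas : Measurable p)
    (hp_pos : ∀ᵐ w ∂(μX.prod μZ), 0 < p w)
    (hp_int : Integrable p (μX.prod μZ))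
    (hp_norm : ∫ w, p w ∂(μX.prod μZ) = 1)
    (hq_meas : Measurable q)
    (hq_pos : ∀ᵐ w ∂(μX.prod μZ), 0 < q w)
    (hq_norm : ∀ x, ∫ z, q (x, z) ∂μZ = 1)
    (h_int_mi : Integrable (fun w => p w * log (p w / (pX μZ p w.1 * pZ μX p w.2)))
      (μX.prod μZ))
    (h_int_ba : Integrable (fun w => p w * log (q w / pZ μX p w.2)) (μX.prod μZ))
    (h_int_klcond_inner : ∀ x, Integrable
      (fun z => (p (x, z) / pX μZ p x) * log ((p (x, z) / pX μZ p x) / q (x, z))) μZ)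
    (h_int_klcond_outer : Integrable (fun x => pX μZ p x * DKLcond μZ p q x) μX) :
    MI μX μZ p = IBAL μX μZ p q + ∫ x, pX μZ p x * DKLcond μZ p q x ∂μX ∧
    (∀ T : X × Z → ℝ, Measurable T →
      (∀ᵐ x ∂μX, 0 < ZT μZ q T x) →
      (∀ x, Integrable (fun z => q (x, z) * exp (T (x, z))) μZ) →
      Integrable (fun w => p w * T w) (μX.prod μZ) →
      Integrable (fun x => pX μZ p x * log (ZT μZ q T x)) μX →
      ((∫ w, p w * T w ∂(μX.prod μZ)) - (∫ x, pX μZ p x * log (ZT μZ q T x) ∂μX)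
          ≤ ∫ x, pX μZ p x * DKLcond μZ p q x ∂μX ∧
        IBALT μX μZ p q T ≤ MI μX μZ p)) ∧
    (∀ c : ℝ, IBALT μX μZ p q (fun _ => c) = IBAL μX μZ p q) ∧
    (∀ S : Set (X × Z → ℝ),
      (∀ T ∈ S, Measurable T ∧
        (∀ᵐ x ∂μX, 0 < ZT μZ q T x) ∧
        (∀ x, Integrable (fun z => q (x, z) * exp (T (x, z))) μZ) ∧
        Integrable (fun w => p w * T w) (μX.prod μZ) ∧
        Integrable (fun x => pX μZ p x * log (ZT μZ q T x)) μX) →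
      (∃ c : ℝ, (fun _ => c) ∈ S) →
      sSup ((fun T => IBALT μX μZ p q T) '' S)
        ∈ Set.Icc (IBAL μX μZ p q) (MI μX μZ p)) := by
  -- basic nondegeneracy
  have hprod_ne : (μX.prod μZ) ≠ 0 := by
    intro h
    rw [h] at hp_norm
    simp at hp_norm
  have hμX_ne : μX ≠ 0 := by
    intro h
    exact hprod_ne (by rw [h]; exact Measure.zero_prod μZ)
  have hμZ_ne : μZ ≠ 0 := by
    intro h
    exact hprod_ne (by rw [h]; exact Measure.prod_zero μX)
  -- sliced a.e. facts
  have hpos_ae_x : ∀ᵐ x ∂μX, ∀ᵐ z ∂μZ, 0 < p (x, z) := Measure.ae_ae_of_ae_prod hp_pos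
  have hq_ae_x : ∀ᵐ x ∂μX, ∀ᵐ z ∂μZ, 0 < q (x, z) := Measure.ae_ae_of_ae_prod hq_pos
  have hint_ae_x : ∀ᵐ x ∂μX, Integrable (fun z => p (x, z)) μZ := hp_int.prod_right_ae
  have hpX_pos : ∀ᵐ x ∂μX, 0 < pX μZ p x := by
    filter_upwards [hint_ae_x, hpos_ae_x] with x h1 h2
    exact integral_pos_of hμZ_ne h1 h2
  have hpos_ae_z : ∀ᵐ z ∂μZ, ∀ᵐ x ∂μX, 0 < p (x, z) := by
    have hswap : ∀ᵐ w ∂(μZ.prod μX), 0 < p (w.2, w.1) :=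
      (Measure.measurePreserving_swap (μ := μZ) (ν := μX)).quasiMeasurePreserving.ae hp_pos
    exact Measure.ae_ae_of_ae_prod hswap
  have hpZ_pos : ∀ᵐ z ∂μZ, 0 < pZ μX p z := by
    filter_upwards [hp_int.prod_left_ae, hpos_ae_z] with z h1 h2
    exact integral_pos_of hμX_ne h1 h2
  have hpX_prod : ∀ᵐ w ∂(μX.prod μZ), 0 < pX μZ p w.1 :=
    Measure.quasiMeasurePreserving_fst.ae hpX_pos
  have hpZ_prod : ∀ᵐ w ∂(μX.prod μZ), 0 < pZ μX p w.2 :=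
    Measure.quasiMeasurePreserving_snd.ae hpZ_pos
  -- Part (i)
  have key1 : ∀ᵐ w ∂(μX.prod μZ),
      p w * log (p w / (pX μZ p w.1 * pZ μX p w.2)) - p w * log (q w / pZ μX p w.2)
        = p w * log (p w / (pX μZ p w.1 * q w)) := by
    filter_upwards [hp_pos, hq_pos, hpX_prod, hpZ_prod] with w h1 h2 h3 h4
    rw [Real.log_div h1.ne' (mul_pos h3 h4).ne', Real.log_div h2.ne' h4.ne',
      Real.log_div h1.ne' (mul_pos h3 h2).ne', Real.log_mul h3.ne' h4.ne',
      Real.log_mul h3.ne' h2.ne']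
    ring
  have hG_int : Integrable (fun w => p w * log (p w / (pX μZ p w.1 * q w))) (μX.prod μZ) :=
    (h_int_mi.sub h_int_ba).congr key1
  have hG_val : ∫ w, p w * log (p w / (pX μZ p w.1 * q w)) ∂(μX.prod μZ)
      = MI μX μZ p - IBAL μX μZ p q := by
    rw [← integral_congr_ae key1, integral_sub h_int_mi h_int_ba]
    rfl
  have hG_fub : ∫ w, p w * log (p w / (pX μZ p w.1 * q w)) ∂(μX.prod μZ)
      = ∫ x, ∫ z, p (x, z) * log (p (x, z) / (pX μZ p x * q (x, z))) ∂μZ ∂μX :=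
    integral_prod _ hG_int
  have hinner : ∀ᵐ x ∂μX, (∫ z, p (x, z) * log (p (x, z) / (pX μZ p x * q (x, z))) ∂μZ)
      = pX μZ p x * DKLcond μZ p q x := by
    filter_upwards [hpX_pos, hpos_ae_x, hq_ae_x] with x hx h1 h2
    rw [DKLcond, ← integral_const_mul]
    refine integral_congr_ae ?_
    filter_upwards [h1, h2] with z hz1 hz2
    rw [div_div]
    field_simp
  have part1 : MI μX μZ p = IBAL μX μZ p q + ∫ x, pX μZ p x * DKLcond μZ p q x ∂μX := by
    have h := hG_fub
    rw [hG_val, integral_congr_ae hinner] at h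
    linarith
  -- Part (ii)
  have part2 : ∀ T : X × Z → ℝ, Measurable T →
      (∀ᵐ x ∂μX, 0 < ZT μZ q T x) →
      (∀ x, Integrable (fun z => q (x, z) * exp (T (x, z))) μZ) →
      Integrable (fun w => p w * T w) (μX.prod μZ) →
      Integrable (fun x => pX μZ p x * log (ZT μZ q T x)) μX →
      ((∫ w, p w * T w ∂(μX.prod μZ)) - (∫ x, pX μZ p x * log (ZT μZ q T x) ∂μX)
          ≤ ∫ x, pX μZ p x * DKLcond μZ p q x ∂μX ∧
        IBALT μX μZ p q T ≤ MI μX μZ p) := by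
    intro T hT hZTpos hqe_int hpT_int hlogZT_int
    have hpT_ae : ∀ᵐ x ∂μX, Integrable (fun z => p (x, z) * T (x, z)) μZ :=
      hpT_int.prod_right_ae
    have hpoint : ∀ᵐ x ∂μX,
        (∫ z, p (x, z) * T (x, z) ∂μZ) - pX μZ p x * log (ZT μZ q T x)
          ≤ pX μZ p x * DKLcond μZ p q x := by
      filter_upwards [hpX_pos, hpos_ae_x, hq_ae_x, hint_ae_x, hZTpos, hpT_ae]
        with x h1 h2 h3 h4 h5 h6
      exact step2 μZ (fun z => p (x, z)) (fun z => q (x, z)) (fun z => T (x, z))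
        (pX μZ p x) h1 h2 h3 h4 rfl (hqe_int x) h5 h6 (h_int_klcond_inner x)
    have hF_int : Integrable
        (fun x => (∫ z, p (x, z) * T (x, z) ∂μZ) - pX μZ p x * log (ZT μZ q T x)) μX :=
      hpT_int.integral_prod_left.sub hlogZT_int
    have hmono := integral_mono_ae hF_int h_int_klcond_outer hpoint
    rw [integral_sub hpT_int.integral_prod_left hlogZT_int,
      ← integral_prod _ hpT_int] at hmono
    refine ⟨hmono, ?_⟩
    rw [IBALT, part1]
    linarith
  -- Part (iii)
  have part3 : ∀ c : ℝ, IBALT μX μZ p q (fun _ => c) = IBAL μX μZ p q := by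
    intro c
    have hZc : ∀ x, ZT μZ q (fun _ => c) x = exp c := by
      intro x
      rw [ZT, integral_mul_const, hq_norm x, one_mul]
    have h1 : ∫ w, p w * c ∂(μX.prod μZ) = 1 * c := by rw [integral_mul_const, hp_norm]
    have hpXint1 : ∫ x, pX μZ p x ∂μX = 1 := by
      rw [← hp_norm, integral_prod _ hp_int]
      rfl
    have h2 : ∫ x, pX μZ p x * log (ZT μZ q (fun _ => c) x) ∂μX = 1 * c := by
      simp only [hZc, Real.log_exp]
      rw [integral_mul_const, hpXint1]
    simp only [IBALT]
    rw [h1, h2]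
    ring
  refine ⟨part1, part2, part3, ?_⟩
  -- Part (iv)
  intro S hS hcex
  obtain ⟨c, hc⟩ := hcex
  have hub : ∀ y ∈ (fun T => IBALT μX μZ p q T) '' S, y ≤ MI μX μZ p := by
    rintro y ⟨T, hTS, rfl⟩
    obtain ⟨m, zpos, qe, pt, lz⟩ := hS T hTS
    exact (part2 T m zpos qe pt lz).2
  have hmem : IBAL μX μZ p q ∈ (fun T => IBALT μX μZ p q T) '' S :=
    ⟨fun _ => c, hc, part3 c⟩
  exact ⟨le_csSup ⟨MI μX μZ p, hub⟩ hmem, csSup_le ⟨_, hmem⟩ hub⟩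

end Stmt13
end
end
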